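/- arXiv:1612.01005 — 11 statements merged into one kernel-verified Lean document; each statement's English description precedes it below -/
import Mathlib

section
/- Let I be a type. Let P_I be the set of finitely supported functions x : I → ℝ≥0 with total sum equal to 1, equipped for each r ∈ [0,1] with the pointwise convex combination (x +_r y)(i) = r·x(i) + (1−r)·y(i) (which makes P_I a barycentric algebra), and let δ : I → P_I send i to the function that is 1 at i and 0 elsewhere. Then P_I is the free barycentric algebra over I with unit δ: for every barycentric algebra A and every function f : I → A there exists a unique affine map g : P_I → A with g ∘ δ = f. -/
open scoped NNReal

/-- A barycentric algebra: a type with a binary operation `comb r a b` (thought of as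
`a +_r b`) for each real `r`, satisfying the barycentric axioms for `r ∈ [0,1]`. -/
structure BarycentricAlgebra (A : Type*) where
  comb : ℝ → A → A → A
  comb_one : ∀ a b : A, comb 1 a b = a
  comb_same : ∀ r : ℝ, r ∈ Set.Icc (0 : ℝ) 1 → ∀ a : A, comb r a a = a
  comb_sc : ∀ r : ℝ, r ∈ Set.Icc (0 : ℝ) 1 → ∀ a b : A, comb r a b = comb (1 - r) b a
  comb_sa : ∀ p r : ℝ, 0 ≤ p → p < 1 → 0 ≤ r → r < 1 → ∀ a b c : A,
      comb r (comb p a b) c = comb (p * r) a (comb ((r - p * r) / (1 - p * r)) b c)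

/-- The simplex of finitely supported subprobability... probability distributions on `I`:
finitely supported functions `I → ℝ≥0` with total sum `1`. -/
def ProbSimplex (I : Type*) : Type _ :=
  {x : I →₀ ℝ≥0 // x.sum (fun _ v => v) = 1}

/-- The pointwise convex combination on the simplex, for `r ∈ [0,1]`. -/
noncomputable def probComb {I : Type*} (r : ℝ) (hr : r ∈ Set.Icc (0 : ℝ) 1)
    (x y : ProbSimplex I) : ProbSimplex I :=
  ⟨Real.toNNReal r • x.1 + Real.toNNReal (1 - r) • y.1, by
    have hsmul : ∀ (c : ℝ≥0) (z : I →₀ ℝ≥0),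
        (c • z).sum (fun _ v => v) = c * z.sum (fun _ v => v) := by
      intro c z
      rw [Finsupp.sum_smul_index (fun i => rfl)]
      exact (Finsupp.mul_sum _ _).symm
    rw [Finsupp.sum_add_index' (fun i => rfl) (fun i a b => rfl), hsmul, hsmul, x.2, y.2,
      mul_one, mul_one, ← Real.toNNReal_add hr.1 (by linarith [hr.2])]
    norm_num⟩

/-- The unit: `δ i` is the point distribution at `i`. -/
noncomputable def probDelta {I : Type*} (i : I) : ProbSimplex I :=
  ⟨Finsupp.single i 1, by simp⟩

section Aux

set_option linter.unusedSectionVars false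

variable {I : Type*} [LinearOrder I] {A : Type*}

lemma pf_smul_sum (c : ℝ≥0) (z : I →₀ ℝ≥0) :
    (c • z).sum (fun _ v => v) = c * z.sum (fun _ v => v) := by
  rw [Finsupp.sum_smul_index (fun i => rfl)]
  exact (Finsupp.mul_sum _ _).symm

lemma pf_sum_erase (z : I →₀ ℝ≥0) (i : I) :
    z.sum (fun _ v => v) = z i + (z.erase i).sum (fun _ v => v) := by
  conv_lhs => rw [← Finsupp.single_add_erase i z]
  rw [Finsupp.sum_add_index' (fun _ => rfl) (fun _ _ _ => rfl),
    Finsupp.sum_single_index rfl]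

lemma pf_le_one (x : ProbSimplex I) (i : I) : x.1 i ≤ 1 := by
  have h := pf_sum_erase x.1 i
  rw [x.2] at h
  exact le_of_le_of_eq le_self_add h.symm

lemma pf_supp_nonempty (x : ProbSimplex I) : x.1.support.Nonempty := by
  rw [Finset.nonempty_iff_ne_empty]
  intro h
  have : x.1 = 0 := Finsupp.support_eq_empty.mp h
  have h2 := x.2
  rw [this] at h2
  simp at h2

lemma pf_eq_one (x : ProbSimplex I) (i : I) (h : x.1 i = 1) : x = probDelta i := by
  have h1 := pf_sum_erase x.1 i
  rw [x.2, h] at h1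
  have h2 : (x.1.erase i).sum (fun _ v => v) = 0 := by
    have := add_right_cancel (a := (1:ℝ≥0)) (b := (x.1.erase i).sum fun _ v => v) (c := 0)
    simpa using h1.symm
  have h3 : x.1.erase i = 0 := by
    have hz := (Finset.sum_eq_zero_iff).mp h2
    ext j
    by_cases hjm : j ∈ (x.1.erase i).support
    · simpa using hz j hjm
    · simpa using Finsupp.notMem_support_iff.mp hjm
  apply Subtype.ext
  conv_lhs => rw [← Finsupp.single_add_erase i x.1]
  rw [h, h3, add_zero]
  rfl

lemma pf_sub_ne (x : ProbSimplex I) (i : I) (h : x.1 i < 1) : (1 : ℝ≥0) - x.1 i ≠ 0 := by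
  simpa [tsub_eq_zero_iff_le] using h.not_ge

lemma pf_erase_sum (x : ProbSimplex I) (i : I) :
    (x.1.erase i).sum (fun _ v => v) = 1 - x.1 i := by
  have h := pf_sum_erase x.1 i
  rw [x.2] at h
  rw [eq_tsub_iff_add_eq_of_le (pf_le_one x i), add_comm, ← h]

/-- Remove the mass at `i` and renormalize. -/
noncomputable def pdrop (i : I) (x : ProbSimplex I) (h : x.1 i < 1) : ProbSimplex I :=
  ⟨((1 : ℝ≥0) - x.1 i)⁻¹ • x.1.erase i, by
    rw [pf_smul_sum, pf_erase_sum, inv_mul_cancel₀ (pf_sub_ne x i h)]⟩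

lemma pdrop_apply_self (i : I) (x : ProbSimplex I) (h : x.1 i < 1) :
    (pdrop i x h).1 i = 0 := by
  simp [pdrop]

lemma pdrop_apply_ne (i : I) (x : ProbSimplex I) (h : x.1 i < 1) (j : I) (hj : j ≠ i) :
    (pdrop i x h).1 j = ((1 : ℝ≥0) - x.1 i)⁻¹ * x.1 j := by
  simp [pdrop, Finsupp.erase_ne hj]

lemma pdrop_support (i : I) (x : ProbSimplex I) (h : x.1 i < 1) :
    (pdrop i x h).1.support = x.1.support.erase i := by
  ext j
  by_cases hj : j = i
  · subst hj
    simp [Finsupp.mem_support_iff, pdrop_apply_self]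
  · simp [Finsupp.mem_support_iff, pdrop_apply_ne i x h j hj, Finset.mem_erase, hj,
      mul_eq_zero, inv_eq_zero, pf_sub_ne x i h]

lemma pf_coe_one_sub (x : ProbSimplex I) (i : I) :
    (((1 : ℝ≥0) - x.1 i : ℝ≥0) : ℝ) = 1 - (x.1 i : ℝ) := by
  rw [NNReal.coe_sub (pf_le_one x i), NNReal.coe_one]

lemma pf_mem_Icc (x : ProbSimplex I) (i : I) : ((x.1 i : ℝ)) ∈ Set.Icc (0:ℝ) 1 :=
  ⟨(x.1 i).2, by exact_mod_cast pf_le_one x i⟩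

lemma probComb_apply (r : ℝ) (hr : r ∈ Set.Icc (0:ℝ) 1) (x y : ProbSimplex I) (k : I) :
    (probComb r hr x y).1 k = r.toNNReal * x.1 k + (1 - r).toNNReal * y.1 k := by
  rfl

lemma probComb_apply_real (r : ℝ) (hr : r ∈ Set.Icc (0:ℝ) 1) (x y : ProbSimplex I) (k : I) :
    ((probComb r hr x y).1 k : ℝ) = r * (x.1 k : ℝ) + (1 - r) * (y.1 k : ℝ) := by
  rw [probComb_apply, NNReal.coe_add, NNReal.coe_mul, NNReal.coe_mul,
    Real.coe_toNNReal r hr.1, Real.coe_toNNReal _ (by linarith [hr.2] : (0:ℝ) ≤ 1 - r)]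

lemma pf_ext {x y : ProbSimplex I} (h : ∀ k, ((x.1 k : ℝ)) = (y.1 k : ℝ)) : x = y :=
  Subtype.ext (Finsupp.ext fun k => NNReal.coe_injective (h k))

lemma pf_decomp (x : ProbSimplex I) (i : I) (h : x.1 i < 1) :
    probComb (x.1 i : ℝ) (pf_mem_Icc x i) (probDelta i) (pdrop i x h) = x := by
  have hne := pf_sub_ne x i h
  apply pf_ext
  intro k
  rw [probComb_apply_real]
  by_cases hk : k = i
  · subst hk
    simp [probDelta, pdrop_apply_self]
  · have h1 : ((probDelta i : ProbSimplex I).1 k : ℝ) = 0 := by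
      simp [probDelta, Finsupp.single_apply, Ne.symm hk, hk]
    rw [h1, pdrop_apply_ne i x h k hk, NNReal.coe_mul, NNReal.coe_inv, pf_coe_one_sub,
      mul_zero, zero_add, ← mul_assoc]
    have hne' : 1 - (x.1 i : ℝ) ≠ 0 := by
      rw [← pf_coe_one_sub]
      exact_mod_cast hne
    field_simp

variable (BA : BarycentricAlgebra A) (f : I → A)

/-- The affine extension of `f`, by recursion on the support size. -/
noncomputable def extAux : ProbSimplex I → A := fun x =>
  if h : x.1 (x.1.support.min' (pf_supp_nonempty x)) < 1 then
    BA.comb (x.1 (x.1.support.min' (pf_supp_nonempty x)) : ℝ)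
      (f (x.1.support.min' (pf_supp_nonempty x)))
      (extAux (pdrop (x.1.support.min' (pf_supp_nonempty x)) x h))
  else f (x.1.support.min' (pf_supp_nonempty x))
termination_by x => x.1.support.card
decreasing_by
  rw [pdrop_support]
  exact Finset.card_erase_lt_of_mem (Finset.min'_mem _ _)

lemma extAux_of_one (x : ProbSimplex I) (i : I) (h : x.1 i = 1) : extAux BA f x = f i := by
  have hx := pf_eq_one x i h
  subst hx
  have hsupp : (probDelta i : ProbSimplex I).1.support = {i} :=
    Finsupp.support_single_ne_zero i one_ne_zero
  have hmin : (probDelta i : ProbSimplex I).1.support.min'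
      (pf_supp_nonempty _) = i := by
    simp [hsupp]
  rw [extAux, hmin, dif_neg]
  rw [h]
  exact lt_irrefl 1

lemma extAux_delta (i : I) : extAux BA f (probDelta i) = f i :=
  extAux_of_one BA f _ i (by simp [probDelta])

lemma comb_swap (p q : ℝ) (hp : 0 < p) (hq : 0 < q) (hpq : p + q < 1) (a b c : A) :
    BA.comb p a (BA.comb (q / (1 - p)) b c) = BA.comb q b (BA.comb (p / (1 - q)) a c) := by
  have hs : 0 < p + q := by linarith
  have h1 := BA.comb_sa (p / (p + q)) (p + q) (by positivity)
    ((div_lt_one hs).mpr (by linarith)) (le_of_lt hs) hpq a b c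
  have h2 := BA.comb_sa (q / (p + q)) (p + q) (by positivity)
    ((div_lt_one hs).mpr (by linarith)) (le_of_lt hs) hpq b a c
  have e1 : p / (p + q) * (p + q) = p := div_mul_cancel₀ p hs.ne'
  have e2 : q / (p + q) * (p + q) = q := div_mul_cancel₀ q hs.ne'
  rw [e1] at h1
  rw [e2] at h2
  have e3 : (p + q - p) / (1 - p) = q / (1 - p) := by ring_nf
  have e4 : (p + q - q) / (1 - q) = p / (1 - q) := by ring_nf
  rw [e3] at h1
  rw [e4] at h2
  rw [← h1, ← h2]
  congr 1
  rw [BA.comb_sc (p / (p + q)) ⟨by positivity, le_of_lt ((div_lt_one hs).mpr (by linarith))⟩]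
  congr 1
  field_simp
  ring

lemma pdrop_apply_real (i : I) (x : ProbSimplex I) (h : x.1 i < 1) (j : I) (hj : j ≠ i) :
    ((pdrop i x h).1 j : ℝ) = (x.1 j : ℝ) / (1 - (x.1 i : ℝ)) := by
  rw [pdrop_apply_ne i x h j hj, NNReal.coe_mul, NNReal.coe_inv, pf_coe_one_sub,
    inv_mul_eq_div]

lemma pf_coe_lt_one (x : ProbSimplex I) (i : I) (h : x.1 i < 1) : (x.1 i : ℝ) < 1 := by
  exact_mod_cast h

lemma pdrop_lt_one_iff (i : I) (x : ProbSimplex I) (hi : x.1 i < 1) (j : I) (hj : j ≠ i) :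
    (pdrop i x hi).1 j < 1 ↔ (x.1 i : ℝ) + (x.1 j : ℝ) < 1 := by
  have hA : (0:ℝ) < 1 - (x.1 i : ℝ) := by linarith [pf_coe_lt_one x i hi]
  have : ((pdrop i x hi).1 j < 1) ↔ (((pdrop i x hi).1 j : ℝ) < 1) := by
    constructor <;> intro h <;> exact_mod_cast h
  rw [this, pdrop_apply_real i x hi j hj, div_lt_one hA]
  constructor <;> intro h <;> linarith

lemma pdrop_comm (x : ProbSimplex I) (i j : I) (hi : x.1 i < 1) (hj : x.1 j < 1)
    (hij : i ≠ j) (h1 : (pdrop i x hi).1 j < 1) (h2 : (pdrop j x hj).1 i < 1) :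
    pdrop j (pdrop i x hi) h1 = pdrop i (pdrop j x hj) h2 := by
  have hsum : (x.1 i : ℝ) + (x.1 j : ℝ) < 1 :=
    (pdrop_lt_one_iff i x hi j hij.symm).mp h1
  have hA : (0:ℝ) < 1 - (x.1 i : ℝ) := by linarith [pf_coe_lt_one x i hi]
  have hB : (0:ℝ) < 1 - (x.1 j : ℝ) := by linarith [pf_coe_lt_one x j hj]
  have hA' : (0:ℝ) < 1 - ((pdrop i x hi).1 j : ℝ) := by
    rw [pdrop_apply_real i x hi j hij.symm]
    have : (x.1 j : ℝ) / (1 - (x.1 i : ℝ)) < 1 := (div_lt_one hA).mpr (by linarith)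
    linarith
  have hB' : (0:ℝ) < 1 - ((pdrop j x hj).1 i : ℝ) := by
    rw [pdrop_apply_real j x hj i hij]
    have : (x.1 i : ℝ) / (1 - (x.1 j : ℝ)) < 1 := (div_lt_one hB).mpr (by linarith)
    linarith
  have d1 : (0:ℝ) < 1 - (x.1 j : ℝ) / (1 - (x.1 i : ℝ)) := by
    have : (x.1 j : ℝ) / (1 - (x.1 i : ℝ)) < 1 := (div_lt_one hA).mpr (by linarith)
    linarith
  have d2 : (0:ℝ) < 1 - (x.1 i : ℝ) / (1 - (x.1 j : ℝ)) := by
    have : (x.1 i : ℝ) / (1 - (x.1 j : ℝ)) < 1 := (div_lt_one hB).mpr (by linarith)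
    linarith
  apply pf_ext
  intro k
  by_cases hki : k = i
  · subst hki
    rw [pdrop_apply_real j _ h1 k hij, pdrop_apply_self, pdrop_apply_self]
    simp
  by_cases hkj : k = j
  · subst hkj
    rw [pdrop_apply_self, pdrop_apply_real i _ h2 k hij.symm, pdrop_apply_self]
    simp
  · rw [pdrop_apply_real j _ h1 k hkj, pdrop_apply_real i _ h2 k hki,
      pdrop_apply_real i x hi k hki, pdrop_apply_real i x hi j hij.symm,
      pdrop_apply_real j x hj k hkj, pdrop_apply_real j x hj i hij]
    field_simp
    ring

lemma pf_coe_pos (x : ProbSimplex I) (i : I) (h : i ∈ x.1.support) : (0:ℝ) < (x.1 i : ℝ) := by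
  have := Finsupp.mem_support_iff.mp h
  positivity

lemma extAux_spec : ∀ (n : ℕ) (x : ProbSimplex I), x.1.support.card ≤ n →
    ∀ (j : I), j ∈ x.1.support → ∀ (hlt : x.1 j < 1),
    extAux BA f x = BA.comb (x.1 j : ℝ) (f j) (extAux BA f (pdrop j x hlt)) := by
  intro n
  induction n with
  | zero =>
    intro x hc j hj _
    have := Finset.card_pos.mpr (pf_supp_nonempty x)
    omega
  | succ n IH =>
    intro x hc j hj hlt
    set i := x.1.support.min' (pf_supp_nonempty x) with hidef
    have hisupp : i ∈ x.1.support := Finset.min'_mem _ _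
    have hilt : x.1 i < 1 := by
      rcases lt_or_eq_of_le (pf_le_one x i) with h | h
      · exact h
      · exfalso
        have hx := pf_eq_one x i h
        have hsupp : x.1.support = {i} := by
          rw [hx]; exact Finsupp.support_single_ne_zero i one_ne_zero
        have hji : j = i := by simpa [hsupp] using hj
        rw [hji, h] at hlt
        exact lt_irrefl _ hlt
    have hunfold : extAux BA f x
        = BA.comb (x.1 i : ℝ) (f i) (extAux BA f (pdrop i x hilt)) := by
      rw [extAux, ← hidef, dif_pos hilt]
    by_cases hji : j = i
    · subst hji; exact hunfold
    · have hij : i ≠ j := fun h => hji h.symm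
      have hjd : j ∈ (pdrop i x hilt).1.support := by
        rw [pdrop_support]; exact Finset.mem_erase.mpr ⟨hji, hj⟩
      have hcard : (pdrop i x hilt).1.support.card ≤ n := by
        rw [pdrop_support]
        have := Finset.card_erase_of_mem hisupp
        omega
      have hcard2 : (pdrop j x hlt).1.support.card ≤ n := by
        rw [pdrop_support]
        have := Finset.card_erase_of_mem hj
        omega
      have hipos := pf_coe_pos x i hisupp
      have hjpos := pf_coe_pos x j hj
      rcases lt_or_eq_of_le (pf_le_one (pdrop i x hilt) j) with hd1 | hd1
      · -- main case: three or more points involved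
        have hsum : (x.1 i : ℝ) + (x.1 j : ℝ) < 1 :=
          (pdrop_lt_one_iff i x hilt j hji).mp hd1
        have hi2 : (pdrop j x hlt).1 i < 1 :=
          (pdrop_lt_one_iff j x hlt i hij).mpr (by linarith)
        have hid : i ∈ (pdrop j x hlt).1.support := by
          rw [pdrop_support]; exact Finset.mem_erase.mpr ⟨hij, hisupp⟩
        have e1 := IH (pdrop i x hilt) hcard j hjd hd1
        have e2 := IH (pdrop j x hlt) hcard2 i hid hi2
        have hcomm := pdrop_comm x i j hilt hlt hij hd1 hi2
        rw [hunfold, e1, e2, hcomm, pdrop_apply_real i x hilt j hji,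
          pdrop_apply_real j x hlt i hij]
        exact comb_swap BA _ _ hipos hjpos hsum (f i) (f j) _
      · -- boundary case: the support is {i, j}
        have hA : (0:ℝ) < 1 - (x.1 i : ℝ) := by linarith [pf_coe_lt_one x i hilt]
        have hrj : (x.1 j : ℝ) = 1 - (x.1 i : ℝ) := by
          have : ((pdrop i x hilt).1 j : ℝ) = 1 := by exact_mod_cast hd1
          rw [pdrop_apply_real i x hilt j hji, div_eq_one_iff_eq hA.ne'] at this
          exact this
        have hdi : (pdrop j x hlt).1 i = 1 := by
          have : ((pdrop j x hlt).1 i : ℝ) = 1 := by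
            rw [pdrop_apply_real j x hlt i hij, hrj]
            have : (1:ℝ) - (1 - (x.1 i:ℝ)) = (x.1 i : ℝ) := by ring
            rw [this, div_self hipos.ne']
          exact_mod_cast this
        rw [hunfold, extAux_of_one BA f _ j hd1, extAux_of_one BA f _ i hdi, hrj,
          ← BA.comb_sc (x.1 i : ℝ) (pf_mem_Icc x i)]

lemma pf_delta_apply_real (i k : I) :
    (((probDelta i : ProbSimplex I)).1 k : ℝ) = if k = i then 1 else 0 := by
  rcases eq_or_ne k i with h | h
  · subst h; simp [probDelta]
  · simp [probDelta, Finsupp.single_eq_of_ne (Ne.symm h), h]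

lemma ext_delta_zero (i : I) (y : ProbSimplex I) (hyi : y.1 i = 0) (q : ℝ)
    (hq0 : 0 < q) (hq1 : q < 1) (hq : q ∈ Set.Icc (0:ℝ) 1) :
    extAux BA f (probComb q hq (probDelta i) y) = BA.comb q (f i) (extAux BA f y) := by
  set z := probComb q hq (probDelta i) y with hz
  have hzi : (z.1 i : ℝ) = q := by
    rw [hz, probComb_apply_real, pf_delta_apply_real]
    simp [hyi]
  have hzlt : z.1 i < 1 := by
    have : (z.1 i : ℝ) < 1 := by rw [hzi]; exact hq1
    exact_mod_cast this
  have hzsupp : i ∈ z.1.support := by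
    rw [Finsupp.mem_support_iff]
    intro h
    rw [h] at hzi
    simp at hzi
    linarith
  have hdrop : pdrop i z hzlt = y := by
    apply pf_ext
    intro k
    by_cases hk : k = i
    · subst hk
      rw [pdrop_apply_self]
      simp [hyi]
    · rw [pdrop_apply_real i z hzlt k hk, hzi, hz, probComb_apply_real,
        pf_delta_apply_real, if_neg hk]
      have h1q : (1:ℝ) - q ≠ 0 := by linarith
      field_simp
      ring
  rw [extAux_spec BA f (z.1.support.card) z le_rfl i hzsupp hzlt, hzi, hdrop]

lemma ext_delta_comb : ∀ (n : ℕ) (y : ProbSimplex I), y.1.support.card ≤ n →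
    ∀ (i : I) (q : ℝ) (hq0 : 0 < q) (hq1 : q < 1) (hq : q ∈ Set.Icc (0:ℝ) 1),
    extAux BA f (probComb q hq (probDelta i) y) = BA.comb q (f i) (extAux BA f y) := by
  intro n
  induction n with
  | zero =>
    intro y hc
    have := Finset.card_pos.mpr (pf_supp_nonempty y)
    omega
  | succ n IH =>
    intro y hc i q hq0 hq1 hq
    by_cases hyi : y.1 i = 0
    · exact ext_delta_zero BA f i y hyi q hq0 hq1 hq
    by_cases hyi1 : y.1 i = 1
    · have hy := pf_eq_one y i hyi1
      subst hy
      have : probComb q hq (probDelta i) (probDelta i) = probDelta i := by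
        apply pf_ext
        intro k
        rw [probComb_apply_real]
        ring
      rw [this, extAux_delta, BA.comb_same q hq]
    · -- 0 < y i < 1 : pick another support point j
      have hylt : y.1 i < 1 := lt_of_le_of_ne (pf_le_one y i) hyi1
      have herase : y.1.erase i ≠ 0 := by
        intro h
        have := pf_erase_sum y i
        rw [h] at this
        simp at this
        exact hyi1 (le_antisymm (pf_le_one y i) (tsub_eq_zero_iff_le.mp this.symm))
      obtain ⟨j, hjne⟩ := Finsupp.ne_iff.mp herase
      have hji : j ≠ i := by
        intro h
        subst h
        simp at hjne
      have hjval : y.1.erase i j = y.1 j := Finsupp.erase_ne hji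
      have hjpos : y.1 j ≠ 0 := by
        rw [← hjval]
        simpa using hjne
      have hjsupp : j ∈ y.1.support := Finsupp.mem_support_iff.mpr hjpos
      have hjlt : y.1 j < 1 := by
        rcases lt_or_eq_of_le (pf_le_one y j) with h | h
        · exact h
        · exfalso
          have hy := pf_eq_one y j h
          apply hyi
          rw [hy, probDelta]
          exact Finsupp.single_eq_of_ne' hji
      set t := (y.1 j : ℝ) with ht
      have ht0 : 0 < t := pf_coe_pos y j hjsupp
      have ht1 : t < 1 := pf_coe_lt_one y j hjlt
      have hq1' : (0:ℝ) < 1 - q := by linarith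
      have hD : (0:ℝ) < 1 - (1 - q) * t := by nlinarith
      have hDlt : q < 1 - (1 - q) * t := by nlinarith
      set z := probComb q hq (probDelta i) y with hz
      have hzj : (z.1 j : ℝ) = (1 - q) * t := by
        rw [hz, probComb_apply_real, pf_delta_apply_real, if_neg hji]
        ring
      have hzjlt : z.1 j < 1 := by
        have : (z.1 j : ℝ) < 1 := by rw [hzj]; nlinarith
        exact_mod_cast this
      have hzjsupp : j ∈ z.1.support := by
        rw [Finsupp.mem_support_iff]
        intro h
        rw [h] at hzj
        simp at hzj
        rcases hzj with h' | h' <;> linarith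
      set Q := q / (1 - (1 - q) * t) with hQ
      have hQ0 : 0 < Q := div_pos hq0 hD
      have hQ1 : Q < 1 := (div_lt_one hD).mpr hDlt
      have hQmem : Q ∈ Set.Icc (0:ℝ) 1 := ⟨le_of_lt hQ0, le_of_lt hQ1⟩
      have hcard' : (pdrop j y hjlt).1.support.card ≤ n := by
        rw [pdrop_support]
        have := Finset.card_erase_of_mem hjsupp
        omega
      have hDne : (1 - (1 - q) * t) ≠ 0 := ne_of_gt hD
      have htne : (1 - t) ≠ 0 := by linarith
      have hdrop : pdrop j z hzjlt = probComb Q hQmem (probDelta i) (pdrop j y hjlt) := by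
        apply pf_ext
        intro k
        by_cases hk : k = j
        · rw [hk, probComb_apply_real, pf_delta_apply_real, if_neg hji]
          rw [show (((pdrop j z hzjlt).1 j : ℝ)) = 0 by rw [pdrop_apply_self]; simp]
          rw [show (((pdrop j y hjlt).1 j : ℝ)) = 0 by rw [pdrop_apply_self]; simp]
          simp
        · rw [pdrop_apply_real j z hzjlt k hk, hzj, probComb_apply_real,
            pf_delta_apply_real, probComb_apply_real, pf_delta_apply_real,
            pdrop_apply_real j y hjlt k hk, hQ]
          rw [← ht]
          split_ifs with hki
          · field_simp
            ring
          · field_simp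
            ring
      rw [extAux_spec BA f (z.1.support.card) z le_rfl j hzjsupp hzjlt, hzj, hdrop,
        IH (pdrop j y hjlt) hcard' i Q hQ0 hQ1 hQmem,
        extAux_spec BA f (y.1.support.card) y le_rfl j hjsupp hjlt]
      have hswap := comb_swap BA q ((1 - q) * t) hq0 (by positivity) (by nlinarith)
        (f i) (f j) (extAux BA f (pdrop j y hjlt))
      rw [show (1 - q) * t / (1 - q) = t from mul_div_cancel_left₀ t (by linarith)] at hswap
      rw [← ht]
      rw [hQ]
      exact hswap.symm

lemma probComb_one (hr : (1:ℝ) ∈ Set.Icc (0:ℝ) 1) (x y : ProbSimplex I) :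
    probComb 1 hr x y = x := by
  apply pf_ext
  intro k
  rw [probComb_apply_real]
  ring

lemma probComb_zero (hr : (0:ℝ) ∈ Set.Icc (0:ℝ) 1) (x y : ProbSimplex I) :
    probComb 0 hr x y = y := by
  apply pf_ext
  intro k
  rw [probComb_apply_real]
  ring

lemma ext_affine : ∀ (n : ℕ) (x : ProbSimplex I), x.1.support.card ≤ n →
    ∀ (y : ProbSimplex I) (r : ℝ) (hr : r ∈ Set.Icc (0:ℝ) 1),
    extAux BA f (probComb r hr x y) = BA.comb r (extAux BA f x) (extAux BA f y) := by
  intro n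
  induction n with
  | zero =>
    intro x hc
    have := Finset.card_pos.mpr (pf_supp_nonempty x)
    omega
  | succ n IH =>
    intro x hc y r hr
    rcases eq_or_lt_of_le hr.2 with h1 | h1
    · subst h1
      rw [probComb_one, BA.comb_one]
    rcases eq_or_lt_of_le hr.1 with h0 | h0
    · subst h0
      rw [probComb_zero, BA.comb_sc 0 ⟨le_refl 0, zero_le_one⟩,
        show (1:ℝ) - 0 = 1 by ring, BA.comb_one]
    set i := x.1.support.min' (pf_supp_nonempty x) with hidef
    have hisupp : i ∈ x.1.support := Finset.min'_mem _ _
    set s := (x.1 i : ℝ) with hsdef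
    have hs0 : 0 < s := pf_coe_pos x i hisupp
    by_cases hs1 : x.1 i = 1
    · rw [pf_eq_one x i hs1, extAux_delta]
      exact ext_delta_comb BA f (y.1.support.card) y le_rfl i r h0 h1 hr
    · have hilt : x.1 i < 1 := lt_of_le_of_ne (pf_le_one x i) hs1
      have hslt : s < 1 := pf_coe_lt_one x i hilt
      have hcard' : (pdrop i x hilt).1.support.card ≤ n := by
        rw [pdrop_support]
        have := Finset.card_erase_of_mem hisupp
        omega
      have hsr1 : s * r < 1 := by nlinarith
      have hsrne : (1:ℝ) - s * r ≠ 0 := by linarith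
      have hsrne' : (1:ℝ) - r * s ≠ 0 := by rwa [mul_comm]
      have hsne : (1:ℝ) - s ≠ 0 := by linarith
      have hsr0 : 0 < s * r := by positivity
      have hsrmem : s * r ∈ Set.Icc (0:ℝ) 1 := ⟨le_of_lt hsr0, le_of_lt hsr1⟩
      have hT0 : 0 ≤ (r - s * r) / (1 - s * r) := by
        apply div_nonneg _ (by linarith)
        nlinarith
      have hT1 : (r - s * r) / (1 - s * r) ≤ 1 := by
        rw [div_le_one (by linarith)]
        linarith
      have hTmem : (r - s * r) / (1 - s * r) ∈ Set.Icc (0:ℝ) 1 := ⟨hT0, hT1⟩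
      have hZ : probComb r hr x y
          = probComb (s * r) hsrmem (probDelta i)
              (probComb ((r - s * r) / (1 - s * r)) hTmem (pdrop i x hilt) y) := by
        apply pf_ext
        intro k
        rw [probComb_apply_real, probComb_apply_real, probComb_apply_real,
          pf_delta_apply_real]
        by_cases hk : k = i
        · rw [if_pos hk, show (((pdrop i x hilt).1 k : ℝ)) = 0 by
            rw [hk, pdrop_apply_self]; simp]
          rw [hk, ← hsdef]
          field_simp
          ring
        · rw [if_neg hk, pdrop_apply_real i x hilt k hk, ← hsdef]
          field_simp
          ring
      rw [hZ, ext_delta_comb BA f _ _ le_rfl i (s * r) hsr0 hsr1 hsrmem,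
        IH (pdrop i x hilt) hcard' y _ hTmem,
        extAux_spec BA f (x.1.support.card) x le_rfl i hisupp hilt, ← hsdef,
        BA.comb_sa s r (le_of_lt hs0) hslt hr.1 h1]

lemma ext_unique (g : ProbSimplex I → A)
    (hg : ∀ (r : ℝ) (hr : r ∈ Set.Icc (0:ℝ) 1) (x y : ProbSimplex I),
      g (probComb r hr x y) = BA.comb r (g x) (g y))
    (hgd : ∀ i : I, g (probDelta i) = f i) :
    ∀ (n : ℕ) (x : ProbSimplex I), x.1.support.card ≤ n → g x = extAux BA f x := by
  intro n
  induction n with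
  | zero =>
    intro x hc
    have := Finset.card_pos.mpr (pf_supp_nonempty x)
    omega
  | succ n IH =>
    intro x hc
    set i := x.1.support.min' (pf_supp_nonempty x) with hidef
    have hisupp : i ∈ x.1.support := Finset.min'_mem _ _
    by_cases hs1 : x.1 i = 1
    · rw [pf_eq_one x i hs1, hgd, extAux_delta]
    · have hilt : x.1 i < 1 := lt_of_le_of_ne (pf_le_one x i) hs1
      have hcard' : (pdrop i x hilt).1.support.card ≤ n := by
        rw [pdrop_support]
        have := Finset.card_erase_of_mem hisupp
        omega
      have hdec := pf_decomp x i hilt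
      calc g x = g (probComb (x.1 i : ℝ) (pf_mem_Icc x i) (probDelta i) (pdrop i x hilt)) := by
            rw [hdec]
        _ = BA.comb (x.1 i : ℝ) (g (probDelta i)) (g (pdrop i x hilt)) := hg _ _ _ _
        _ = BA.comb (x.1 i : ℝ) (f i) (extAux BA f (pdrop i x hilt)) := by
            rw [hgd, IH _ hcard']
        _ = extAux BA f x :=
            (extAux_spec BA f (x.1.support.card) x le_rfl i hisupp hilt).symm

end Aux

/-- The simplex of finitely supported probability distributions on `I`, with the pointwise
convex combinations, is the free barycentric algebra over `I` with unit `δ`. -/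
theorem probSimplex_free_barycentric {I A : Type*} (BA : BarycentricAlgebra A) (f : I → A) :
    (∃ B : BarycentricAlgebra (ProbSimplex I),
      ∀ (r : ℝ) (hr : r ∈ Set.Icc (0 : ℝ) 1) (x y : ProbSimplex I),
        B.comb r x y = probComb r hr x y) ∧
    ∃! g : ProbSimplex I → A,
      (∀ (r : ℝ) (hr : r ∈ Set.Icc (0 : ℝ) 1) (x y : ProbSimplex I),
        g (probComb r hr x y) = BA.comb r (g x) (g y)) ∧
      ∀ i : I, g (probDelta i) = f i := by
  letI : LinearOrder I := IsWellOrder.linearOrder WellOrderingRel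
  constructor
  · refine ⟨⟨fun r x y => if h : r ∈ Set.Icc (0:ℝ) 1 then probComb r h x y else x,
      ?_, ?_, ?_, ?_⟩, ?_⟩
    · intro a b
      show dite _ _ _ = a
      rw [dif_pos (by norm_num : (1:ℝ) ∈ Set.Icc (0:ℝ) 1), probComb_one]
    · intro r hr a
      show dite _ _ _ = a
      rw [dif_pos hr]
      apply pf_ext
      intro k
      rw [probComb_apply_real]
      ring
    · intro r hr a b
      have hr' : (1:ℝ) - r ∈ Set.Icc (0:ℝ) 1 := ⟨by linarith [hr.2], by linarith [hr.1]⟩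
      show dite _ _ _ = dite _ _ _
      rw [dif_pos hr, dif_pos hr']
      apply pf_ext
      intro k
      rw [probComb_apply_real, probComb_apply_real]
      ring
    · intro p r hp0 hp1 hr0 hr1 a b c
      have hpr1 : p * r < 1 := by nlinarith
      have hprne : (1:ℝ) - p * r ≠ 0 := by linarith
      have hprne' : (1:ℝ) - r * p ≠ 0 := by rwa [mul_comm]
      have hp : p ∈ Set.Icc (0:ℝ) 1 := ⟨hp0, le_of_lt hp1⟩
      have hr : r ∈ Set.Icc (0:ℝ) 1 := ⟨hr0, le_of_lt hr1⟩
      have hpr : p * r ∈ Set.Icc (0:ℝ) 1 := ⟨by positivity, le_of_lt hpr1⟩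
      have hT : (r - p * r) / (1 - p * r) ∈ Set.Icc (0:ℝ) 1 := by
        constructor
        · apply div_nonneg _ (by linarith)
          nlinarith
        · rw [div_le_one (by linarith)]
          linarith
      show dite _ _ _ = dite _ _ _
      rw [dif_pos hr, dif_pos hpr]
      simp only [dif_pos hp, dif_pos hT]
      apply pf_ext
      intro k
      rw [probComb_apply_real, probComb_apply_real, probComb_apply_real,
        probComb_apply_real]
      field_simp
      ring
    · intro r hr x y
      simp only [dif_pos hr]
  · refine ⟨extAux BA f, ⟨fun r hr x y => ext_affine BA f (x.1.support.card) x le_rfl y r hr,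
      extAux_delta BA f⟩, ?_⟩
    intro g hg
    funext x
    exact ext_unique BA f g hg.1 hg.2 (x.1.support.card) x le_rfl
end

section
/- Let I be a type. Let S_I be the set of finitely supported functions x : I → ℝ≥0 with total sum at most 1, equipped for each r ∈ [0,1] with the pointwise convex combination (x +_r y)(i) = r·x(i) + (1−r)·y(i) and with the zero function as distinguished element (which makes S_I a pointed barycentric algebra), and let δ : I → S_I send i to the function that is 1 at i and 0 elsewhere. Then S_I is the free pointed barycentric algebra over I with unit δ: for every pointed barycentric algebra A (with distinguished element 0_A) and every function f : I → A there exists a unique affine map g : S_I → A with g(0) = 0_A and g ∘ δ = f. -/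
open scoped NNReal

/-- A pointed barycentric algebra: a barycentric algebra with a distinguished element. -/
structure PointedBarycentricAlgebra (A : Type*) extends BarycentricAlgebra A where
  pt : A

/-- The simplex of finitely supported subprobability distributions on `I`:
finitely supported functions `I → ℝ≥0` with total sum at most `1`. -/
def SubProbSimplex (I : Type*) : Type _ :=
  {x : I →₀ ℝ≥0 // x.sum (fun _ v => v) ≤ 1}

/-- The pointwise convex combination on the subprobability simplex, for `r ∈ [0,1]`. -/
noncomputable def subProbComb {I : Type*} (r : ℝ) (hr : r ∈ Set.Icc (0 : ℝ) 1)
    (x y : SubProbSimplex I) : SubProbSimplex I :=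
  ⟨Real.toNNReal r • x.1 + Real.toNNReal (1 - r) • y.1, by
    have hsmul : ∀ (c : ℝ≥0) (z : I →₀ ℝ≥0),
        (c • z).sum (fun _ v => v) = c * z.sum (fun _ v => v) := by
      intro c z
      rw [Finsupp.sum_smul_index (fun i => rfl)]
      exact (Finsupp.mul_sum _ _).symm
    rw [Finsupp.sum_add_index' (fun i => rfl) (fun i a b => rfl), hsmul, hsmul]
    calc Real.toNNReal r * x.1.sum (fun _ v => v) +
          Real.toNNReal (1 - r) * y.1.sum (fun _ v => v)
        ≤ Real.toNNReal r * 1 + Real.toNNReal (1 - r) * 1 :=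
          add_le_add (mul_le_mul_of_nonneg_left x.2 zero_le) (mul_le_mul_of_nonneg_left y.2 zero_le)
      _ = 1 := by
          rw [mul_one, mul_one, ← Real.toNNReal_add hr.1 (by linarith [hr.2])]
          norm_num⟩

/-- The distinguished element: the zero subprobability distribution. -/
noncomputable def subProbZero {I : Type*} : SubProbSimplex I :=
  ⟨0, by simp⟩

/-- The unit: `δ i` is the point distribution at `i`. -/
noncomputable def subProbDelta {I : Type*} (i : I) : SubProbSimplex I :=
  ⟨Finsupp.single i 1, by simp⟩

namespace BarycentricAlgebra

variable {A : Type*} (BA : BarycentricAlgebra A)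

lemma comb_zero (a b : A) : BA.comb 0 a b = b := by
  rw [BA.comb_sc 0 ⟨le_refl _, zero_le_one⟩, sub_zero, BA.comb_one]

/-- Absorption: `a +_u (a +_v W) = a +_{u+(1-u)v} W`. -/
lemma absorb {u v : ℝ} (hu : u ∈ Set.Icc (0:ℝ) 1) (hv : v ∈ Set.Icc (0:ℝ) 1) (a W : A) :
    BA.comb u a (BA.comb v a W) = BA.comb (u + (1-u)*v) a W := by
  obtain ⟨hu0, hu1⟩ := hu
  obtain ⟨hv0, hv1⟩ := hv
  rcases eq_or_lt_of_le hv0 with rfl | hv0'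
  · rw [comb_zero, show u + (1-u)*0 = u by ring]
  rcases eq_or_lt_of_le hu1 with rfl | hu1'
  · rw [BA.comb_one, show (1:ℝ) + (1-1)*v = 1 by ring, BA.comb_one]
  have hm0 : 0 < u + (1-u)*v := by nlinarith
  have hm1 : u + (1-u)*v ≤ 1 := by nlinarith
  rcases eq_or_lt_of_le hm1 with hm1e | hm1' 
  · -- forces v = 1
    have hv1' : v = 1 := by nlinarith
    subst hv1'
    rw [BA.comb_one, show u + (1-u)*1 = 1 by ring, BA.comb_one,
      BA.comb_same u ⟨hu0, hu1⟩]
  · set m := u + (1-u)*v with hm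
    have key := BA.comb_sa (u/m) m (by positivity)
      (by rw [div_lt_one hm0]; nlinarith) (le_of_lt hm0) hm1' a a W
    rw [BA.comb_same (u/m) ⟨by positivity, by rw [div_le_one hm0]; nlinarith⟩] at key
    have h1 : u / m * m = u := div_mul_cancel₀ _ (ne_of_gt hm0)
    rw [h1] at key
    have h2 : (m - u) / (1 - u) = v := by
      rw [show m - u = (1-u)*v by rw [hm]; ring,
        mul_div_cancel_left₀ _ (ne_of_gt (by linarith : (0:ℝ) < 1-u))]
    rw [h2] at key
    exact key.symm

/-- Swap lemma. -/
lemma swap {p q : ℝ} (hp : 0 ≤ p) (hq : 0 ≤ q) (hpq : p + q ≤ 1) (a b d : A) :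
    BA.comb p a (BA.comb (q/(1-p)) b d) = BA.comb q b (BA.comb (p/(1-q)) a d) := by
  have helper : ∀ p q : ℝ, 0 ≤ p → 0 < q → p + q < 1 →
      ∀ a b : A, BA.comb p a (BA.comb (q/(1-p)) b d)
        = BA.comb (p+q) (BA.comb (p/(p+q)) a b) d := by
    intro p q hp hq hpq a b
    have hs : 0 < p + q := by linarith
    have key := BA.comb_sa (p/(p+q)) (p+q) (by positivity)
      (by rw [div_lt_one hs]; linarith) (le_of_lt hs) hpq a b d
    have h1 : p/(p+q)*(p+q) = p := div_mul_cancel₀ _ (ne_of_gt hs)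
    rw [h1] at key
    have h2 : ((p+q) - p) / (1 - p) = q/(1-p) := by ring_nf
    rw [h2] at key
    exact key.symm
  rcases eq_or_lt_of_le hq with rfl | hq'
  · rw [zero_div, comb_zero, BA.comb_zero b, sub_zero, div_one]
  rcases eq_or_lt_of_le hp with rfl | hp'
  · rw [zero_div, comb_zero, BA.comb_zero a, sub_zero, div_one]
  rcases eq_or_lt_of_le hpq with hpq' | hpq'
  · have h1 : q/(1-p) = 1 := by rw [show 1-p = q by linarith]; exact div_self (ne_of_gt hq')
    have h2 : p/(1-q) = 1 := by rw [show 1-q = p by linarith]; exact div_self (ne_of_gt hp')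
    rw [h1, h2, BA.comb_one, BA.comb_one, BA.comb_sc q ⟨hq, by linarith⟩,
      show 1 - q = p by linarith]
  · rw [helper p q hp hq' hpq' a b, helper q p hq hp' (by linarith) b a]
    have hs : (0:ℝ) < p + q := by linarith
    have hc : BA.comb (p/(p+q)) a b = BA.comb (q/(q+p)) b a := by
      rw [BA.comb_sc (p/(p+q)) ⟨by positivity, by rw [div_le_one hs]; linarith⟩]
      congr 1
      rw [add_comm q p]
      field_simp
      ring
    rw [hc, add_comm p q]

/-- Distributivity: `(a +_p X) +_r (a +_q Y) = a +_w (X +_{r'} Y)`. -/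
lemma distrib {r p q : ℝ} (hr : r ∈ Set.Icc (0:ℝ) 1) (hp : p ∈ Set.Icc (0:ℝ) 1)
    (hq : q ∈ Set.Icc (0:ℝ) 1) (a X Y : A) :
    BA.comb r (BA.comb p a X) (BA.comb q a Y)
      = BA.comb (r*p + (1-r)*q) a
          (BA.comb (r*(1-p)/(1-(r*p+(1-r)*q))) X Y) := by
  obtain ⟨hr0, hr1⟩ := hr
  obtain ⟨hp0, hp1⟩ := hp
  obtain ⟨hq0, hq1⟩ := hq
  rcases eq_or_lt_of_le hr0 with rfl | hr0'
  · rw [comb_zero, show (0:ℝ)*p + (1-0)*q = q by ring, zero_mul, zero_div, comb_zero]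
  rcases eq_or_lt_of_le hr1 with hr1e | hr1'
  · -- r = 1
    subst hr1e
    rw [BA.comb_one, show (1:ℝ)*p + (1-1)*q = p by ring]
    rcases eq_or_lt_of_le hp1 with hp1e | hp1'
    · subst hp1e
      rw [BA.comb_one, BA.comb_one]
    · rw [show (1:ℝ)*(1-p)/(1-p) = 1 by rw [one_mul]; exact div_self (by linarith),
        BA.comb_one]
  rcases eq_or_lt_of_le hp1 with hp1e | hp1'
  · -- p = 1
    subst hp1e
    rw [BA.comb_one, BA.absorb ⟨hr0, hr1⟩ ⟨hq0, hq1⟩,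
      show r*1 + (1-r)*q = r + (1-r)*q by ring, show r*(1-1) = 0 by ring, zero_div,
      comb_zero]
  have hww : r*p + (1-r)*q < 1 := by nlinarith
  have hw0 : 0 ≤ r*p + (1-r)*q := by nlinarith
  rcases eq_or_lt_of_le hq1 with hq1e | hq1'
  · -- q = 1
    subst hq1e
    rw [BA.comb_one]
    have key := BA.comb_sa p r hp0 hp1' hr0 hr1' a X a
    have hpr1 : p*r < 1 := by nlinarith
    set s := (r - p*r)/(1-p*r) with hs
    have hs0 : 0 ≤ s := by apply div_nonneg <;> nlinarith
    have hs1 : s ≤ 1 := by rw [hs, div_le_one (by linarith)]; nlinarith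
    rw [key, BA.comb_sc s ⟨hs0, hs1⟩,
      BA.absorb ⟨by nlinarith, le_of_lt hpr1⟩ ⟨by linarith, by linarith⟩]
    have e1 : p*r + (1-p*r)*(1-s) = r*p + (1-r)*1 := by
      rw [hs]
      have h1 : (1:ℝ) - p*r ≠ 0 := by nlinarith
      field_simp
      all_goals ring
    have e2 : r*(1-p)/(1-(r*p + (1-r)*1)) = 1 := by
      rw [show 1 - (r*p + (1-r)*1) = r*(1-p) by ring]
      exact div_self (by nlinarith)
    rw [e1, e2, BA.comb_one]
  -- main case
  have key1 := BA.comb_sa p r hp0 hp1' hr0 hr1' a X (BA.comb q a Y)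
  have hpr1 : p*r < 1 := by nlinarith
  set s := (r - p*r)/(1-p*r) with hs
  have hs0 : 0 < s := by apply div_pos <;> nlinarith
  have hs1 : s ≤ 1 := by rw [hs, div_le_one (by linarith)]; nlinarith
  rw [key1, BA.comb_sc s ⟨le_of_lt hs0, hs1⟩]
  have key2 := BA.comb_sa q (1-s) hq0 hq1' (by linarith) (by linarith) a Y X
  rw [key2]
  have hq1s : q*(1-s) < 1 := by nlinarith
  set t := ((1-s) - q*(1-s))/(1-q*(1-s)) with ht
  have ht0 : 0 ≤ t := by apply div_nonneg <;> nlinarith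
  have ht1 : t ≤ 1 := by rw [ht, div_le_one (by linarith)]; nlinarith
  rw [BA.absorb ⟨by nlinarith, le_of_lt hpr1⟩ ⟨by nlinarith, le_of_lt hq1s⟩,
    BA.comb_sc t ⟨ht0, ht1⟩]
  have h1 : (1:ℝ) - p*r ≠ 0 := by nlinarith
  have h2 : (0:ℝ) < 1 - (r*p + (1-r)*q) := by linarith
  have hs' : 1 - s = (1-r)/(1-p*r) := by
    rw [hs, eq_div_iff h1, sub_mul, div_mul_cancel₀ _ h1]; ring
  have hqs : 1 - q*((1-r)/(1-p*r)) = (1-(r*p+(1-r)*q))/(1-p*r) := by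
    rw [eq_div_iff h1, sub_mul, mul_assoc, div_mul_cancel₀ _ h1]
    ring
  have hD : 1 - q*((1-r)/(1-p*r)) ≠ 0 := by
    rw [hqs]; exact div_ne_zero (ne_of_gt h2) h1
  have e1 : p*r + (1-p*r)*(q*(1-s)) = r*p + (1-r)*q := by
    rw [hs']
    field_simp
    all_goals ring
  have e2 : 1 - t = r*(1-p)/(1-(r*p+(1-r)*q)) := by
    rw [ht, hs',
      show (1-r)/(1-p*r) - q*((1-r)/(1-p*r)) = (1-q)*(1-r)/(1-p*r) by ring, hqs,
      div_div_div_cancel_right₀ h1,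
      eq_div_iff (ne_of_gt h2), sub_mul, one_mul, div_mul_cancel₀ _ (ne_of_gt h2)]
    ring
  rw [e1, e2]

end BarycentricAlgebra

open scoped Classical

namespace BarycentricAlgebra

variable {I A : Type*} (BA : BarycentricAlgebra A) (e : A) (f : I → A)

/-- Iterated barycenter of the points `f j`, `j ∈ l`, with weights `w j`,
with leftover mass on `e`. -/
noncomputable def bl : List I → (I → ℝ) → A
  | [], _ => e
  | j :: l, w => BA.comb (w j) (f j) (bl l (fun k => w k / (1 - w j)))

lemma bl_nil (w : I → ℝ) : bl BA e f [] w = e := rfl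

lemma bl_cons (j : I) (l : List I) (w : I → ℝ) :
    bl BA e f (j :: l) w = BA.comb (w j) (f j) (bl BA e f l (fun k => w k / (1 - w j))) := rfl

lemma bl_congr (l : List I) : ∀ (w w' : I → ℝ), (∀ k ∈ l, w k = w' k) →
    bl BA e f l w = bl BA e f l w' := by
  induction l with
  | nil => intros; rfl
  | cons j l ih =>
    intro w w' h
    rw [bl_cons, bl_cons, h j List.mem_cons_self]
    congr 1
    apply ih
    intro k hk
    rw [h k (List.mem_cons_of_mem j hk)]

lemma bl_zero (l : List I) : ∀ (w : I → ℝ), (∀ k ∈ l, w k = 0) → bl BA e f l w = e := by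
  induction l with
  | nil => intros; rfl
  | cons j l ih =>
    intro w h
    rw [bl_cons, h j List.mem_cons_self, BA.comb_zero]
    apply ih
    intro k hk
    simp [h k (List.mem_cons_of_mem j hk)]

lemma map_div_sum (l : List I) (w : I → ℝ) (c : ℝ) :
    (l.map fun k => w k / c).sum = (l.map w).sum / c := by
  induction l with
  | nil => simp
  | cons j l ih => simp [ih, add_div]

lemma sum_map_nonneg {l : List I} {w : I → ℝ} (h : ∀ k ∈ l, 0 ≤ w k) :
    0 ≤ (l.map w).sum :=
  List.sum_nonneg (by rintro x hx; obtain ⟨k, hk, rfl⟩ := List.mem_map.mp hx; exact h k hk)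

lemma head_le_one {j : I} {l : List I} {w : I → ℝ} (h0 : ∀ k ∈ j :: l, 0 ≤ w k)
    (h1 : ((j :: l).map w).sum ≤ 1) : w j ≤ 1 := by
  have := sum_map_nonneg (fun k hk => h0 k (List.mem_cons_of_mem j hk))
  simp only [List.map_cons, List.sum_cons] at h1
  linarith

lemma resc_nonneg {j : I} {l : List I} {w : I → ℝ} (h0 : ∀ k ∈ j :: l, 0 ≤ w k)
    (h1 : ((j :: l).map w).sum ≤ 1) :
    ∀ k ∈ l, 0 ≤ w k / (1 - w j) := by
  intro k hk
  have := head_le_one h0 h1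
  exact div_nonneg (h0 k (List.mem_cons_of_mem j hk)) (by linarith)

lemma resc_sum_le {j : I} {l : List I} {w : I → ℝ} (h0 : ∀ k ∈ j :: l, 0 ≤ w k)
    (h1 : ((j :: l).map w).sum ≤ 1) :
    (l.map fun k => w k / (1 - w j)).sum ≤ 1 := by
  rw [map_div_sum]
  have hj1 := head_le_one h0 h1
  simp only [List.map_cons, List.sum_cons] at h1
  rcases eq_or_lt_of_le hj1 with hj | hj
  · rw [show (1:ℝ) - w j = 0 by simp [hj], div_zero]
    norm_num
  · rw [div_le_one (by linarith)]
    linarith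

lemma double_resc {a p q : ℝ} (ha : 0 ≤ a) (hp : 0 ≤ p) (hq : 0 ≤ q) (h : p + q + a ≤ 1) :
    (a/(1-p))/(1 - q/(1-p)) = (a/(1-q))/(1 - p/(1-q)) := by
  rcases eq_or_lt_of_le (show p + q ≤ 1 by linarith) with hpq | hpq
  · have ha0 : a = 0 := by linarith
    simp [ha0]
  · have hp1 : (0:ℝ) < 1 - p := by linarith
    have hq1 : (0:ℝ) < 1 - q := by linarith
    rw [show 1 - q/(1-p) = (1-p-q)/(1-p) by field_simp, 
      show 1 - p/(1-q) = (1-q-p)/(1-q) by field_simp,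
      div_div_div_cancel_right₀ (ne_of_gt hp1),
      div_div_div_cancel_right₀ (ne_of_gt hq1),
      show 1-q-p = 1-p-q by ring]

lemma bl_perm {l l' : List I} (hp : l.Perm l') :
    ∀ w : I → ℝ, (∀ k ∈ l, 0 ≤ w k) → ((l.map w).sum ≤ 1) →
    bl BA e f l w = bl BA e f l' w := by
  induction hp with
  | nil => intro w _ _; rfl
  | cons x h ih =>
    intro w h0 h1
    rw [bl_cons, bl_cons, ih _ (resc_nonneg h0 h1) (resc_sum_le h0 h1)]
  | swap x y l =>
    intro w h0 h1
    rw [bl_cons, bl_cons, bl_cons, bl_cons]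
    have hy0 : 0 ≤ w y := h0 y (by simp)
    have hx0 : 0 ≤ w x := h0 x (by simp)
    have hsum : w y + w x + (l.map w).sum ≤ 1 := by
      simp only [List.map_cons, List.sum_cons] at h1; linarith
    have hl0 : 0 ≤ (l.map w).sum :=
      sum_map_nonneg (fun k hk => h0 k (by simp [hk]))
    have hkey := BA.swap hy0 hx0 (by linarith) (f y) (f x)
      (bl BA e f l fun m => w m / (1 - w y) / (1 - w x / (1 - w y)))
    rw [hkey]
    congr 2
    apply bl_congr
    intro m hm
    have hm0 : 0 ≤ w m := h0 m (by simp [hm])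
    have hmsum : w m ≤ (l.map w).sum :=
      List.single_le_sum (fun b hb => by
        obtain ⟨k, hk, rfl⟩ := List.mem_map.mp hb; exact h0 k (by simp [hk])) _
        (List.mem_map_of_mem (f := w) hm)
    exact double_resc hm0 hy0 hx0 (by linarith)
  | trans h1 h2 ih1 ih2 =>
    intro w hw0 hw1
    rw [ih1 w hw0 hw1, ih2 w (fun k hk => hw0 k (h1.mem_iff.mpr hk))
      (le_of_eq_of_le ((h1.map w).sum_eq).symm hw1)]

lemma bl_filter : ∀ (l : List I) (w : I → ℝ), (∀ k ∈ l, 0 ≤ w k) → ((l.map w).sum ≤ 1) →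
    bl BA e f l w = bl BA e f (l.filter fun k => w k ≠ 0) w
  | [], w, _, _ => rfl
  | j :: l, w, h0, h1 => by
    have hrn := resc_nonneg h0 h1
    have hrs := resc_sum_le h0 h1
    by_cases hj : w j = 0
    · rw [List.filter_cons_of_neg (by simp [hj]), bl_cons, hj, BA.comb_zero,
        bl_congr BA e f l _ w (fun k hk => by simp [hj]),
        bl_filter l w (fun k hk => h0 k (by simp [hk]))
          (by simp only [List.map_cons, List.sum_cons, hj] at h1; linarith)]
    · rw [List.filter_cons_of_pos (by simp [hj]), bl_cons, bl_cons]
      congr 1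
      rcases eq_or_lt_of_le (head_le_one h0 h1) with hj1 | hj1
      · rw [bl_zero BA e f l _ (fun k hk => by simp [hj1]),
          bl_zero BA e f _ _ (fun k hk => by simp [hj1])]
      · rw [bl_filter l _ hrn hrs]
        congr 1
        apply List.filter_congr
        intro k hk
        have : w k / (1 - w j) ≠ 0 ↔ w k ≠ 0 := by
          rw [div_ne_zero_iff]
          constructor
          · exact fun h => h.1
          · exact fun h => ⟨h, by intro h'; rw [sub_eq_zero] at h'; linarith⟩
        simp [this]

/-- `bl` only depends on the set of elements with nonzero weight. -/
lemma bl_mem_eq {l₁ l₂ : List I} (hn₁ : l₁.Nodup) (hn₂ : l₂.Nodup) (w : I → ℝ)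
    (h0 : ∀ k, 0 ≤ w k) (h1 : ((l₁.map w).sum ≤ 1)) (h2 : ((l₂.map w).sum ≤ 1))
    (hmem : ∀ k, w k ≠ 0 → (k ∈ l₁ ↔ k ∈ l₂)) :
    bl BA e f l₁ w = bl BA e f l₂ w := by
  have filt_sum : ∀ l : List I, ((l.filter fun k => w k ≠ 0).map w).sum ≤ (l.map w).sum := by
    intro l
    induction l with
    | nil => simp
    | cons j l ih =>
      by_cases hj : w j = 0
      · rw [List.filter_cons_of_neg (by simp [hj])]
        simp only [List.map_cons, List.sum_cons, hj, zero_add]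
        exact ih
      · rw [List.filter_cons_of_pos (by simp [hj])]
        simp only [List.map_cons, List.sum_cons]
        linarith
  rw [bl_filter BA e f l₁ w (fun k _ => h0 k) h1,
    bl_filter BA e f l₂ w (fun k _ => h0 k) h2]
  apply bl_perm
  · rw [List.perm_ext_iff_of_nodup (hn₁.filter _) (hn₂.filter _)]
    intro k
    simp only [List.mem_filter, decide_eq_true_eq]
    constructor
    · rintro ⟨hk, hk0⟩; exact ⟨(hmem k hk0).mp hk, hk0⟩
    · rintro ⟨hk, hk0⟩; exact ⟨(hmem k hk0).mpr hk, hk0⟩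
  · exact fun k _ => h0 k
  · exact le_trans (filt_sum l₁) h1

/-- The key lemma: `bl` turns pointwise convex combination of weights into `comb`. -/
lemma bl_comb : ∀ (l : List I) (r : ℝ), r ∈ Set.Icc (0:ℝ) 1 → ∀ (w1 w2 : I → ℝ),
    (∀ k ∈ l, 0 ≤ w1 k) → ((l.map w1).sum ≤ 1) →
    (∀ k ∈ l, 0 ≤ w2 k) → ((l.map w2).sum ≤ 1) →
    bl BA e f l (fun k => r * w1 k + (1-r) * w2 k)
      = BA.comb r (bl BA e f l w1) (bl BA e f l w2)
  | [], r, hr, w1, w2, _, _, _, _ => by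
    rw [bl_nil, bl_nil, bl_nil, BA.comb_same r hr]
  | j :: l, r, hr, w1, w2, ha0, ha1, hb0, hb1 => by
    obtain ⟨hr0, hr1⟩ := hr
    rcases eq_or_lt_of_le hr0 with rfl | hr0'
    · rw [bl_congr BA e f _ _ w2 (fun k _ => by ring), BA.comb_zero]
    rcases eq_or_lt_of_le hr1 with rfl | hr1'
    · rw [bl_congr BA e f _ _ w1 (fun k _ => by ring), BA.comb_one]
    -- 0 < r < 1
    have hp0 : 0 ≤ w1 j := ha0 j (by simp)
    have hp1 : w1 j ≤ 1 := head_le_one ha0 ha1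
    have hq0 : 0 ≤ w2 j := hb0 j (by simp)
    have hq1 : w2 j ≤ 1 := head_le_one hb0 hb1
    rw [bl_cons, bl_cons, bl_cons,
      BA.distrib ⟨le_of_lt hr0', le_of_lt hr1'⟩ ⟨hp0, hp1⟩ ⟨hq0, hq1⟩]
    set p := w1 j with hp
    set q := w2 j with hq
    set z := r * p + (1-r) * q with hz
    have hz0 : 0 ≤ z := by nlinarith
    have hz1 : z ≤ 1 := by nlinarith
    congr 1
    set r' := r * (1-p) / (1-z) with hr'
    have hr'0 : 0 ≤ r' := by
      apply div_nonneg <;> nlinarith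
    have hr'1 : r' ≤ 1 := by
      rcases eq_or_lt_of_le hz1 with hze | hzl
      · rw [hr', hze]; simp
      · rw [hr', div_le_one (by linarith)]; nlinarith
    rw [← bl_comb l r' ⟨hr'0, hr'1⟩ _ _ (resc_nonneg ha0 ha1) (resc_sum_le ha0 ha1)
      (resc_nonneg hb0 hb1) (resc_sum_le hb0 hb1)]
    apply bl_congr
    intro k hk
    -- pointwise identity
    have h1k : 0 ≤ w1 k := ha0 k (by simp [hk])
    have h2k : 0 ≤ w2 k := hb0 k (by simp [hk])
    have h1s : p + w1 k ≤ 1 := by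
      have : w1 k ≤ (l.map w1).sum := List.single_le_sum (fun b hb => by
        obtain ⟨m, hm, rfl⟩ := List.mem_map.mp hb; exact ha0 m (by simp [hm])) _
        (List.mem_map_of_mem (f := w1) hk)
      simp only [List.map_cons, List.sum_cons] at ha1
      linarith
    have h2s : q + w2 k ≤ 1 := by
      have : w2 k ≤ (l.map w2).sum := List.single_le_sum (fun b hb => by
        obtain ⟨m, hm, rfl⟩ := List.mem_map.mp hb; exact hb0 m (by simp [hm])) _
        (List.mem_map_of_mem (f := w2) hk)
      simp only [List.map_cons, List.sum_cons] at hb1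
      linarith
    show (r * w1 k + (1-r) * w2 k) / (1 - z)
        = r' * (w1 k / (1 - p)) + (1 - r') * (w2 k / (1 - q))
    rcases eq_or_lt_of_le hz1 with hze | hzl
    · -- z = 1 forces p = q = 1, w1 k = w2 k = 0
      have hpe : p = 1 := by nlinarith
      have hqe : q = 1 := by nlinarith
      have h1e : w1 k = 0 := by rw [hpe] at h1s; linarith
      have h2e : w2 k = 0 := by rw [hqe] at h2s; linarith
      rw [h1e, h2e]
      simp
    · have hzne : (0:ℝ) < 1 - z := by linarith
      rcases eq_or_lt_of_le hp1 with hpe | hpl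
      · -- p = 1
        have h1e : w1 k = 0 := by rw [hpe] at h1s; linarith
        have hql : q < 1 := by nlinarith
        have hzeq : 1 - z = (1-r) * (1-q) := by rw [hz, hpe]; ring
        rw [h1e, hr', hpe, show r * (1-(1:ℝ)) / (1-z) = 0 by simp, hzeq,
          show r * 0 + (1-r) * w2 k = (1-r) * w2 k by ring,
          mul_div_mul_left _ _ (ne_of_gt (by linarith : (0:ℝ) < 1-r))]
        simp
      rcases eq_or_lt_of_le hq1 with hqe | hql
      · -- q = 1
        have h2e : w2 k = 0 := by rw [hqe] at h2s; linarith
        have h1z : 1 - z = r * (1-p) := by rw [hz, hqe]; ring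
        rw [h2e, hr', h1z, div_self (ne_of_gt (by nlinarith : (0:ℝ) < r*(1-p))),
          show r * w1 k + (1-r) * 0 = r * w1 k by ring,
          mul_div_mul_left _ _ (ne_of_gt hr0')]
        simp
      · -- general case
        have hp1' : (0:ℝ) < 1 - p := by linarith
        have hq1' : (0:ℝ) < 1 - q := by linarith
        have h1z : (0:ℝ) < 1 - (r*p + (1-r)*q) := by rw [← hz]; linarith
        rw [hr', hz]
        field_simp
        ring

end BarycentricAlgebra


section FreeConstruction

open BarycentricAlgebra

variable {I A : Type*}

lemma subProbComb_coe (r : ℝ) (hr : r ∈ Set.Icc (0:ℝ) 1) (x y : SubProbSimplex I) (i : I) :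
    (((subProbComb r hr x y).1 i : ℝ≥0) : ℝ) = r * (x.1 i : ℝ) + (1-r) * (y.1 i : ℝ) := by
  simp [subProbComb, Finsupp.add_apply, Finsupp.smul_apply, smul_eq_mul,
    Real.coe_toNNReal r hr.1, Real.coe_toNNReal _ (by linarith [hr.2] : (0:ℝ) ≤ 1 - r)]

lemma subProb_ext {x y : SubProbSimplex I} (h : ∀ i, ((x.1 i : ℝ≥0) : ℝ) = (y.1 i : ℝ)) :
    x = y :=
  Subtype.ext (Finsupp.ext fun i => NNReal.coe_injective (h i))

/-- The pointed barycentric algebra structure on the subprobability simplex. -/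
noncomputable def subProbAlg (I : Type*) : PointedBarycentricAlgebra (SubProbSimplex I) where
  comb r x y := if h : r ∈ Set.Icc (0:ℝ) 1 then subProbComb r h x y else x
  comb_one a b := by
    rw [dif_pos (Set.mem_Icc.mpr ⟨zero_le_one, le_refl 1⟩)]
    apply subProb_ext
    intro i
    rw [subProbComb_coe]
    ring
  comb_same r hr a := by
    rw [dif_pos hr]
    apply subProb_ext
    intro i
    rw [subProbComb_coe]
    ring
  comb_sc r hr a b := by
    obtain ⟨h0, h1⟩ := hr
    rw [dif_pos (Set.mem_Icc.mpr ⟨h0, h1⟩),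
      dif_pos (Set.mem_Icc.mpr ⟨by linarith, by linarith⟩)]
    apply subProb_ext
    intro i
    rw [subProbComb_coe, subProbComb_coe]
    ring
  comb_sa p r hp0 hp1 hr0 hr1 a b c := by
    have hpr1 : p * r < 1 := by nlinarith
    have hq0 : 0 ≤ (r - p*r)/(1-p*r) := by
      apply div_nonneg <;> nlinarith
    have hq1 : (r - p*r)/(1-p*r) ≤ 1 := by
      rw [div_le_one (by linarith)]; nlinarith
    rw [dif_pos (Set.mem_Icc.mpr ⟨hr0, le_of_lt hr1⟩),
      dif_pos (Set.mem_Icc.mpr ⟨hp0, le_of_lt hp1⟩),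
      dif_pos (Set.mem_Icc.mpr ⟨mul_nonneg hp0 hr0, le_of_lt hpr1⟩),
      dif_pos (Set.mem_Icc.mpr ⟨hq0, hq1⟩)]
    apply subProb_ext
    intro i
    rw [subProbComb_coe, subProbComb_coe, subProbComb_coe, subProbComb_coe]
    have h1 : (1:ℝ) - p*r ≠ 0 := by linarith
    have h1' : (1:ℝ) - r*p ≠ 0 := by linarith
    field_simp
    ring
  pt := subProbZero

lemma subProb_sum_toList_le (x : SubProbSimplex I) {s : Finset I} (hs : x.1.support ⊆ s) :
    ((s.toList.map (fun i => ((x.1 i : ℝ≥0) : ℝ))).sum) ≤ 1 := by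
  rw [Finset.sum_map_toList]
  rw [← Finset.sum_subset hs (fun j _ hj => by
    rw [Finsupp.notMem_support_iff.mp hj]; simp)]
  rw [← NNReal.coe_sum]
  have h2 := x.2
  rw [Finsupp.sum] at h2
  exact_mod_cast h2

variable (BA : PointedBarycentricAlgebra A) (f : I → A)

/-- The affine extension of `f`. -/
noncomputable def gmap (x : SubProbSimplex I) : A :=
  bl BA.toBarycentricAlgebra BA.pt f x.1.support.toList (fun i => ((x.1 i : ℝ≥0) : ℝ))

lemma gmap_spec (x : SubProbSimplex I) {s : Finset I} (hs : x.1.support ⊆ s) :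
    gmap BA f x = bl BA.toBarycentricAlgebra BA.pt f s.toList (fun i => ((x.1 i : ℝ≥0) : ℝ)) := by
  apply bl_mem_eq _ _ _ (Finset.nodup_toList _) (Finset.nodup_toList _) _
    (fun k => NNReal.coe_nonneg _)
    (subProb_sum_toList_le x (subset_refl _)) (subProb_sum_toList_le x hs)
  intro k hk
  have hk' : x.1 k ≠ 0 := by
    intro h
    exact hk (by rw [h]; simp)
  simp only [Finset.mem_toList]
  exact ⟨fun _ => hs (Finsupp.mem_support_iff.mpr hk'),
    fun _ => Finsupp.mem_support_iff.mpr hk'⟩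

lemma gmap_zero : gmap BA f (subProbZero : SubProbSimplex I) = BA.pt := by
  unfold gmap
  rw [show (subProbZero : SubProbSimplex I).1.support = ∅ from Finsupp.support_zero,
    Finset.toList_empty]
  rfl

lemma gmap_delta (i : I) : gmap BA f (subProbDelta i) = f i := by
  unfold gmap
  rw [show (subProbDelta i : SubProbSimplex I).1.support = {i} from
      Finsupp.support_single_ne_zero i one_ne_zero,
    Finset.toList_singleton]
  rw [bl_cons, bl_nil,
    show (((subProbDelta i : SubProbSimplex I).1 i : ℝ≥0) : ℝ) = 1 by
      simp [subProbDelta]]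
  exact BA.comb_one _ _

lemma gmap_comb (r : ℝ) (hr : r ∈ Set.Icc (0:ℝ) 1) (x y : SubProbSimplex I) :
    gmap BA f (subProbComb r hr x y) = BA.comb r (gmap BA f x) (gmap BA f y) := by
  set s := x.1.support ∪ y.1.support with hsdef
  have hz : (subProbComb r hr x y).1.support ⊆ s := by
    intro k hk
    rw [Finsupp.mem_support_iff] at hk
    rw [hsdef, Finset.mem_union, Finsupp.mem_support_iff, Finsupp.mem_support_iff]
    by_contra h
    push_neg at h
    apply hk
    apply NNReal.coe_injective
    rw [subProbComb_coe, h.1, h.2]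
    simp
  rw [gmap_spec BA f x (Finset.subset_union_left),
    gmap_spec BA f y (Finset.subset_union_right),
    gmap_spec BA f _ hz,
    bl_congr _ _ _ _ _
      (fun k => r * ((x.1 k : ℝ≥0) : ℝ) + (1-r) * ((y.1 k : ℝ≥0) : ℝ))
      (fun k _ => subProbComb_coe r hr x y k)]
  exact bl_comb BA.toBarycentricAlgebra BA.pt f s.toList r hr _ _
    (fun k _ => NNReal.coe_nonneg _) (subProb_sum_toList_le x Finset.subset_union_left)
    (fun k _ => NNReal.coe_nonneg _) (subProb_sum_toList_le y Finset.subset_union_right)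

lemma gmap_unique (g₁ g₂ : SubProbSimplex I → A)
    (h₁c : ∀ (r : ℝ) (hr : r ∈ Set.Icc (0 : ℝ) 1) (x y : SubProbSimplex I),
        g₁ (subProbComb r hr x y) = BA.comb r (g₁ x) (g₁ y))
    (h₁z : g₁ subProbZero = BA.pt) (h₁d : ∀ i : I, g₁ (subProbDelta i) = f i)
    (h₂c : ∀ (r : ℝ) (hr : r ∈ Set.Icc (0 : ℝ) 1) (x y : SubProbSimplex I),
        g₂ (subProbComb r hr x y) = BA.comb r (g₂ x) (g₂ y))
    (h₂z : g₂ subProbZero = BA.pt) (h₂d : ∀ i : I, g₂ (subProbDelta i) = f i) :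
    g₁ = g₂ := by
  classical
  have key : ∀ (n : ℕ) (x : SubProbSimplex I), x.1.support.card ≤ n → g₁ x = g₂ x := by
    intro n
    induction n with
    | zero =>
      intro x hx
      have : x = subProbZero := by
        apply Subtype.ext
        exact Finsupp.support_eq_empty.mp (Finset.card_eq_zero.mp (Nat.le_zero.mp hx))
      rw [this, h₁z, h₂z]
    | succ n ih =>
      intro x hx
      rcases Finset.eq_empty_or_nonempty x.1.support with hemp | ⟨i, hi⟩
      · have : x = subProbZero := Subtype.ext (Finsupp.support_eq_empty.mp hemp)
        rw [this, h₁z, h₂z]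
      · set p := x.1 i with hpdef
        have hp0 : p ≠ 0 := Finsupp.mem_support_iff.mp hi
        have hp1 : p ≤ 1 := by
          refine le_trans ?_ x.2
          rw [Finsupp.sum]
          exact Finset.single_le_sum (fun j _ => zero_le) hi
        have hsum_erase : x.1 i + (x.1.erase i).sum (fun _ v => v)
            = x.1.sum (fun _ v => v) := by
          simpa using Finsupp.add_sum_erase' x.1 i (fun _ v => v) (fun _ => rfl)
        rcases eq_or_lt_of_le hp1 with hpe | hpl
        · -- p = 1 : x is a point mass
          have hz : (x.1.erase i).sum (fun _ v => v) = 0 := by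
            have h2 := x.2
            rw [← hsum_erase, ← hpdef, hpe] at h2
            exact le_zero_iff.mp (le_of_add_le_add_left (le_trans h2 (by simp)))
          have herase : x.1.erase i = 0 := by
            ext j
            by_contra hj
            have hjmem : j ∈ (x.1.erase i).support := Finsupp.mem_support_iff.mpr
              (by simpa using hj)
            have : x.1.erase i j ≤ (x.1.erase i).sum (fun _ v => v) := by
              rw [Finsupp.sum]
              exact Finset.single_le_sum (fun m _ => zero_le) hjmem
            rw [hz] at this
            exact hj (by simpa using le_zero_iff.mp this)
          have hxd : x = subProbDelta i := by
            apply Subtype.ext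
            rw [← Finsupp.single_add_erase i x.1, herase, add_zero, ← hpdef, hpe]
            rfl
          rw [hxd, h₁d, h₂d]
        · -- p < 1 : peel off the point mass at i
          have hne : (1 : ℝ≥0) - p ≠ 0 := by
            intro h
            have := tsub_pos_of_lt hpl
            rw [h] at this
            exact lt_irrefl _ this
          have herase_le : (x.1.erase i).sum (fun _ v => v) ≤ 1 - p := by
            apply le_tsub_of_add_le_left
            rw [hpdef, hsum_erase]
            exact x.2
          have hsmul : ∀ (c : ℝ≥0) (z : I →₀ ℝ≥0),
              (c • z).sum (fun _ v => v) = c * z.sum (fun _ v => v) := by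
            intro c z
            rw [Finsupp.sum_smul_index (fun i => rfl)]
            exact (Finsupp.mul_sum _ _).symm
          set y : SubProbSimplex I := ⟨(1-p)⁻¹ • x.1.erase i, by
            rw [hsmul]
            calc (1-p)⁻¹ * (x.1.erase i).sum (fun _ v => v)
                ≤ (1-p)⁻¹ * (1-p) := mul_le_mul_right herase_le _
              _ = 1 := inv_mul_cancel₀ hne⟩ with hydef
          have hrmem : (p : ℝ) ∈ Set.Icc (0:ℝ) 1 :=
            ⟨NNReal.coe_nonneg p, by exact_mod_cast hp1⟩
          have hx : x = subProbComb (p : ℝ) hrmem (subProbDelta i) y := by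
            apply Subtype.ext
            show x.1 = _
            rw [subProbComb]
            show x.1 = Real.toNNReal (p:ℝ) • Finsupp.single i 1
              + Real.toNNReal (1 - (p:ℝ)) • ((1-p)⁻¹ • x.1.erase i)
            rw [Real.toNNReal_coe,
              show (1:ℝ) - (p:ℝ) = ((1 - p : ℝ≥0) : ℝ) by
                rw [NNReal.coe_sub hp1]; simp,
              Real.toNNReal_coe, smul_smul, mul_inv_cancel₀ hne, one_smul,
              Finsupp.smul_single, smul_eq_mul, mul_one, Finsupp.single_add_erase]
          have hycard : y.1.support.card ≤ n := by
            have hsub : y.1.support ⊆ x.1.support.erase i := by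
              rw [hydef]
              refine subset_trans Finsupp.support_smul ?_
              rw [Finsupp.support_erase]
            have := Finset.card_le_card hsub
            rw [Finset.card_erase_of_mem hi] at this
            omega
          rw [hx, h₁c, h₂c, h₁d, h₂d, ih y hycard]
  funext x
  exact key x.1.support.card x le_rfl

end FreeConstruction

/-- The simplex of finitely supported subprobability distributions on `I`, with the
pointwise convex combinations and the zero distribution as distinguished element, is the
free pointed barycentric algebra over `I` with unit `δ`. -/
theorem subProbSimplex_free_pointed_barycentric {I A : Type*}
    (BA : PointedBarycentricAlgebra A) (f : I → A) :
    (∃ B : PointedBarycentricAlgebra (SubProbSimplex I),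
      (∀ (r : ℝ) (hr : r ∈ Set.Icc (0 : ℝ) 1) (x y : SubProbSimplex I),
        B.comb r x y = subProbComb r hr x y) ∧ B.pt = subProbZero) ∧
    ∃! g : SubProbSimplex I → A,
      (∀ (r : ℝ) (hr : r ∈ Set.Icc (0 : ℝ) 1) (x y : SubProbSimplex I),
        g (subProbComb r hr x y) = BA.comb r (g x) (g y)) ∧
      g subProbZero = BA.pt ∧
      ∀ i : I, g (subProbDelta i) = f i := by
  constructor
  · exact ⟨subProbAlg I, fun r hr x y => dif_pos hr, rfl⟩
  · refine ⟨gmap BA f, ⟨gmap_comb BA f, gmap_zero BA f, gmap_delta BA f⟩, ?_⟩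
    rintro g' ⟨hc, hz, hd⟩
    exact gmap_unique BA f g' (gmap BA f) hc hz hd (gmap_comb BA f) (gmap_zero BA f)
      (gmap_delta BA f)
end

section
/- Let A be an ordered barycentric algebra and let a, b, c ∈ A. If a +_p c ≤ b +_p c holds for some p with 0 < p < 1, then a +_q c ≤ b +_q c holds for every q with 0 < q < 1. -/
/-- Neumann's lemma: in an ordered barycentric algebra, if `a +_p c ≤ b +_p c` for one
`p ∈ (0,1)`, then it holds for every `q ∈ (0,1)`. -/
theorem neumann_lemma {A : Type*} [PartialOrder A] (B : BarycentricAlgebra A)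
    (hmono : ∀ r : ℝ, r ∈ Set.Icc (0 : ℝ) 1 → ∀ a a' b : A, a ≤ a' → B.comb r a b ≤ B.comb r a' b)
    (a b c : A) (p : ℝ) (hp0 : 0 < p) (hp1 : p < 1)
    (h : B.comb p a c ≤ B.comb p b c) :
    ∀ q : ℝ, 0 < q → q < 1 → B.comb q a c ≤ B.comb q b c := by
  -- monotonicity in the second argument, via skew-commutativity
  have hmono2 : ∀ r : ℝ, r ∈ Set.Icc (0:ℝ) 1 → ∀ x y z : A, y ≤ z →
      B.comb r x y ≤ B.comb r x z := by
    intro r hr x y z hyz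
    rw [B.comb_sc r hr x y, B.comb_sc r hr x z]
    exact hmono (1 - r) ⟨by linarith [hr.2], by linarith [hr.1]⟩ _ _ _ hyz
  set P : ℝ → Prop := fun s => B.comb s a c ≤ B.comb s b c with hP
  -- downward identity : comb (s*r) x c = comb r (comb s x c) c
  have down_id : ∀ (x : A) (s r : ℝ), 0 < s → s < 1 → 0 < r → r < 1 →
      B.comb (s * r) x c = B.comb r (B.comb s x c) c := by
    intro x s r hs0 hs1 hr0 hr1
    rw [B.comb_sa s r hs0.le hs1 hr0.le hr1]
    have hden : 0 < 1 - s * r := by nlinarith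
    have h0 : 0 ≤ (r - s * r) / (1 - s * r) := by
      apply div_nonneg _ hden.le; nlinarith
    have h1 : (r - s * r) / (1 - s * r) ≤ 1 := by
      rw [div_le_one hden]; nlinarith
    rw [B.comb_same _ ⟨h0, h1⟩ c]
  -- downward closure of P
  have down : ∀ s, 0 < s → s < 1 → P s → ∀ q', 0 < q' → q' ≤ s → P q' := by
    intro s hs0 hs1 hPs q' h0 hle
    rcases eq_or_lt_of_le hle with heq | hlt
    · rwa [heq]
    · have hr0 : 0 < q' / s := div_pos h0 hs0
      have hr1 : q' / s < 1 := (div_lt_one hs0).2 hlt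
      have hkey : ∀ x : A, B.comb q' x c = B.comb (q' / s) (B.comb s x c) c := by
        intro x
        have hqs : s * (q' / s) = q' := by field_simp
        calc B.comb q' x c = B.comb (s * (q'/s)) x c := by rw [hqs]
          _ = B.comb (q'/s) (B.comb s x c) c := down_id x s (q'/s) hs0 hs1 hr0 hr1
      show B.comb q' a c ≤ B.comb q' b c
      rw [hkey a, hkey b]
      exact hmono (q'/s) ⟨hr0.le, hr1.le⟩ _ _ _ hPs
  -- upward identity : comb (u + v - u*v) x c = comb u x (comb v x c)
  have up_id : ∀ (x : A) (u v : ℝ), 0 < u → u < 1 → 0 < v → v < 1 →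
      B.comb (u + v - u * v) x c = B.comb u x (B.comb v x c) := by
    intro x u v hu0 hu1 hv0 hv1
    set r := u + v - u * v with hr
    have hr0 : 0 < r := by rw [hr]; nlinarith
    have hr1 : r < 1 := by rw [hr]; nlinarith
    set t := u / r with ht
    have ht0 : 0 < t := div_pos hu0 hr0
    have ht1 : t < 1 := by
      rw [ht, div_lt_one hr0, hr]; nlinarith
    have htr : t * r = u := by rw [ht]; field_simp
    have hfrac : (r - t * r) / (1 - t * r) = v := by
      rw [htr, hr]
      rw [div_eq_iff (by nlinarith : (1:ℝ) - u ≠ 0)]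
      ring
    conv_lhs => rw [← B.comb_same t ⟨ht0.le, ht1.le⟩ x]
    rw [B.comb_sa t r ht0.le ht1 hr0.le hr1, hfrac, htr]
  -- the key step : P on (0,s] implies P on (0, 2s/(1+s)]
  have step : ∀ s, 0 < s → s < 1 → (∀ w, 0 < w → w ≤ s → P w) →
      ∀ q', 0 < q' → q' < 1 → q' ≤ 2 * s / (1 + s) → P q' := by
    intro s hs0 hs1 hbelow q' hq'0 hq'1 hq'le
    rcases le_or_gt q' s with hle | hgt
    · exact hbelow q' hq'0 hle
    have hPs : P s := hbelow s hs0 le_rfl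
    obtain ⟨u, hu⟩ : ∃ x : ℝ, x = (q' - s) / (1 - s) := ⟨_, rfl⟩
    have hu0 : 0 < u := by
      rw [hu]; exact div_pos (by linarith) (by linarith)
    have hu1 : u < 1 := by
      rw [hu, div_lt_one (by linarith)]; linarith
    have hq'eq : q' = u + s - u * s := by
      have huu : u * (1 - s) = q' - s := by
        rw [hu, div_mul_cancel₀ _ (show (1:ℝ) - s ≠ 0 by linarith)]
      nlinarith [huu]
    have huq' : u < q' := by nlinarith
    -- first two links
    have link1 : B.comb q' a c = B.comb u a (B.comb s a c) := by
      rw [hq'eq]; exact up_id a u s hu0 hu1 hs0 hs1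
    have link2 : B.comb u a (B.comb s a c) ≤ B.comb u a (B.comb s b c) :=
      hmono2 u ⟨hu0.le, hu1.le⟩ _ _ _ hPs
    -- rewrite  comb u a (comb s b c)  as  comb ((1-t)*q') b (comb w a c)
    obtain ⟨t, ht⟩ : ∃ x : ℝ, x = u / q' := ⟨_, rfl⟩
    have ht0 : 0 < t := by rw [ht]; exact div_pos hu0 hq'0
    have ht1 : t < 1 := by rw [ht]; exact (div_lt_one hq'0).2 huq'
    have htq' : t * q' = u := by rw [ht]; field_simp
    have h1tq : (1 - t) * q' = q' - u := by rw [sub_mul, one_mul, htq']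
    have hmid : B.comb u a (B.comb s b c) = B.comb q' (B.comb t a b) c := by
      rw [B.comb_sa t q' ht0.le ht1 hq'0.le hq'1, htq']
      congr 2
      symm
      rw [div_eq_iff (by nlinarith : (1:ℝ) - u ≠ 0)]
      nlinarith [hq'eq]
    obtain ⟨w, hw⟩ : ∃ x : ℝ, x = u / (1 - q' + u) := ⟨_, rfl⟩
    have hden : 0 < 1 - q' + u := by linarith
    have hw0 : 0 < w := by rw [hw]; exact div_pos hu0 hden
    have hw1 : w < 1 := by
      rw [hw, div_lt_one hden]; linarith
    have hws : w ≤ s := by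
      rw [hw, div_le_iff₀ hden]
      have h2s : q' * (1 + s) ≤ 2 * s := by
        have hd : 0 < 1 + s := by linarith
        calc q' * (1 + s) ≤ (2 * s / (1 + s)) * (1 + s) :=
              mul_le_mul_of_nonneg_right hq'le hd.le
          _ = 2 * s := by field_simp
      nlinarith [hq'eq]
    have hmid2 : B.comb q' (B.comb t a b) c
        = B.comb ((1 - t) * q') b (B.comb w a c) := by
      rw [B.comb_sc t ⟨ht0.le, ht1.le⟩ a b,
          B.comb_sa (1 - t) q' (by linarith) (by linarith) hq'0.le hq'1]
      congr 2
      rw [hw, div_eq_div_iff (by nlinarith [htq'] : (0:ℝ) < 1 - (1 - t) * q').ne' hden.ne']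
      nlinarith [htq']
    have link3 : B.comb ((1 - t) * q') b (B.comb w a c)
        ≤ B.comb ((1 - t) * q') b (B.comb w b c) := by
      refine hmono2 _ ⟨by rw [h1tq]; linarith, by rw [h1tq]; linarith⟩ _ _ _
        (hbelow w hw0 hws)
    have link4 : B.comb ((1 - t) * q') b (B.comb w b c) = B.comb q' b c := by
      have hU0 : 0 < (1 - t) * q' := by rw [h1tq]; linarith
      have hU1 : (1 - t) * q' < 1 := by rw [h1tq]; linarith
      rw [← up_id b ((1 - t) * q') w hU0 hU1 hw0 hw1]
      congr 1
      rw [h1tq, hw]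
      field_simp
      ring
    show B.comb q' a c ≤ B.comb q' b c
    calc B.comb q' a c = B.comb u a (B.comb s a c) := link1
      _ ≤ B.comb u a (B.comb s b c) := link2
      _ = B.comb q' (B.comb t a b) c := hmid
      _ = B.comb ((1 - t) * q') b (B.comb w a c) := hmid2
      _ ≤ B.comb ((1 - t) * q') b (B.comb w b c) := link3
      _ = B.comb q' b c := link4
  -- the iteration  f n = 2^n p / (1 + (2^n - 1) p)
  set f : ℕ → ℝ := fun n => 2 ^ n * p / (1 + (2 ^ n - 1) * p) with hf
  have hfden : ∀ n : ℕ, 0 < 1 + ((2:ℝ) ^ n - 1) * p := by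
    intro n
    have h1 : (1:ℝ) ≤ 2 ^ n := by
      induction n with
      | zero => norm_num
      | succ k ih => rw [pow_succ]; nlinarith
    nlinarith
  have hf0 : ∀ n, 0 < f n := by
    intro n
    exact div_pos (by positivity) (hfden n)
  have hf1 : ∀ n, f n < 1 := by
    intro n
    rw [hf]
    simp only
    rw [div_lt_one (hfden n)]
    have h1 : (0:ℝ) < 2 ^ n := by positivity
    nlinarith
  have hfsucc : ∀ n, f (n + 1) = 2 * f n / (1 + f n) := by
    intro n
    have hdn := (hfden n).ne'
    have hdn1 := (hfden (n+1)).ne'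
    have h2 : (0:ℝ) < 1 + f n := by have := hf0 n; linarith
    rw [hf] at h2 ⊢
    simp only at h2 ⊢
    rw [div_eq_div_iff hdn1 h2.ne']
    rw [pow_succ]
    have hD : (1:ℝ) - p + p * 2 ^ n ≠ 0 := by intro h0; apply hdn; linarith
    field_simp
    ring_nf
    field_simp
    ring
  have main : ∀ n : ℕ, ∀ w, 0 < w → w ≤ f n → P w := by
    intro n
    induction n with
    | zero =>
      intro w hw0 hwle
      have hfz : f 0 = p := by rw [hf]; norm_num
      rw [hfz] at hwle
      exact down p hp0 hp1 h w hw0 hwle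
    | succ n ih =>
      intro w hw0 hwle
      have hwlt1 : w < 1 := lt_of_le_of_lt hwle (hf1 (n+1))
      refine step (f n) (hf0 n) (hf1 n) ih w hw0 hwlt1 ?_
      rw [← hfsucc n]; exact hwle
  -- conclude : find n with q ≤ f n
  intro q hq0 hq1
  obtain ⟨n, hn⟩ := pow_unbounded_of_one_lt (q * (1 - p) / (p * (1 - q)))
    (by norm_num : (1:ℝ) < 2)
  have hqfn : q ≤ f n := by
    rw [hf]
    simp only
    rw [le_div_iff₀ (hfden n)]
    have hpq : 0 < p * (1 - q) := by nlinarith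
    have hn' : q * (1 - p) < 2 ^ n * (p * (1 - q)) := by
      rw [div_lt_iff₀ hpq] at hn
      exact hn
    nlinarith
  exact main n q hq0 hqfn
end

section
/- Every barycentric algebra satisfies the entropic identity: for all elements a, b, c, d and all r, s ∈ [0,1], (a +_r b) +_s (c +_r d) = (a +_s c) +_r (b +_s d). -/
lemma BarycentricAlgebra.comb_zero_s3 {A : Type*} (B : BarycentricAlgebra A) (a b : A) :
    B.comb 0 a b = b := by
  have := B.comb_sc 0 (by constructor <;> norm_num) a b
  simpa [B.comb_one] using this

/-- Every barycentric algebra satisfies the entropic identity. -/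
theorem entropic_identity {A : Type*} (B : BarycentricAlgebra A) (a b c d : A) (r s : ℝ)
    (hr : r ∈ Set.Icc (0 : ℝ) 1) (hs : s ∈ Set.Icc (0 : ℝ) 1) :
    B.comb s (B.comb r a b) (B.comb r c d) = B.comb r (B.comb s a c) (B.comb s b d) := by
  obtain ⟨hr0, hr1⟩ := hr
  obtain ⟨hs0, hs1⟩ := hs
  -- edge cases
  rcases eq_or_lt_of_le hr0 with h | hr0'
  · simp [← h, B.comb_zero_s3]
  rcases eq_or_lt_of_le hr1 with h | hr1'
  · simp [h, B.comb_one]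
  rcases eq_or_lt_of_le hs0 with h | hs0'
  · simp [← h, B.comb_zero_s3]
  rcases eq_or_lt_of_le hs1 with h | hs1'
  · simp [h, B.comb_one]
  -- interior case: 0 < r < 1, 0 < s < 1
  have hrs : (0:ℝ) < 1 - r * s := by nlinarith
  have hrs' : (1:ℝ) - r * s ≠ 0 := ne_of_gt hrs
  set t : ℝ := (s - r * s) / (1 - r * s) with ht
  have ht0 : 0 ≤ t := by
    apply div_nonneg _ hrs.le; nlinarith
  have ht1 : t ≤ 1 := by
    rw [div_le_one hrs]; nlinarith
  have htmem : t ∈ Set.Icc (0:ℝ) 1 := ⟨ht0, ht1⟩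
  have hsr' : (1:ℝ) - s * r ≠ 0 := by rw [mul_comm]; exact hrs'
  have h1t : 1 - t = (1 - s) / (1 - r * s) := by
    rw [ht]; field_simp; ring
  have h1t0 : 0 ≤ 1 - t := by linarith
  have h1t1 : 1 - t < 1 := by
    rw [h1t, div_lt_one hrs]; nlinarith
  -- step 1: expand LHS
  rw [B.comb_sa r s hr0 hr1' hs0 hs1' a b (B.comb r c d)]
  -- step 2: rewrite the inner term
  rw [B.comb_sc t htmem b (B.comb r c d)]
  rw [B.comb_sa r (1 - t) hr0 hr1' h1t0 h1t1 c d b]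
  -- step 3: expand RHS
  rw [B.comb_sa s r hs0 hs1' hr0 hr1' a c (B.comb s b d)]
  -- step 4: identify the weights
  have e1 : r * (1 - t) = (r - s * r) / (1 - s * r) := by
    rw [h1t]; field_simp
  have e2 : ((1 - t) - r * (1 - t)) / (1 - r * (1 - t)) = 1 - s := by
    rw [h1t]
    have hd : (1:ℝ) - r * ((1 - s) / (1 - r * s)) = (1 - r) / (1 - r * s) := by
      field_simp; ring
    rw [hd]
    rw [div_eq_iff (ne_of_gt (div_pos (by linarith) hrs))]
    field_simp
  rw [e2, e1, ← B.comb_sc s ⟨hs0, hs1⟩ b d, mul_comm r s]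
end

section
/- Let A be an ordered pointed barycentric algebra, C an ordered cone, and u : A → C a monotone map with u(0) = 0 and u(a +_r b) = r•u(a) + (1−r)•u(b) for all r ∈ [0,1]. Assume: (1) whenever u(a) ≤ u(b) there exists r with 0 < r ≤ 1 and r·a ≤ r·b; (2) every x ∈ C is of the form r•u(a) for some a ∈ A and some real r ≥ 1. Then for every ordered cone D and every monotone map h : A → D satisfying h(r·a) = r•h(a) for all r ∈ [0,1] and a ∈ A, there exists a unique monotone map h̃ : C → D satisfying h̃(r•x) = r•h̃(x) for all r ∈ ℝ≥0 and x ∈ C and h̃ ∘ u = h. Moreover, for two such maps h, g : A → D with extensions h̃, g̃, one has h̃ ≤ g̃ pointwise if and only if h ≤ g pointwise. -/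
open scoped NNReal

/-- Universality of a monotone linear map from an ordered pointed barycentric algebra into
an ordered cone satisfying the two characteristic properties: unique monotone homogeneous
extensions exist, and the extension order agrees with the order of the original maps. -/
theorem ordered_cone_universal_extension {A : Type*} [PartialOrder A]
    (B : PointedBarycentricAlgebra A)
    (hmonoA : ∀ r : ℝ, r ∈ Set.Icc (0 : ℝ) 1 → ∀ a a' b : A, a ≤ a' →
      B.comb r a b ≤ B.comb r a' b)
    {C : Type*} [AddCommMonoid C] [Module ℝ≥0 C] [PartialOrder C]
    (haddC : ∀ x y z : C, x ≤ y → x + z ≤ y + z)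
    (hsmulC : ∀ (r : ℝ≥0) (x y : C), x ≤ y → r • x ≤ r • y)
    (u : A → C) (hu_mono : Monotone u) (hu_zero : u B.pt = 0)
    (hu_lin : ∀ r : ℝ, r ∈ Set.Icc (0 : ℝ) 1 → ∀ a b : A,
      u (B.comb r a b) = Real.toNNReal r • u a + Real.toNNReal (1 - r) • u b)
    (h1 : ∀ a b : A, u a ≤ u b →
      ∃ r : ℝ, 0 < r ∧ r ≤ 1 ∧ B.comb r a B.pt ≤ B.comb r b B.pt)
    (h2 : ∀ x : C, ∃ (a : A) (r : ℝ), 1 ≤ r ∧ x = Real.toNNReal r • u a)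
    {D : Type*} [AddCommMonoid D] [Module ℝ≥0 D] [PartialOrder D]
    (haddD : ∀ x y z : D, x ≤ y → x + z ≤ y + z)
    (hsmulD : ∀ (r : ℝ≥0) (x y : D), x ≤ y → r • x ≤ r • y) :
    (∀ h : A → D, Monotone h →
      (∀ r : ℝ, r ∈ Set.Icc (0 : ℝ) 1 → ∀ a : A,
        h (B.comb r a B.pt) = Real.toNNReal r • h a) →
      ∃! ht : C → D, Monotone ht ∧ (∀ (r : ℝ≥0) (x : C), ht (r • x) = r • ht x) ∧
        ∀ a : A, ht (u a) = h a) ∧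
    (∀ h g : A → D,
      Monotone h →
      (∀ r : ℝ, r ∈ Set.Icc (0 : ℝ) 1 → ∀ a : A,
        h (B.comb r a B.pt) = Real.toNNReal r • h a) →
      Monotone g →
      (∀ r : ℝ, r ∈ Set.Icc (0 : ℝ) 1 → ∀ a : A,
        g (B.comb r a B.pt) = Real.toNNReal r • g a) →
      ∀ ht gt : C → D,
        (Monotone ht ∧ (∀ (r : ℝ≥0) (x : C), ht (r • x) = r • ht x) ∧
          ∀ a : A, ht (u a) = h a) →
        (Monotone gt ∧ (∀ (r : ℝ≥0) (x : C), gt (r • x) = r • gt x) ∧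
          ∀ a : A, gt (u a) = g a) →
        ((∀ x : C, ht x ≤ gt x) ↔ ∀ a : A, h a ≤ g a)) := by
  -- u applied to a scaling
  have hu_scale : ∀ p : ℝ, p ∈ Set.Icc (0:ℝ) 1 → ∀ a : A,
      u (B.comb p a B.pt) = Real.toNNReal p • u a := by
    intro p hp a
    rw [hu_lin p hp, hu_zero, smul_zero, add_zero]
  -- composition of scalings
  have hcomp : ∀ t p : ℝ, t ∈ Set.Icc (0:ℝ) 1 → p ∈ Set.Icc (0:ℝ) 1 → ∀ a : A,
      B.comb t (B.comb p a B.pt) B.pt = B.comb (p * t) a B.pt := by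
    intro t p ht hp a
    rcases eq_or_lt_of_le ht.2 with ht1 | ht1
    · rw [ht1, B.comb_one, mul_one]
    rcases eq_or_lt_of_le hp.2 with hp1 | hp1
    · rw [hp1, B.comb_one, one_mul]
    rw [B.comb_sa p t hp.1 hp1 ht.1 ht1 a B.pt B.pt]
    congr 1
    apply B.comb_same
    constructor
    · apply div_nonneg
      · nlinarith [hp.1, hp.2, ht.1, ht.2]
      · nlinarith [hp.1, hp.2, ht.1, ht.2]
    · rw [div_le_one (by nlinarith [hp.1, hp.2, ht.1, ht.2])]
      nlinarith [hp.1, hp.2, ht.1, ht.2]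
  -- the key comparison lemma
  have key : ∀ h : A → D, Monotone h →
      (∀ r : ℝ, r ∈ Set.Icc (0 : ℝ) 1 → ∀ a : A,
        h (B.comb r a B.pt) = Real.toNNReal r • h a) →
      ∀ (p q : ℝ≥0) (a b : A), p • u a ≤ q • u b → p • h a ≤ q • h b := by
    intro h hmono hhom p q a b hle
    set M : ℝ≥0 := p + q + 1 with hM
    have hMpos : (0:ℝ≥0) < M := lt_of_lt_of_le zero_lt_one le_add_self
    have hMne : M ≠ 0 := hMpos.ne'
    set rp : ℝ≥0 := p / M with hrp
    set rq : ℝ≥0 := q / M with hrq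
    have hrpI : ((rp : ℝ)) ∈ Set.Icc (0:ℝ) 1 := by
      constructor
      · exact rp.coe_nonneg
      · have : rp ≤ 1 := by
          rw [hrp, div_le_one (hMpos)]
          calc p ≤ p + (q + 1) := le_self_add
          _ = M := by rw [hM]; ring
        exact_mod_cast this
    have hrqI : ((rq : ℝ)) ∈ Set.Icc (0:ℝ) 1 := by
      constructor
      · exact rq.coe_nonneg
      · have : rq ≤ 1 := by
          rw [hrq, div_le_one (hMpos)]
          calc q ≤ q + (p + 1) := le_self_add
          _ = M := by rw [hM]; ring
        exact_mod_cast this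
    have hule : u (B.comb (rp:ℝ) a B.pt) ≤ u (B.comb (rq:ℝ) b B.pt) := by
      rw [hu_scale _ hrpI, hu_scale _ hrqI, Real.toNNReal_coe, Real.toNNReal_coe,
        hrp, hrq, div_eq_mul_inv, div_eq_mul_inv, mul_comm p, mul_comm q,
        mul_smul, mul_smul]
      exact hsmulC _ _ _ hle
    obtain ⟨t, ht0, ht1, hineq⟩ := h1 _ _ hule
    have htI : t ∈ Set.Icc (0:ℝ) 1 := ⟨le_of_lt ht0, ht1⟩
    rw [hcomp t (rp:ℝ) htI hrpI a, hcomp t (rq:ℝ) htI hrqI b] at hineq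
    have hIrp : (rp:ℝ) * t ∈ Set.Icc (0:ℝ) 1 := by
      constructor
      · exact mul_nonneg hrpI.1 htI.1
      · calc (rp:ℝ) * t ≤ 1 * 1 := by
              apply mul_le_mul hrpI.2 htI.2 htI.1 zero_le_one
        _ = 1 := one_mul 1
    have hIrq : (rq:ℝ) * t ∈ Set.Icc (0:ℝ) 1 := by
      constructor
      · exact mul_nonneg hrqI.1 htI.1
      · calc (rq:ℝ) * t ≤ 1 * 1 := by
              apply mul_le_mul hrqI.2 htI.2 htI.1 zero_le_one
        _ = 1 := one_mul 1
    have hmle := hmono hineq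
    rw [hhom _ hIrp, hhom _ hIrq] at hmle
    rw [Real.toNNReal_mul rp.coe_nonneg, Real.toNNReal_mul rq.coe_nonneg,
      Real.toNNReal_coe, Real.toNNReal_coe] at hmle
    set s : ℝ≥0 := Real.toNNReal t with hs
    have hsne : s ≠ 0 := (Real.toNNReal_pos.mpr ht0).ne'
    have hfinal := hsmulD (M * s⁻¹) _ _ hmle
    rw [smul_smul, smul_smul] at hfinal
    have e1 : M * s⁻¹ * (rp * s) = p := by
      rw [hrp]
      field_simp
    have e2 : M * s⁻¹ * (rq * s) = q := by
      rw [hrq]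
      field_simp
    rwa [e1, e2] at hfinal
  -- the key equality lemma
  have keyEq : ∀ h : A → D, Monotone h →
      (∀ r : ℝ, r ∈ Set.Icc (0 : ℝ) 1 → ∀ a : A,
        h (B.comb r a B.pt) = Real.toNNReal r • h a) →
      ∀ (p q : ℝ≥0) (a b : A), p • u a = q • u b → p • h a = q • h b := by
    intro h hmono hhom p q a b heq
    exact le_antisymm (key h hmono hhom p q a b heq.le)
      (key h hmono hhom q p b a heq.ge)
  -- choice of representations
  choose f rr hrr1 hfr using h2
  constructor
  · -- existence and uniqueness of extension
    intro h hmono hhom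
    refine ⟨fun x => Real.toNNReal (rr x) • h (f x), ⟨?_, ?_, ?_⟩, ?_⟩
    · -- monotone
      intro x y hxy
      apply key h hmono hhom
      rw [← hfr x, ← hfr y]
      exact hxy
    · -- homogeneous
      intro c x
      rw [smul_smul]
      apply keyEq h hmono hhom
      rw [mul_smul, ← hfr x, ← hfr (c • x)]
    · -- commutes with u
      intro a
      have : Real.toNNReal (rr (u a)) • u (f (u a)) = (1 : ℝ≥0) • u a := by
        rw [one_smul, ← hfr (u a)]
      have := keyEq h hmono hhom _ _ _ _ this
      rwa [one_smul] at this
    · -- uniqueness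
      intro g ⟨gmono, ghom, gcomm⟩
      funext x
      calc g x = g (Real.toNNReal (rr x) • u (f x)) := by rw [← hfr x]
      _ = Real.toNNReal (rr x) • g (u (f x)) := ghom _ _
      _ = Real.toNNReal (rr x) • h (f x) := by rw [gcomm]
  · -- order comparison
    intro h g hmono hhom gmono ghom ht gt ⟨htm, hth, htc⟩ ⟨gtm, gth, gtc⟩
    constructor
    · intro hle a
      have := hle (u a)
      rwa [htc, gtc] at this
    · intro hle x
      have e1 : ht x = Real.toNNReal (rr x) • h (f x) := by
        conv_lhs => rw [hfr x]
        rw [hth, htc]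
      have e2 : gt x = Real.toNNReal (rr x) • g (f x) := by
        conv_lhs => rw [hfr x]
        rw [gth, gtc]
      rw [e1, e2]
      exact hsmulD _ _ _ (hle (f x))
end

section
/- Let A be an ordered pointed barycentric algebra. Then the following are equivalent: (i) there exist an ordered cone C and a map e : A → C that is monotone, order-reflecting (e(a) ≤ e(b) implies a ≤ b), and linear (e(0) = 0 and e(a +_r b) = r•e(a) + (1−r)•e(b) for all r ∈ [0,1]); (ii) A satisfies the order cancellation law (OC2): for all a, b ∈ A and all r ∈ (0,1), r·a ≤ r·b implies a ≤ b. -/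
open scoped NNReal

universe u

/-- An ordered cone: an additive commutative monoid with an action of the nonnegative
reals satisfying the module laws, equipped with a partial order compatible with
addition and scalar multiplication. -/
structure OrderedCone : Type (u + 1) where
  carrier : Type u
  add : carrier → carrier → carrier
  zero : carrier
  smul : ℝ≥0 → carrier → carrier
  le : carrier → carrier → Prop
  le_refl : ∀ x, le x x
  le_trans : ∀ x y z, le x y → le y z → le x z
  le_antisymm : ∀ x y, le x y → le y x → x = y
  add_assoc : ∀ x y z, add (add x y) z = add x (add y z)
  add_comm : ∀ x y, add x y = add y x
  zero_add : ∀ x, add zero x = x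
  one_smul : ∀ x, smul 1 x = x
  mul_smul : ∀ r s x, smul (r * s) x = smul r (smul s x)
  smul_add : ∀ r x y, smul r (add x y) = add (smul r x) (smul r y)
  add_smul : ∀ r s x, smul (r + s) x = add (smul r x) (smul s x)
  zero_smul : ∀ x, smul 0 x = zero
  add_le_add : ∀ x y z, le x y → le (add x z) (add y z)
  smul_le_smul : ∀ r x y, le x y → le (smul r x) (smul r y)

namespace OC2Aux
universe v
set_option linter.unusedSectionVars false
variable {A : Type v} [PartialOrder A] (B : PointedBarycentricAlgebra A)

/-- scaling: `sg u a = u·a`. -/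
def sg (u : ℝ) (a : A) : A := B.comb u a B.pt

lemma comb_zero (a b : A) : B.comb 0 a b = b := by
  rw [B.comb_sc 0 (by norm_num)]
  simpa using B.comb_one b a

lemma sg_one (a : A) : sg B 1 a = a := B.comb_one a B.pt

lemma sg_zero (a : A) : sg B 0 a = B.pt := comb_zero B a B.pt

lemma div_mem_Icc {a b : ℝ} (h0 : 0 ≤ a) (h : a ≤ b) : a / b ∈ Set.Icc (0:ℝ) 1 := by
  rcases eq_or_lt_of_le (h0.trans h) with hb | hb
  · have : a = 0 := le_antisymm (hb ▸ h) h0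
    simp [this]
  · exact ⟨div_nonneg h0 hb.le, (div_le_one hb).mpr h⟩

lemma sg_mul {u v : ℝ} (hu : u ∈ Set.Icc (0:ℝ) 1) (hv : v ∈ Set.Icc (0:ℝ) 1) (a : A) :
    sg B u (sg B v a) = sg B (v * u) a := by
  obtain ⟨hu0, hu1⟩ := hu
  obtain ⟨hv0, hv1⟩ := hv
  rcases eq_or_lt_of_le hv1 with hv1' | hv1'
  · rw [hv1']; simp [sg_one]
  rcases eq_or_lt_of_le hu1 with hu1' | hu1'
  · rw [hu1']; simp [sg_one]
  unfold sg
  rw [B.comb_sa v u hv0 hv1' hu0 hu1']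
  rw [B.comb_same _ ?mem]
  case mem =>
    have h1 : 0 < 1 - v * u := by nlinarith
    exact ⟨div_nonneg (by nlinarith) h1.le, (div_le_one h1).mpr (by nlinarith)⟩

/-- L1: scaled representative of a sum. -/
lemma sg_padd {r s T : ℝ} (hr : 0 ≤ r) (hs : 0 ≤ s) (hT : r + s ≤ T) (hT0 : 0 < T)
    (a b : A) :
    sg B ((r + s) / T) (B.comb (r / (r + s)) a b)
      = B.comb (r / T) a (sg B (s / (T - r)) b) := by
  rcases eq_or_lt_of_le hs with hs0 | hs0
  · -- s = 0
    rcases eq_or_lt_of_le hr with hr0 | hr0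
    · simp [← hs0, ← hr0, sg_zero, comb_zero]
    · rw [← hs0]
      rw [add_zero, div_self (ne_of_gt hr0), B.comb_one, zero_div, sg_zero]
      unfold sg
      rfl
  rcases eq_or_lt_of_le hr with hr0 | hr0
  · -- r = 0
    rw [← hr0]
    simp [comb_zero, sg]
  -- 0 < r, 0 < s
  rcases eq_or_lt_of_le hT with hT' | hT'
  · -- r + s = T
    have hTr : T - r = s := by linarith
    rw [hT', div_self (ne_of_gt hT0), sg_one, hTr, div_self (ne_of_gt hs0), sg_one]
  · -- r + s < T
    have hrs : 0 < r + s := by linarith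
    have hP1 : r / (r + s) < 1 := (div_lt_one hrs).mpr (by linarith)
    have hR1 : (r + s) / T < 1 := (div_lt_one hT0).mpr hT'
    unfold sg
    rw [B.comb_sa _ _ (div_nonneg hr hrs.le) hP1 (div_nonneg hrs.le hT0.le) hR1]
    have e1 : r / (r + s) * ((r + s) / T) = r / T := by
      field_simp
    have hTr : (0:ℝ) < T - r := by linarith
    have e2 : ((r + s) / T - r / T) / (1 - r / T) = s / (T - r) := by
      have h1 : (r + s) / T - r / T = s / T := by ring
      have h2 : 1 - r / T = (T - r) / T := by field_simp
      rw [h1, h2, div_div_div_cancel_right₀ (ne_of_gt hT0)]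
    rw [e1, e2]

/-- L2: absorbing a scaling into a combination. -/
lemma comb_sg_left {r t s : ℝ} (hr : 0 ≤ r) (hrt : r ≤ t) (ht : 0 < t) (hs : 0 ≤ s)
    (a b : A) :
    B.comb (t / (t + s)) (sg B (r / t) a) b
      = B.comb (r / (t + s)) a (sg B (s / (t + s - r)) b) := by
  rcases eq_or_lt_of_le hs with hs0 | hs0
  · rw [← hs0, add_zero, div_self (ne_of_gt ht), B.comb_one, zero_div, sg_zero]
    rfl
  rcases eq_or_lt_of_le hrt with hrt' | hrt'
  · -- r = t
    rw [hrt', div_self (ne_of_gt ht), sg_one]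
    have : s / (t + s - t) = 1 := by
      rw [add_sub_cancel_left, div_self (ne_of_gt hs0)]
    rw [this, sg_one]
  · -- r < t, 0 < s
    have hts : 0 < t + s := by linarith
    have hP1 : r / t < 1 := (div_lt_one ht).mpr hrt'
    have hR1 : t / (t + s) < 1 := (div_lt_one hts).mpr (by linarith)
    unfold sg
    rw [B.comb_sa _ _ (div_nonneg hr ht.le) hP1 (div_nonneg ht.le hts.le) hR1]
    have e1 : r / t * (t / (t + s)) = r / (t + s) := by field_simp
    have htsr : 0 < t + s - r := by linarith
    have e2 : (t / (t + s) - r / (t + s)) / (1 - r / (t + s))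
        = (t - r) / (t + s - r) := by
      have h1 : t / (t + s) - r / (t + s) = (t - r) / (t + s) := by ring
      have h2 : 1 - r / (t + s) = (t + s - r) / (t + s) := by field_simp
      rw [h1, h2, div_div_div_cancel_right₀ (ne_of_gt hts)]
    rw [e1, e2]
    have hmem : (t - r) / (t + s - r) ∈ Set.Icc (0:ℝ) 1 :=
      div_mem_Icc (by linarith) (by linarith)
    rw [B.comb_sc _ hmem]
    have : 1 - (t - r) / (t + s - r) = s / (t + s - r) := by
      field_simp
      ring
    rw [this]

end OC2Aux

namespace OC2Aux
variable {A : Type v} [PartialOrder A] (B : PointedBarycentricAlgebra A)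

lemma div_mem_Icc' {r t : ℝ≥0} (h : r ≤ t) (ht : 0 < t) : ((r:ℝ)/(t:ℝ)) ∈ Set.Icc (0:ℝ) 1 :=
  div_mem_Icc r.coe_nonneg (by exact_mod_cast h)

/-- The preorder on formal pairs `(weight, point)`. -/
def Rel (x y : ℝ≥0 × A) : Prop :=
  ∃ t : ℝ≥0, x.1 ≤ t ∧ y.1 ≤ t ∧ 0 < t ∧
    sg B ((x.1 : ℝ)/(t : ℝ)) x.2 ≤ sg B ((y.1 : ℝ)/(t : ℝ)) y.2

variable (hmono : ∀ r : ℝ, r ∈ Set.Icc (0 : ℝ) 1 → ∀ a a' b : A, a ≤ a' →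
      B.comb r a b ≤ B.comb r a' b)
variable (hoc : ∀ a b : A, ∀ r : ℝ, 0 < r → r < 1 →
      B.comb r a B.pt ≤ B.comb r b B.pt → a ≤ b)

include hmono in
lemma sg_le_sg {u : ℝ} (hu : u ∈ Set.Icc (0:ℝ) 1) {a b : A} (h : a ≤ b) :
    sg B u a ≤ sg B u b := hmono u hu a b B.pt h

include hoc in
lemma le_of_sg_le_sg {u : ℝ} (hu0 : 0 < u) (hu1 : u ≤ 1) {a b : A}
    (h : sg B u a ≤ sg B u b) : a ≤ b := by
  rcases eq_or_lt_of_le hu1 with h1 | h1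
  · rwa [h1, sg_one, sg_one] at h
  · exact hoc a b u hu0 h1 h

include hmono hoc in
/-- Scale-independence of the relation: key use of OC2. -/
lemma rel_at {x y : ℝ≥0 × A} (h : Rel B x y) :
    ∀ t : ℝ≥0, x.1 ≤ t → y.1 ≤ t → 0 < t →
      sg B ((x.1 : ℝ)/(t : ℝ)) x.2 ≤ sg B ((y.1 : ℝ)/(t : ℝ)) y.2 := by
  obtain ⟨t0, hx0, hy0, ht0, hle⟩ := h
  intro t hxt hyt ht
  have ht0' : (0:ℝ) < (t0:ℝ) := by exact_mod_cast ht0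
  have ht' : (0:ℝ) < (t:ℝ) := by exact_mod_cast ht
  rcases le_total t0 t with hc | hc
  · -- go up in scale
    have key : ∀ z : ℝ≥0, ∀ c : A, z ≤ t0 →
        sg B ((z:ℝ)/(t:ℝ)) c = sg B ((t0:ℝ)/(t:ℝ)) (sg B ((z:ℝ)/(t0:ℝ)) c) := by
      intro z c hz
      rw [sg_mul B (div_mem_Icc' hc ht) (div_mem_Icc' hz ht0)]
      congr 1
      field_simp
    rw [key x.1 x.2 hx0, key y.1 y.2 hy0]
    exact sg_le_sg B hmono (div_mem_Icc' hc ht) hle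
  · -- go down in scale, using OC2
    have hc' : (t:ℝ) ≤ (t0:ℝ) := by exact_mod_cast hc
    have key : ∀ z : ℝ≥0, ∀ c : A, z ≤ t →
        sg B ((z:ℝ)/(t0:ℝ)) c = sg B ((t:ℝ)/(t0:ℝ)) (sg B ((z:ℝ)/(t:ℝ)) c) := by
      intro z c hz
      rw [sg_mul B (div_mem_Icc' hc ht0) (div_mem_Icc' hz ht)]
      congr 1
      field_simp
    rw [key x.1 x.2 hxt, key y.1 y.2 hyt] at hle
    exact le_of_sg_le_sg B hoc (by positivity) ((div_le_one ht0').mpr hc') hle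

lemma rel_refl (x : ℝ≥0 × A) : Rel B x x :=
  ⟨x.1 + 1, le_add_of_nonneg_right zero_le_one, le_add_of_nonneg_right zero_le_one,
    by positivity, le_rfl⟩

include hmono hoc in
lemma rel_trans {x y z : ℝ≥0 × A} (h1 : Rel B x y) (h2 : Rel B y z) : Rel B x z := by
  set t := x.1 ⊔ y.1 ⊔ z.1 ⊔ 1
  have hx : x.1 ≤ t := le_sup_of_le_left (le_sup_of_le_left le_sup_left)
  have hy : y.1 ≤ t := le_sup_of_le_left (le_sup_of_le_left le_sup_right)
  have hz : z.1 ≤ t := le_sup_of_le_left le_sup_right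
  have hpos : 0 < t := lt_of_lt_of_le zero_lt_one le_sup_right
  exact ⟨t, hx, hz, hpos,
    le_trans (rel_at B hmono hoc h1 t hx hy hpos) (rel_at B hmono hoc h2 t hy hz hpos)⟩

lemma rel_zero {x y : ℝ≥0 × A} (hx : x.1 = 0) (hy : y.1 = 0) : Rel B x y := by
  refine ⟨1, by simp [hx], by simp [hy], zero_lt_one, ?_⟩
  simp [hx, hy, sg_zero]

/-- pair-level addition -/
noncomputable def padd (x y : ℝ≥0 × A) : ℝ≥0 × A :=
  (x.1 + y.1, B.comb ((x.1 : ℝ)/((x.1 : ℝ) + (y.1 : ℝ))) x.2 y.2)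

/-- pair-level scalar multiplication -/
def psmul (c : ℝ≥0) (x : ℝ≥0 × A) : ℝ≥0 × A := (c * x.1, x.2)

def pequiv (x y : ℝ≥0 × A) : Prop := Rel B x y ∧ Rel B y x

lemma pequiv_of_eq {x y : ℝ≥0 × A} (h1 : x.1 = y.1) (h2 : x.2 = y.2 ∨ x.1 = 0) :
    pequiv B x y := by
  rcases h2 with h2 | h2
  · have : x = y := Prod.ext h1 h2
    rw [this]; exact ⟨rel_refl B y, rel_refl B y⟩
  · exact ⟨rel_zero B h2 (h1 ▸ h2), rel_zero B (h1 ▸ h2) h2⟩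

lemma padd_comm (x y : ℝ≥0 × A) : pequiv B (padd B x y) (padd B y x) := by
  rcases eq_or_lt_of_le (zero_le : (0:ℝ≥0) ≤ x.1 + y.1) with h0 | h0
  · exact pequiv_of_eq B (add_comm _ _) (Or.inr h0.symm)
  · refine pequiv_of_eq B (add_comm _ _) (Or.inl ?_)
    have hw : (0:ℝ) < (x.1:ℝ) + (y.1:ℝ) := by exact_mod_cast h0
    have hyx : (y.1:ℝ) + (x.1:ℝ) ≠ 0 := by rw [add_comm]; exact hw.ne'
    show B.comb ((x.1 : ℝ)/((x.1 : ℝ) + (y.1 : ℝ))) x.2 y.2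
        = B.comb ((y.1 : ℝ)/((y.1 : ℝ) + (x.1 : ℝ))) y.2 x.2
    rw [B.comb_sc ((y.1 : ℝ)/((y.1 : ℝ) + (x.1 : ℝ)))
        (div_mem_Icc y.1.coe_nonneg (by linarith [x.1.coe_nonneg]))]
    rw [one_sub_div hyx, add_sub_cancel_left, add_comm ((y.1:ℝ)) ((x.1:ℝ))]

include hmono in
lemma rel_padd_left {x x' : ℝ≥0 × A} (y : ℝ≥0 × A) (h : Rel B x x') :
    Rel B (padd B x y) (padd B x' y) := by
  obtain ⟨t, hxt, hx't, ht, hle⟩ := h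
  have ht' : (0:ℝ) < (t:ℝ) := by exact_mod_cast ht
  refine ⟨t + y.1, add_le_add hxt le_rfl, add_le_add hx't le_rfl, by positivity, ?_⟩
  have key : ∀ z : ℝ≥0 × A, z.1 ≤ t →
      sg B (((z.1 + y.1 : ℝ≥0) : ℝ)/(((t + y.1 : ℝ≥0)) : ℝ)) (padd B z y).2
        = B.comb ((t:ℝ)/((t:ℝ) + (y.1:ℝ))) (sg B ((z.1:ℝ)/(t:ℝ)) z.2) y.2 := by
    intro z hz
    have hz' : (z.1:ℝ) ≤ (t:ℝ) := by exact_mod_cast hz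
    show sg B (((z.1:ℝ) + (y.1:ℝ))/((t:ℝ) + (y.1:ℝ)))
        (B.comb ((z.1 : ℝ)/((z.1 : ℝ) + (y.1 : ℝ))) z.2 y.2) = _
    rw [sg_padd B z.1.coe_nonneg y.1.coe_nonneg (by linarith) (by positivity)]
    rw [comb_sg_left B z.1.coe_nonneg hz' ht' y.1.coe_nonneg]
  have k1 := key x hxt
  have k2 := key x' hx't
  show sg B (((padd B x y).1 : ℝ)/_) _ ≤ sg B (((padd B x' y).1 : ℝ)/_) _
  have hfst : (padd B x y).1 = x.1 + y.1 := rfl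
  have hfst' : (padd B x' y).1 = x'.1 + y.1 := rfl
  rw [hfst, hfst', k1, k2]
  exact hmono _ (div_mem_Icc t.coe_nonneg (le_add_of_nonneg_right y.1.coe_nonneg)) _ _ _ hle

end OC2Aux

namespace OC2Aux
variable {A : Type v} [PartialOrder A] (B : PointedBarycentricAlgebra A)
variable (hmono : ∀ r : ℝ, r ∈ Set.Icc (0 : ℝ) 1 → ∀ a a' b : A, a ≤ a' →
      B.comb r a b ≤ B.comb r a' b)
variable (hoc : ∀ a b : A, ∀ r : ℝ, 0 < r → r < 1 →
      B.comb r a B.pt ≤ B.comb r b B.pt → a ≤ b)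

lemma rel_psmul (c : ℝ≥0) {x y : ℝ≥0 × A} (h : Rel B x y) :
    Rel B (psmul c x) (psmul c y) := by
  by_cases hc : c = 0
  · exact rel_zero B (by simp [psmul, hc]) (by simp [psmul, hc])
  · have hc' : ((c:ℝ)) ≠ 0 := by exact_mod_cast hc
    obtain ⟨t, hxt, hyt, ht, hle⟩ := h
    refine ⟨c * t, mul_le_mul_right hxt c, mul_le_mul_right hyt c,
      by positivity, ?_⟩
    have key : ∀ z : ℝ≥0, ((c * z : ℝ≥0) : ℝ) / ((c * t : ℝ≥0) : ℝ) = (z:ℝ)/(t:ℝ) := by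
      intro z
      push_cast
      rw [mul_div_mul_left _ _ hc']
    show sg B (((c * x.1 : ℝ≥0) : ℝ)/_) x.2 ≤ sg B (((c * y.1 : ℝ≥0) : ℝ)/_) y.2
    rw [key x.1, key y.1]
    exact hle

lemma comb_assoc {p q w : ℝ} (hp : 0 ≤ p) (hq : 0 ≤ q) (hw : 0 ≤ w)
    (hT : 0 < p + q + w) (a b c : A) :
    B.comb ((p + q)/(p + q + w)) (B.comb (p/(p + q)) a b) c
      = B.comb (p/(p + q + w)) a (B.comb (q/(q + w)) b c) := by
  rcases eq_or_lt_of_le (by linarith : (0:ℝ) ≤ p + q) with hpq | hpq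
  · -- p = q = 0
    have hp0 : p = 0 := by linarith
    have hq0 : q = 0 := by linarith
    subst hp0; subst hq0
    simp [comb_zero]
  rcases eq_or_lt_of_le (by linarith : (0:ℝ) ≤ q + w) with hqw | hqw
  · -- q = w = 0, p > 0
    have hq0 : q = 0 := by linarith
    have hw0 : w = 0 := by linarith
    subst hq0; subst hw0
    have hp0 : p ≠ 0 := by intro h; rw [h] at hT; simp at hT
    simp [div_self hp0, B.comb_one]
  rcases eq_or_lt_of_le hw with hw0 | hw0
  · -- w = 0, p + q > 0, q > 0
    have hq0 : q ≠ 0 := by intro h; rw [h] at hqw; simp [← hw0] at hqw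
    rw [← hw0]
    simp only [add_zero]
    rw [div_self hpq.ne', B.comb_one, div_self hq0, B.comb_one]
  rcases eq_or_lt_of_le hq with hq0 | hq0
  · -- q = 0, p > 0, w > 0
    have hp0 : p ≠ 0 := by intro h; rw [h, ← hq0] at hpq; simp at hpq
    rw [← hq0]
    simp only [add_zero, zero_add, zero_div]
    rw [div_self hp0, B.comb_one, comb_zero]
  · -- p + q > 0, q > 0, w > 0
    have hP1 : p/(p + q) < 1 := (div_lt_one hpq).mpr (by linarith)
    have hR1 : (p + q)/(p + q + w) < 1 := (div_lt_one hT).mpr (by linarith)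
    rw [B.comb_sa _ _ (div_nonneg hp hpq.le) hP1 (div_nonneg hpq.le hT.le) hR1]
    have e1 : p/(p + q) * ((p + q)/(p + q + w)) = p/(p + q + w) := by field_simp
    have e2 : ((p + q)/(p + q + w) - p/(p + q + w)) / (1 - p/(p + q + w)) = q/(q + w) := by
      have h1 : (p + q)/(p + q + w) - p/(p + q + w) = q/(p + q + w) := by ring
      have h2 : 1 - p/(p + q + w) = (q + w)/(p + q + w) := by
        rw [one_sub_div hT.ne']; congr 1; ring
      rw [h1, h2, div_div_div_cancel_right₀ hT.ne']
    rw [e1, e2]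

lemma padd_assoc (x y z : ℝ≥0 × A) :
    pequiv B (padd B (padd B x y) z) (padd B x (padd B y z)) := by
  apply pequiv_of_eq
  · show x.1 + y.1 + z.1 = x.1 + (y.1 + z.1)
    exact add_assoc _ _ _
  rcases eq_or_lt_of_le (zero_le : (0:ℝ≥0) ≤ x.1 + y.1 + z.1) with h0 | h0
  · exact Or.inr h0.symm
  · left
    have h0' : (0:ℝ) < (x.1:ℝ) + (y.1:ℝ) + (z.1:ℝ) := by exact_mod_cast h0
    show B.comb ((((padd B x y).1 : ℝ≥0) : ℝ)/(((padd B x y).1 : ℝ) + (z.1:ℝ)))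
        (B.comb ((x.1:ℝ)/((x.1:ℝ) + (y.1:ℝ))) x.2 y.2) z.2
      = B.comb ((x.1:ℝ)/((x.1:ℝ) + ((padd B y z).1 : ℝ)))
        x.2 (B.comb ((y.1:ℝ)/((y.1:ℝ) + (z.1:ℝ))) y.2 z.2)
    have hf1 : ((padd B x y).1 : ℝ) = (x.1:ℝ) + (y.1:ℝ) := by
      show ((x.1 + y.1 : ℝ≥0) : ℝ) = _; push_cast; rfl
    have hf2 : ((padd B y z).1 : ℝ) = (y.1:ℝ) + (z.1:ℝ) := by
      show ((y.1 + z.1 : ℝ≥0) : ℝ) = _; push_cast; rfl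
    rw [hf1, hf2]
    have hassoc : (x.1:ℝ) + ((y.1:ℝ) + (z.1:ℝ)) = (x.1:ℝ) + (y.1:ℝ) + (z.1:ℝ) := by ring
    rw [hassoc]
    exact comb_assoc B x.1.coe_nonneg y.1.coe_nonneg z.1.coe_nonneg h0' x.2 y.2 z.2

lemma pequiv_refl (x : ℝ≥0 × A) : pequiv B x x := ⟨rel_refl B x, rel_refl B x⟩

lemma pequiv_symm {x y : ℝ≥0 × A} (h : pequiv B x y) : pequiv B y x := ⟨h.2, h.1⟩

include hmono hoc in
lemma pequiv_trans {x y z : ℝ≥0 × A} (h1 : pequiv B x y) (h2 : pequiv B y z) :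
    pequiv B x z :=
  ⟨rel_trans B hmono hoc h1.1 h2.1, rel_trans B hmono hoc h2.2 h1.2⟩

include hmono in
lemma pequiv_padd_left {x x' : ℝ≥0 × A} (y : ℝ≥0 × A) (h : pequiv B x x') :
    pequiv B (padd B x y) (padd B x' y) :=
  ⟨rel_padd_left B hmono y h.1, rel_padd_left B hmono y h.2⟩

include hmono hoc in
lemma pequiv_padd {x x' y y' : ℝ≥0 × A} (hx : pequiv B x x') (hy : pequiv B y y') :
    pequiv B (padd B x y) (padd B x' y') := by
  refine pequiv_trans B hmono hoc (pequiv_padd_left B hmono y hx) ?_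
  refine pequiv_trans B hmono hoc (padd_comm B x' y) ?_
  refine pequiv_trans B hmono hoc (pequiv_padd_left B hmono x' hy) ?_
  exact padd_comm B y' x'

def psetoid : Setoid (ℝ≥0 × A) :=
  ⟨pequiv B, ⟨pequiv_refl B, pequiv_symm B, pequiv_trans B hmono hoc⟩⟩

lemma pzero_add (x : ℝ≥0 × A) : pequiv B (padd B ((0 : ℝ≥0), B.pt) x) x := by
  apply pequiv_of_eq
  · show 0 + x.1 = x.1; exact zero_add _
  · left
    show B.comb (((0:ℝ≥0):ℝ)/(((0:ℝ≥0):ℝ) + (x.1:ℝ))) B.pt x.2 = x.2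
    simp [comb_zero]

lemma pone_smul (x : ℝ≥0 × A) : pequiv B (psmul 1 x) x :=
  pequiv_of_eq B (one_mul _) (Or.inl rfl)

lemma pmul_smul (c d : ℝ≥0) (x : ℝ≥0 × A) :
    pequiv B (psmul (c * d) x) (psmul c (psmul d x)) :=
  pequiv_of_eq B (mul_assoc _ _ _) (Or.inl rfl)

lemma pzero_smul (x : ℝ≥0 × A) : pequiv B (psmul 0 x) ((0 : ℝ≥0), B.pt) :=
  pequiv_of_eq B (zero_mul _) (Or.inr (zero_mul _))

lemma psmul_add (c : ℝ≥0) (x y : ℝ≥0 × A) :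
    pequiv B (psmul c (padd B x y)) (padd B (psmul c x) (psmul c y)) := by
  apply pequiv_of_eq
  · show c * (x.1 + y.1) = c * x.1 + c * y.1; exact mul_add _ _ _
  by_cases hc : c = 0
  · right; show c * (x.1 + y.1) = 0; simp [hc]
  · left
    have hc' : (c:ℝ) ≠ 0 := by exact_mod_cast hc
    show B.comb ((x.1:ℝ)/((x.1:ℝ) + (y.1:ℝ))) x.2 y.2
      = B.comb (((c * x.1 : ℝ≥0):ℝ)/(((c * x.1 : ℝ≥0):ℝ) + ((c * y.1 : ℝ≥0):ℝ))) x.2 y.2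
    have : ((c * x.1 : ℝ≥0):ℝ)/(((c * x.1 : ℝ≥0):ℝ) + ((c * y.1 : ℝ≥0):ℝ))
        = (x.1:ℝ)/((x.1:ℝ) + (y.1:ℝ)) := by
      push_cast
      rw [← mul_add, mul_div_mul_left _ _ hc']
    rw [this]

lemma padd_smul (c d : ℝ≥0) (x : ℝ≥0 × A) :
    pequiv B (psmul (c + d) x) (padd B (psmul c x) (psmul d x)) := by
  apply pequiv_of_eq
  · show (c + d) * x.1 = c * x.1 + d * x.1; exact add_mul _ _ _
  · left
    show x.2 = B.comb (((c * x.1 : ℝ≥0):ℝ)/(((c * x.1 : ℝ≥0):ℝ) + ((d * x.1 : ℝ≥0):ℝ))) x.2 x.2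
    rw [B.comb_same _ (div_mem_Icc (c * x.1).coe_nonneg
      (le_add_of_nonneg_right (d * x.1).coe_nonneg))]

end OC2Aux

namespace OC2Aux
variable {A : Type v} [PartialOrder A] (B : PointedBarycentricAlgebra A)
variable (hmono : ∀ r : ℝ, r ∈ Set.Icc (0 : ℝ) 1 → ∀ a a' b : A, a ≤ a' →
      B.comb r a b ≤ B.comb r a' b)
variable (hoc : ∀ a b : A, ∀ r : ℝ, 0 < r → r < 1 →
      B.comb r a B.pt ≤ B.comb r b B.pt → a ≤ b)

/-- The cone constructed from an ordered pointed barycentric algebra satisfying OC2. -/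
noncomputable def cone : OrderedCone.{v} where
  carrier := Quotient (psetoid B hmono hoc)
  add := Quotient.map₂ (padd B) (fun _ _ hx _ _ hy => pequiv_padd B hmono hoc hx hy)
  zero := Quotient.mk (psetoid B hmono hoc) ((0 : ℝ≥0), B.pt)
  smul := fun c => Quotient.map (psmul c) (fun _ _ h => ⟨rel_psmul B c h.1, rel_psmul B c h.2⟩)
  le := Quotient.lift₂ (Rel B) (by
    intro a b a' b' ha hb
    apply propext
    constructor
    · intro h
      exact rel_trans B hmono hoc (rel_trans B hmono hoc ha.2 h) hb.1
    · intro h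
      exact rel_trans B hmono hoc (rel_trans B hmono hoc ha.1 h) hb.2)
  le_refl := by rintro ⟨x⟩; exact rel_refl B x
  le_trans := by rintro ⟨x⟩ ⟨y⟩ ⟨z⟩ h1 h2; exact rel_trans B hmono hoc h1 h2
  le_antisymm := by rintro ⟨x⟩ ⟨y⟩ h1 h2; exact Quotient.sound ⟨h1, h2⟩
  add_assoc := by rintro ⟨x⟩ ⟨y⟩ ⟨z⟩; exact Quotient.sound (padd_assoc B x y z)
  add_comm := by rintro ⟨x⟩ ⟨y⟩; exact Quotient.sound (padd_comm B x y)
  zero_add := by rintro ⟨x⟩; exact Quotient.sound (pzero_add B x)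
  one_smul := by rintro ⟨x⟩; exact Quotient.sound (pone_smul B x)
  mul_smul := by rintro c d ⟨x⟩; exact Quotient.sound (pmul_smul B c d x)
  smul_add := by rintro c ⟨x⟩ ⟨y⟩; exact Quotient.sound (psmul_add B c x y)
  add_smul := by rintro c d ⟨x⟩; exact Quotient.sound (padd_smul B c d x)
  zero_smul := by rintro ⟨x⟩; exact Quotient.sound (pzero_smul B x)
  add_le_add := by rintro ⟨x⟩ ⟨y⟩ ⟨z⟩ h; exact rel_padd_left B hmono z h
  smul_le_smul := by rintro c ⟨x⟩ ⟨y⟩ h; exact rel_psmul B c h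

/-- The embedding map. -/
noncomputable def emb (a : A) : (cone B hmono hoc).carrier :=
  Quotient.mk (psetoid B hmono hoc) ((1 : ℝ≥0), a)

include hmono in
lemma rel_one_one {a b : A} (h : a ≤ b) : Rel B ((1 : ℝ≥0), a) ((1 : ℝ≥0), b) := by
  refine ⟨1, le_rfl, le_rfl, zero_lt_one, ?_⟩
  simpa [sg_one] using h

include hmono hoc in
lemma emb_mono {a b : A} (h : a ≤ b) :
    (cone B hmono hoc).le (emb B hmono hoc a) (emb B hmono hoc b) :=
  rel_one_one B hmono h

include hmono hoc in
lemma emb_reflect {a b : A}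
    (h : (cone B hmono hoc).le (emb B hmono hoc a) (emb B hmono hoc b)) : a ≤ b := by
  have h' : Rel B ((1 : ℝ≥0), a) ((1 : ℝ≥0), b) := h
  have := rel_at B hmono hoc h' 1 le_rfl le_rfl zero_lt_one
  simpa [sg_one] using this

include hmono hoc in
lemma emb_zero : emb B hmono hoc B.pt = (cone B hmono hoc).zero := by
  apply Quotient.sound
  constructor
  · exact ⟨1, le_rfl, zero_le_one, zero_lt_one, by simp [sg_one, sg_zero]⟩
  · exact ⟨1, zero_le_one, le_rfl, zero_lt_one, by simp [sg_one, sg_zero]⟩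

include hmono hoc in
lemma emb_linear {r : ℝ} (hr : r ∈ Set.Icc (0:ℝ) 1) (a b : A) :
    emb B hmono hoc (B.comb r a b) =
      (cone B hmono hoc).add
        ((cone B hmono hoc).smul (Real.toNNReal r) (emb B hmono hoc a))
        ((cone B hmono hoc).smul (Real.toNNReal (1 - r)) (emb B hmono hoc b)) := by
  obtain ⟨hr0, hr1⟩ := hr
  set r' := Real.toNNReal r with hr'
  set s' := Real.toNNReal (1 - r) with hs'
  have hcr : ((r' : ℝ≥0) : ℝ) = r := Real.coe_toNNReal r hr0
  have hcs : ((s' : ℝ≥0) : ℝ) = 1 - r := Real.coe_toNNReal _ (by linarith)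
  show Quotient.mk (psetoid B hmono hoc) ((1 : ℝ≥0), B.comb r a b)
    = Quotient.mk (psetoid B hmono hoc) (padd B (psmul r' (1, a)) (psmul s' (1, b)))
  apply congrArg
  have h1 : r' * 1 + s' * 1 = 1 := by
    apply NNReal.coe_injective
    push_cast
    rw [hcr, hcs]; ring
  apply Prod.ext
  · exact h1.symm
  · show B.comb r a b
      = B.comb (((r' * 1 : ℝ≥0):ℝ)/(((r' * 1 : ℝ≥0):ℝ) + ((s' * 1 : ℝ≥0):ℝ))) a b
    have h2 : ((r' * 1 : ℝ≥0):ℝ) = r := by rw [mul_one]; exact hcr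
    have h3 : ((s' * 1 : ℝ≥0):ℝ) = 1 - r := by rw [mul_one]; exact hcs
    rw [h2, h3]
    norm_num

end OC2Aux


/-- An ordered pointed barycentric algebra embeds (by a monotone, order-reflecting, linear
map) into an ordered cone if and only if it satisfies the order cancellation law (OC2). -/
theorem embeddable_iff_oc2 {A : Type u} [PartialOrder A]
    (B : PointedBarycentricAlgebra A)
    (hmono : ∀ r : ℝ, r ∈ Set.Icc (0 : ℝ) 1 → ∀ a a' b : A, a ≤ a' →
      B.comb r a b ≤ B.comb r a' b) :
    (∃ (C : OrderedCone.{u}) (e : A → C.carrier),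
      (∀ a b : A, a ≤ b → C.le (e a) (e b)) ∧
      (∀ a b : A, C.le (e a) (e b) → a ≤ b) ∧
      e B.pt = C.zero ∧
      (∀ r : ℝ, r ∈ Set.Icc (0 : ℝ) 1 → ∀ a b : A,
        e (B.comb r a b) =
          C.add (C.smul (Real.toNNReal r) (e a)) (C.smul (Real.toNNReal (1 - r)) (e b)))) ↔
    (∀ a b : A, ∀ r : ℝ, 0 < r → r < 1 →
      B.comb r a B.pt ≤ B.comb r b B.pt → a ≤ b) := by
  constructor
  · rintro ⟨C, e, hm, hrefl, hz, hl⟩ a b r hr0 hr1 h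
    have csmul_zero : ∀ c : ℝ≥0, C.smul c C.zero = C.zero := by
      intro c
      have h0 : C.smul 0 C.zero = C.zero := C.zero_smul C.zero
      calc C.smul c C.zero = C.smul c (C.smul 0 C.zero) := by rw [h0]
        _ = C.smul (c * 0) C.zero := (C.mul_smul c 0 C.zero).symm
        _ = C.zero := by rw [mul_zero]; exact h0
    have cadd_zero : ∀ x, C.add x C.zero = x := fun x =>
      (C.add_comm x C.zero).trans (C.zero_add x)
    have h1 := hm _ _ h
    rw [hl r ⟨hr0.le, hr1.le⟩ a B.pt, hl r ⟨hr0.le, hr1.le⟩ b B.pt, hz, csmul_zero, cadd_zero, cadd_zero] at h1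
    have hne : Real.toNNReal r ≠ 0 := (Real.toNNReal_pos.mpr hr0).ne'
    have h2 := C.smul_le_smul (Real.toNNReal r)⁻¹ _ _ h1
    rw [← C.mul_smul, ← C.mul_smul, inv_mul_cancel₀ hne, C.one_smul, C.one_smul] at h2
    exact hrefl a b h2
  · intro hoc
    exact ⟨OC2Aux.cone B hmono hoc, OC2Aux.emb B hmono hoc,
      fun a b h => OC2Aux.emb_mono B hmono hoc h,
      fun a b h => OC2Aux.emb_reflect B hmono hoc h,
      OC2Aux.emb_zero B hmono hoc,
      fun r hr a b => OC2Aux.emb_linear B hmono hoc hr a b⟩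
end

section
/- Let A be an ordered pointed barycentric algebra satisfying the order cancellation law (OC2): for all a, b ∈ A and all r ∈ (0,1), r·a ≤ r·b implies a ≤ b. Then the following are equivalent: (i) there exist an ordered cone C and a map e : A → C that is monotone, order-reflecting, linear (e(0) = 0 and e(a +_r b) = r•e(a) + (1−r)•e(b) for all r ∈ [0,1]), and whose image e(A) is a lower set of C; (ii) A satisfies (OC3): for all a, b ∈ A and all r ∈ (0,1), if a ≤ r·b then a = r·a' for some a' ∈ A. -/
open scoped NNReal

universe u

set_option linter.unusedSectionVars false

namespace BAux
variable {A : Type u} [PartialOrder A]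

def sc (B : PointedBarycentricAlgebra A) (t : ℝ) (a : A) : A := B.comb t a B.pt

variable (B : PointedBarycentricAlgebra A)

theorem comb_zero (a b : A) : B.comb 0 a b = b := by
  rw [B.comb_sc 0 (by norm_num) a b]; simpa using B.comb_one b a

theorem sc_one (a : A) : sc B 1 a = a := B.comb_one a B.pt

theorem sc_zero (a : A) : sc B 0 a = B.pt := comb_zero B a B.pt

theorem sc_pt {t : ℝ} (h0 : 0 ≤ t) (h1 : t ≤ 1) : sc B t B.pt = B.pt :=
  B.comb_same t ⟨h0, h1⟩ B.pt

theorem sc_sc {p q : ℝ} (hp0 : 0 ≤ p) (hp1 : p ≤ 1) (hq0 : 0 ≤ q) (hq1 : q ≤ 1) (a : A) :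
    sc B p (sc B q a) = sc B (p * q) a := by
  rcases eq_or_lt_of_le hp1 with h | hp1'
  · subst h; rw [sc_one, one_mul]
  rcases eq_or_lt_of_le hq1 with h | hq1'
  · subst h; rw [sc_one, mul_one]
  have hqp : q * p < 1 := by nlinarith
  unfold sc
  rw [B.comb_sa q p hq0 hq1' hp0 hp1']
  have hr0 : 0 ≤ (p - q * p) / (1 - q * p) := by
    apply div_nonneg <;> nlinarith
  have hr1 : (p - q * p) / (1 - q * p) ≤ 1 := by
    rw [div_le_one (by nlinarith)]; nlinarith
  rw [B.comb_same _ ⟨hr0, hr1⟩, mul_comm]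

theorem sc_mono (hmono : ∀ r : ℝ, r ∈ Set.Icc (0 : ℝ) 1 → ∀ a a' b : A, a ≤ a' →
      B.comb r a b ≤ B.comb r a' b) {t : ℝ} (h0 : 0 ≤ t) (h1 : t ≤ 1) {a b : A}
    (h : a ≤ b) : sc B t a ≤ sc B t b := hmono t ⟨h0, h1⟩ a b B.pt h

theorem sc_cancel_le (hOC2 : ∀ a b : A, ∀ r : ℝ, 0 < r → r < 1 →
      B.comb r a B.pt ≤ B.comb r b B.pt → a ≤ b) {t : ℝ} (h0 : 0 < t) (h1 : t ≤ 1)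
    {a b : A} (h : sc B t a ≤ sc B t b) : a ≤ b := by
  rcases eq_or_lt_of_le h1 with h' | h'
  · subst h'; rwa [sc_one, sc_one] at h
  · exact hOC2 a b t h0 h' h

theorem sc_comb {p t : ℝ} (hp0 : 0 ≤ p) (hp1 : p ≤ 1) (ht0 : 0 ≤ t) (ht1 : t ≤ 1)
    (a b : A) :
    sc B t (B.comb p a b) = B.comb (p * t) a (sc B ((t - p * t) / (1 - p * t)) b) := by
  rcases eq_or_lt_of_le ht1 with h | ht1'
  · subst h
    rcases eq_or_lt_of_le hp1 with h | hp1'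
    · subst h; rw [sc_one, mul_one, B.comb_one, B.comb_one]
    · rw [sc_one, mul_one]
      have : (1 - p) / (1 - p) = 1 := div_self (by linarith)
      rw [this, sc_one]
  rcases eq_or_lt_of_le hp1 with h | hp1'
  · subst h
    rw [B.comb_one, one_mul]
    have : (t - t) / (1 - t) = 0 := by rw [sub_self, zero_div]
    rw [this, sc_zero]; rfl
  · exact B.comb_sa p t hp0 hp1' ht0 ht1' a b B.pt

theorem mix_eq {γ α β : ℝ} (hα : 0 ≤ α) (hβ : 0 ≤ β) (hγ0 : 0 < γ) (hγ1 : γ < 1)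
    (hαγ : α ≤ γ) (hβγ : β ≤ 1 - γ) (a b : A) :
    B.comb γ (sc B (α / γ) a) (sc B (β / (1 - γ)) b) = B.comb α a (sc B (β / (1 - α)) b) := by
  rcases eq_or_lt_of_le hαγ with h | hαγ'
  · subst h
    rw [div_self (ne_of_gt hγ0), sc_one]
  rcases eq_or_lt_of_le hα with h | hα'
  · -- α = 0
    subst h
    rw [zero_div, sc_zero, sub_zero, div_one]
    unfold sc
    rw [B.comb_sc γ ⟨le_of_lt hγ0, le_of_lt hγ1⟩]
    have h1 : 0 ≤ β / (1 - γ) := div_nonneg hβ (by linarith)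
    have h2 : β / (1 - γ) ≤ 1 := by rw [div_le_one (by linarith)]; linarith
    have := sc_sc B (a := b) (p := 1 - γ) (q := β / (1 - γ)) (by linarith) (by linarith) h1 h2
    unfold sc at this
    rw [this]
    have : (1 - γ) * (β / (1 - γ)) = β := by
      rw [mul_div_assoc']; exact mul_div_cancel_left₀ β (by linarith)
    rw [this, comb_zero]
  · -- 0 < α < γ
    have hp0 : 0 ≤ α / γ := div_nonneg hα (le_of_lt hγ0)
    have hp1 : α / γ < 1 := by rw [div_lt_one hγ0]; exact hαγ'
    unfold sc
    rw [B.comb_sa (α / γ) γ hp0 hp1 (le_of_lt hγ0) hγ1]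
    have e1 : α / γ * γ = α := div_mul_cancel₀ α (ne_of_gt hγ0)
    rw [e1]
    have hd : (γ - α) / (1 - α) ∈ Set.Icc (0:ℝ) 1 := by
      constructor
      · apply div_nonneg <;> linarith
      · rw [div_le_one (by linarith)]; linarith
    rw [B.comb_sc _ hd]
    have e2 : 1 - (γ - α) / (1 - α) = (1 - γ) / (1 - α) := by
      rw [eq_div_iff (by linarith : (1:ℝ) - α ≠ 0), sub_mul,
        div_mul_cancel₀ _ (by linarith : (1:ℝ) - α ≠ 0)]
      ring
    rw [e2]
    have h1 : 0 ≤ β / (1 - γ) := div_nonneg hβ (by linarith)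
    have h2 : β / (1 - γ) ≤ 1 := by rw [div_le_one (by linarith)]; linarith
    have h3 : 0 ≤ (1 - γ) / (1 - α) := by apply div_nonneg <;> linarith
    have h4 : (1 - γ) / (1 - α) ≤ 1 := by rw [div_le_one (by linarith)]; linarith
    have := sc_sc B (a := b) h3 h4 h1 h2
    unfold sc at this
    rw [this]
    have : (1 - γ) / (1 - α) * (β / (1 - γ)) = β / (1 - α) := by
      rw [div_mul_div_comm, mul_comm (1-γ) β,
        mul_div_mul_right _ _ (by linarith : (1:ℝ) - γ ≠ 0)]
    rw [this]

theorem mix_mono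
    (hmono : ∀ r : ℝ, r ∈ Set.Icc (0 : ℝ) 1 → ∀ a a' b : A, a ≤ a' →
      B.comb r a b ≤ B.comb r a' b)
    (hOC2 : ∀ a b : A, ∀ r : ℝ, 0 < r → r < 1 →
      B.comb r a B.pt ≤ B.comb r b B.pt → a ≤ b)
    {α α' β : ℝ} (hα : 0 ≤ α) (hα1 : α < 1) (hα' : 0 ≤ α') (hα1' : α' < 1)
    (hβ : 0 ≤ β) (hs : α + β ≤ 1) (hs' : α' + β ≤ 1) {a a' : A} (b : A)
    (h : sc B α a ≤ sc B α' a') :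
    B.comb α a (sc B (β / (1 - α)) b) ≤ B.comb α' a' (sc B (β / (1 - α')) b) := by
  set γ := max α α' with hγdef
  rcases le_or_gt γ 0 with hγ | hγ
  · have hA : α = 0 := le_antisymm (le_trans (le_max_left α α') hγ) hα
    have hA' : α' = 0 := le_antisymm (le_trans (le_max_right α α') hγ) hα'
    rw [hA, hA', comb_zero, comb_zero]
  · have hγ1 : γ < 1 := max_lt hα1 hα1'
    have hβγ : β ≤ 1 - γ := by
      have : γ ≤ 1 - β := max_le (by linarith) (by linarith)
      linarith
    rw [← mix_eq B hα hβ hγ hγ1 (le_max_left _ _) hβγ a b,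
        ← mix_eq B hα' hβ hγ hγ1 (le_max_right _ _) hβγ a' b]
    apply hmono γ ⟨le_of_lt hγ, le_of_lt hγ1⟩
    apply sc_cancel_le B hOC2 hγ (le_of_lt hγ1)
    have e1 : sc B γ (sc B (α / γ) a) = sc B α a := by
      rw [sc_sc B (le_of_lt hγ) (le_of_lt hγ1) (div_nonneg hα (le_of_lt hγ))
        (by rw [div_le_one hγ]; exact le_max_left _ _), mul_comm,
        div_mul_cancel₀ α (ne_of_gt hγ)]
    have e2 : sc B γ (sc B (α' / γ) a') = sc B α' a' := by
      rw [sc_sc B (le_of_lt hγ) (le_of_lt hγ1) (div_nonneg hα' (le_of_lt hγ))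
        (by rw [div_le_one hγ]; exact le_max_right _ _), mul_comm,
        div_mul_cancel₀ α' (ne_of_gt hγ)]
    rw [e1, e2]
    exact h

theorem sc_shrink_le
    (hmono : ∀ r : ℝ, r ∈ Set.Icc (0 : ℝ) 1 → ∀ a a' b : A, a ≤ a' →
      B.comb r a b ≤ B.comb r a' b)
    {t u r s : ℝ} (hr : 0 ≤ r) (hs : 0 ≤ s) (ht : 0 < t)
    (htr : t * r ≤ 1) (hts : t * s ≤ 1) (hu0 : 0 < u) (hut : u ≤ t)
    {a b : A} (h : sc B (t * r) a ≤ sc B (t * s) b) :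
    sc B (u * r) a ≤ sc B (u * s) b := by
  have hq0 : 0 ≤ u / t := by positivity
  have hq1 : u / t ≤ 1 := by rw [div_le_one ht]; exact hut
  have e1 : sc B (u * r) a = sc B (u / t) (sc B (t * r) a) := by
    rw [sc_sc B hq0 hq1 (by positivity) htr]
    congr 1
    field_simp
  have e2 : sc B (u * s) b = sc B (u / t) (sc B (t * s) b) := by
    rw [sc_sc B hq0 hq1 (by positivity) hts]
    congr 1
    field_simp
  rw [e1, e2]
  exact sc_mono B hmono hq0 hq1 h

theorem sc_shrink_eq
    {t u r s : ℝ} (hr : 0 ≤ r) (hs : 0 ≤ s) (ht : 0 < t)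
    (htr : t * r ≤ 1) (hts : t * s ≤ 1) (hu0 : 0 < u) (hut : u ≤ t)
    {a b : A} (h : sc B (t * r) a = sc B (t * s) b) :
    sc B (u * r) a = sc B (u * s) b := by
  have hq0 : 0 ≤ u / t := by positivity
  have hq1 : u / t ≤ 1 := by rw [div_le_one ht]; exact hut
  have e1 : sc B (u * r) a = sc B (u / t) (sc B (t * r) a) := by
    rw [sc_sc B hq0 hq1 (by positivity) htr]
    congr 1
    field_simp
  have e2 : sc B (u * s) b = sc B (u / t) (sc B (t * s) b) := by
    rw [sc_sc B hq0 hq1 (by positivity) hts]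
    congr 1
    field_simp
  rw [e1, e2, h]

/-- the relation identifying `(a, r)` with `(b, s)` when they denote the same cone point -/
def Rel (B : PointedBarycentricAlgebra A) (x y : A × ℝ≥0) : Prop :=
  ∃ t : ℝ, 0 < t ∧ t * (x.2 : ℝ) ≤ 1 ∧ t * (y.2 : ℝ) ≤ 1 ∧
    sc B (t * (x.2 : ℝ)) x.1 = sc B (t * (y.2 : ℝ)) y.1

/-- the order on pairs -/
def Le (B : PointedBarycentricAlgebra A) (x y : A × ℝ≥0) : Prop :=
  ∃ t : ℝ, 0 < t ∧ t * (x.2 : ℝ) ≤ 1 ∧ t * (y.2 : ℝ) ≤ 1 ∧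
    sc B (t * (x.2 : ℝ)) x.1 ≤ sc B (t * (y.2 : ℝ)) y.1

theorem rel_refl (x : A × ℝ≥0) : Rel B x x := by
  refine ⟨((x.2 : ℝ) + 1)⁻¹, by positivity, ?_, ?_, rfl⟩ <;>
  · rw [inv_mul_le_iff₀ (by positivity)]
    have := x.2.coe_nonneg
    linarith

theorem le_refl_raw (x : A × ℝ≥0) : Le B x x := by
  obtain ⟨t, h1, h2, h3, h4⟩ := rel_refl B x
  exact ⟨t, h1, h2, h3, le_of_eq h4⟩

theorem rel_symm {x y : A × ℝ≥0} (h : Rel B x y) : Rel B y x := by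
  obtain ⟨t, h1, h2, h3, h4⟩ := h
  exact ⟨t, h1, h3, h2, h4.symm⟩

theorem rel_trans {x y z : A × ℝ≥0} (hxy : Rel B x y) (hyz : Rel B y z) : Rel B x z := by
  obtain ⟨t1, ht1, hx1, hy1, he1⟩ := hxy
  obtain ⟨t2, ht2, hy2, hz2, he2⟩ := hyz
  have hu : 0 < min t1 t2 := lt_min ht1 ht2
  refine ⟨min t1 t2, hu, ?_, ?_, ?_⟩
  · calc min t1 t2 * (x.2:ℝ) ≤ t1 * (x.2:ℝ) :=
        mul_le_mul_of_nonneg_right (min_le_left _ _) x.2.coe_nonneg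
    _ ≤ 1 := hx1
  · calc min t1 t2 * (z.2:ℝ) ≤ t2 * (z.2:ℝ) :=
        mul_le_mul_of_nonneg_right (min_le_right _ _) z.2.coe_nonneg
    _ ≤ 1 := hz2
  · have e1 := sc_shrink_eq B x.2.coe_nonneg y.2.coe_nonneg ht1 hx1 hy1 hu
      (min_le_left _ _) he1
    have e2 := sc_shrink_eq B y.2.coe_nonneg z.2.coe_nonneg ht2 hy2 hz2 hu
      (min_le_right _ _) he2
    rw [e1, e2]

theorem le_trans_raw
    (hmono : ∀ r : ℝ, r ∈ Set.Icc (0 : ℝ) 1 → ∀ a a' b : A, a ≤ a' →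
      B.comb r a b ≤ B.comb r a' b)
    {x y z : A × ℝ≥0} (hxy : Le B x y) (hyz : Le B y z) : Le B x z := by
  obtain ⟨t1, ht1, hx1, hy1, he1⟩ := hxy
  obtain ⟨t2, ht2, hy2, hz2, he2⟩ := hyz
  have hu : 0 < min t1 t2 := lt_min ht1 ht2
  refine ⟨min t1 t2, hu, ?_, ?_, ?_⟩
  · calc min t1 t2 * (x.2:ℝ) ≤ t1 * (x.2:ℝ) :=
        mul_le_mul_of_nonneg_right (min_le_left _ _) x.2.coe_nonneg
    _ ≤ 1 := hx1
  · calc min t1 t2 * (z.2:ℝ) ≤ t2 * (z.2:ℝ) :=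
        mul_le_mul_of_nonneg_right (min_le_right _ _) z.2.coe_nonneg
    _ ≤ 1 := hz2
  · have e1 := sc_shrink_le B hmono x.2.coe_nonneg y.2.coe_nonneg ht1 hx1 hy1 hu
      (min_le_left _ _) he1
    have e2 := sc_shrink_le B hmono y.2.coe_nonneg z.2.coe_nonneg ht2 hy2 hz2 hu
      (min_le_right _ _) he2
    exact le_trans e1 e2

theorem le_antisymm_raw
    (hmono : ∀ r : ℝ, r ∈ Set.Icc (0 : ℝ) 1 → ∀ a a' b : A, a ≤ a' →
      B.comb r a b ≤ B.comb r a' b)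
    {x y : A × ℝ≥0} (hxy : Le B x y) (hyx : Le B y x) : Rel B x y := by
  obtain ⟨t1, ht1, hx1, hy1, he1⟩ := hxy
  obtain ⟨t2, ht2, hy2, hx2, he2⟩ := hyx
  have hu : 0 < min t1 t2 := lt_min ht1 ht2
  refine ⟨min t1 t2, hu, ?_, ?_, ?_⟩
  · calc min t1 t2 * (x.2:ℝ) ≤ t1 * (x.2:ℝ) :=
        mul_le_mul_of_nonneg_right (min_le_left _ _) x.2.coe_nonneg
    _ ≤ 1 := hx1
  · calc min t1 t2 * (y.2:ℝ) ≤ t1 * (y.2:ℝ) :=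
        mul_le_mul_of_nonneg_right (min_le_left _ _) y.2.coe_nonneg
    _ ≤ 1 := hy1
  · have e1 := sc_shrink_le B hmono x.2.coe_nonneg y.2.coe_nonneg ht1 hx1 hy1 hu
      (min_le_left _ _) he1
    have e2 := sc_shrink_le B hmono y.2.coe_nonneg x.2.coe_nonneg ht2 hy2 hx2 hu
      (min_le_right _ _) he2
    exact le_antisymm e1 e2

theorem rel_of_zero {x y : A × ℝ≥0} (hx : x.2 = 0) (hy : y.2 = 0) : Rel B x y := by
  refine ⟨1, one_pos, ?_, ?_, ?_⟩ <;> simp [hx, hy, sc_zero]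

theorem le_of_rel {x y : A × ℝ≥0} (h : Rel B x y) : Le B x y := by
  obtain ⟨t, h1, h2, h3, h4⟩ := h
  exact ⟨t, h1, h2, h3, le_of_eq h4⟩

noncomputable def cAdd (B : PointedBarycentricAlgebra A) (x y : A × ℝ≥0) : A × ℝ≥0 :=
  (B.comb ((x.2 / (x.2 + y.2) : ℝ≥0) : ℝ) x.1 y.1, x.2 + y.2)

def cSmul (B : PointedBarycentricAlgebra A) (c : ℝ≥0) (x : A × ℝ≥0) : A × ℝ≥0 :=
  (x.1, c * x.2)

theorem div_add_le_one (u v : ℝ≥0) : u / (u + v) ≤ 1 := by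
  rcases eq_or_ne (u + v) 0 with h | h
  · simp [h]
  · rw [div_le_one (zero_lt_iff.mpr h)]
    exact le_add_right le_rfl

theorem sc_add_rep (x y : A × ℝ≥0) {t : ℝ} (ht0 : 0 ≤ t)
    (hts : t * (((x.2 + y.2 : ℝ≥0)) : ℝ) ≤ 1) :
    sc B (t * (((x.2 + y.2 : ℝ≥0)) : ℝ)) (cAdd B x y).1 =
      B.comb (t * (x.2 : ℝ)) x.1 (sc B ((t * (y.2 : ℝ)) / (1 - t * (x.2 : ℝ))) y.1) := by
  rcases eq_or_ne (x.2 + y.2) 0 with h0 | h0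
  · obtain ⟨hx0, hy0⟩ := add_eq_zero.mp h0
    simp only [cAdd, h0, hx0, hy0]
    norm_num [sc_zero, comb_zero]
  · have hS : (0 : ℝ) < (x.2 : ℝ) + (y.2 : ℝ) := by
      have := NNReal.coe_pos.mpr (zero_lt_iff.mpr h0)
      push_cast at this
      exact this
    have hp : ((x.2 / (x.2 + y.2) : ℝ≥0) : ℝ) = (x.2 : ℝ) / ((x.2 : ℝ) + (y.2 : ℝ)) := by
      push_cast
      rfl
    have hp0 : (0 : ℝ) ≤ (x.2 : ℝ) / ((x.2 : ℝ) + (y.2 : ℝ)) := by positivity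
    have hp1 : (x.2 : ℝ) / ((x.2 : ℝ) + (y.2 : ℝ)) ≤ 1 := by
      rw [div_le_one hS]
      have := y.2.coe_nonneg
      linarith
    have hts' : t * (((x.2 + y.2 : ℝ≥0)) : ℝ) = t * ((x.2 : ℝ) + (y.2 : ℝ)) := by push_cast; rfl
    have ht'0 : 0 ≤ t * ((x.2 : ℝ) + (y.2 : ℝ)) := by positivity
    have ht'1 : t * ((x.2 : ℝ) + (y.2 : ℝ)) ≤ 1 := by rw [← hts']; exact hts
    show sc B _ (B.comb _ x.1 y.1) = _
    rw [hts', hp, sc_comb B hp0 hp1 ht'0 ht'1]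
    have e1 : (x.2 : ℝ) / ((x.2 : ℝ) + (y.2 : ℝ)) * (t * ((x.2 : ℝ) + (y.2 : ℝ)))
        = t * (x.2 : ℝ) := by
      field_simp
    rw [e1]
    have e2 : t * ((x.2 : ℝ) + (y.2 : ℝ)) - t * (x.2 : ℝ) = t * (y.2 : ℝ) := by ring
    rw [e2]

theorem coe_div_add_le_one (u v : ℝ≥0) : ((u / (u + v) : ℝ≥0) : ℝ) ≤ 1 := by
  have := div_add_le_one u v
  exact_mod_cast this

theorem cAdd_comm_rel (x y : A × ℝ≥0) : Rel B (cAdd B x y) (cAdd B y x) := by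
  rcases eq_or_ne (x.2 + y.2) 0 with h0 | h0
  · exact rel_of_zero B (by simpa [cAdd] using h0) (by simpa [cAdd, add_comm] using h0)
  · have heq : cAdd B x y = cAdd B y x := by
      refine Prod.ext ?_ (add_comm _ _)
      show B.comb _ x.1 y.1 = B.comb _ y.1 x.1
      rw [B.comb_sc _ ⟨NNReal.coe_nonneg _, coe_div_add_le_one x.2 y.2⟩]
      congr 1
      have hS : (0:ℝ) < (x.2:ℝ) + (y.2:ℝ) := by
        have := NNReal.coe_pos.mpr (zero_lt_iff.mpr h0)
        push_cast at this
        exact this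
      have h1 : ((x.2 / (x.2 + y.2) : ℝ≥0) : ℝ) = (x.2:ℝ) / ((x.2:ℝ) + (y.2:ℝ)) := by
        push_cast; rfl
      have h2 : ((y.2 / (y.2 + x.2) : ℝ≥0) : ℝ) = (y.2:ℝ) / ((y.2:ℝ) + (x.2:ℝ)) := by
        push_cast; rfl
      rw [h1, h2, add_comm (y.2:ℝ) (x.2:ℝ), eq_div_iff (ne_of_gt hS), sub_mul,
        div_mul_cancel₀ _ (ne_of_gt hS)]
      ring
    rw [heq]
    exact rel_refl B _

theorem cAdd_zero_left (x : A × ℝ≥0) : cAdd B (B.pt, 0) x = x := by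
  refine Prod.ext ?_ (zero_add _)
  show B.comb _ B.pt x.1 = x.1
  rw [zero_div, NNReal.coe_zero, comb_zero]

theorem cAdd_assoc (x y z : A × ℝ≥0) : cAdd B (cAdd B x y) z = cAdd B x (cAdd B y z) := by
  refine Prod.ext ?_ (add_assoc _ _ _)
  show B.comb ((((x.2 + y.2) / (x.2 + y.2 + z.2)) : ℝ≥0) : ℝ)
      (B.comb (((x.2 / (x.2 + y.2)) : ℝ≥0) : ℝ) x.1 y.1) z.1
    = B.comb (((x.2 / (x.2 + (y.2 + z.2))) : ℝ≥0) : ℝ) x.1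
      (B.comb (((y.2 / (y.2 + z.2)) : ℝ≥0) : ℝ) y.1 z.1)
  rcases eq_or_ne z.2 0 with hw | hw
  · rcases eq_or_ne (x.2 + y.2) 0 with hrs | hrs
    · obtain ⟨hr, hs⟩ := add_eq_zero.mp hrs
      simp [hr, hs, hw, comb_zero]
    · rcases eq_or_ne y.2 0 with hs | hs
      · have hr : x.2 ≠ 0 := by
          intro h; exact hrs (by simp [h, hs])
        simp [hs, hw, div_self hr, div_self hrs, B.comb_one]
      · simp [hw, div_self hs, div_self hrs, B.comb_one]
  · rcases eq_or_ne y.2 0 with hs | hs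
    · rcases eq_or_ne x.2 0 with hr | hr
      · simp [hr, hs, comb_zero]
      · simp [hs, div_self hr, B.comb_one, comb_zero]
    · -- main case : y.2 ≠ 0, z.2 ≠ 0
      have hR : (0:ℝ) ≤ x.2 := x.2.coe_nonneg
      have hS : (0:ℝ) < y.2 := by exact_mod_cast zero_lt_iff.mpr hs
      have hW : (0:ℝ) < z.2 := by exact_mod_cast zero_lt_iff.mpr hw
      set R := (x.2:ℝ); set S := (y.2:ℝ); set W := (z.2:ℝ)
      have c1 : ((((x.2 + y.2) / (x.2 + y.2 + z.2)) : ℝ≥0) : ℝ) = (R + S) / (R + S + W) := by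
        push_cast; rfl
      have c2 : (((x.2 / (x.2 + y.2)) : ℝ≥0) : ℝ) = R / (R + S) := by push_cast; rfl
      have c3 : (((x.2 / (x.2 + (y.2 + z.2))) : ℝ≥0) : ℝ) = R / (R + (S + W)) := by
        push_cast; rfl
      have c4 : (((y.2 / (y.2 + z.2)) : ℝ≥0) : ℝ) = S / (S + W) := by push_cast; rfl
      rw [c1, c2, c3, c4]
      have hp0 : (0:ℝ) ≤ R / (R + S) := by positivity
      have hp1 : R / (R + S) < 1 := by rw [div_lt_one (by linarith)]; linarith
      have hq0 : (0:ℝ) ≤ (R + S) / (R + S + W) := by positivity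
      have hq1 : (R + S) / (R + S + W) < 1 := by rw [div_lt_one (by linarith)]; linarith
      rw [B.comb_sa _ _ hp0 hp1 hq0 hq1]
      have e1 : R / (R + S) * ((R + S) / (R + S + W)) = R / (R + (S + W)) := by
        rw [div_mul_div_comm, div_eq_div_iff (by positivity) (by positivity)]
        ring
      rw [e1]
      have hT : (0:ℝ) < R + (S + W) := by linarith
      have hden : (0:ℝ) < 1 - R / (R + (S + W)) := by
        rw [sub_pos, div_lt_one hT]; linarith
      have escal : ((R + S) / (R + S + W) - R / (R + (S + W))) / (1 - R / (R + (S + W)))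
          = S / (S + W) := by
        rw [div_eq_div_iff (ne_of_gt hden) (by positivity)]
        field_simp
        ring
      rw [escal]

theorem cSmul_one (x : A × ℝ≥0) : cSmul B 1 x = x := Prod.ext rfl (one_mul _)

theorem cSmul_mul (c d : ℝ≥0) (x : A × ℝ≥0) :
    cSmul B (c * d) x = cSmul B c (cSmul B d x) := Prod.ext rfl (mul_assoc _ _ _)

theorem cSmul_add (c : ℝ≥0) (hc : c ≠ 0) (x y : A × ℝ≥0) :
    cSmul B c (cAdd B x y) = cAdd B (cSmul B c x) (cSmul B c y) := by
  refine Prod.ext ?_ (mul_add _ _ _)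
  show B.comb _ x.1 y.1 = B.comb _ x.1 y.1
  congr 2
  show x.2 / (x.2 + y.2) = c * x.2 / (c * x.2 + c * y.2)
  rw [← mul_add, mul_div_mul_left _ _ hc]

theorem cAdd_smul (c d : ℝ≥0) (x : A × ℝ≥0) :
    cSmul B (c + d) x = cAdd B (cSmul B c x) (cSmul B d x) := by
  refine Prod.ext ?_ (add_mul _ _ _)
  show x.1 = B.comb _ x.1 x.1
  rw [B.comb_same _ ⟨NNReal.coe_nonneg _, coe_div_add_le_one _ _⟩]

theorem cSmul_congr (c : ℝ≥0) {x y : A × ℝ≥0} (h : Rel B x y) :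
    Rel B (cSmul B c x) (cSmul B c y) := by
  rcases eq_or_ne c 0 with hc | hc
  · exact rel_of_zero B (by simp [cSmul, hc]) (by simp [cSmul, hc])
  · obtain ⟨t, ht, hx1, hy1, he⟩ := h
    have hcr : (0:ℝ) < c := by exact_mod_cast zero_lt_iff.mpr hc
    refine ⟨t / c, by positivity, ?_, ?_, ?_⟩
    · show t / (c:ℝ) * ((c * x.2 : ℝ≥0) : ℝ) ≤ 1
      push_cast
      rw [div_mul_eq_mul_div, mul_comm (c:ℝ) (x.2:ℝ), ← mul_assoc,
        mul_div_assoc, div_self (ne_of_gt hcr), mul_one]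
      exact hx1
    · show t / (c:ℝ) * ((c * y.2 : ℝ≥0) : ℝ) ≤ 1
      push_cast
      rw [div_mul_eq_mul_div, mul_comm (c:ℝ) (y.2:ℝ), ← mul_assoc,
        mul_div_assoc, div_self (ne_of_gt hcr), mul_one]
      exact hy1
    · show sc B (t / (c:ℝ) * ((c * x.2 : ℝ≥0) : ℝ)) x.1
        = sc B (t / (c:ℝ) * ((c * y.2 : ℝ≥0) : ℝ)) y.1
      have e1 : t / (c:ℝ) * ((c * x.2 : ℝ≥0) : ℝ) = t * (x.2:ℝ) := by
        push_cast; field_simp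
      have e2 : t / (c:ℝ) * ((c * y.2 : ℝ≥0) : ℝ) = t * (y.2:ℝ) := by
        push_cast; field_simp
      rw [e1, e2]; exact he

theorem cSmul_le (c : ℝ≥0) {x y : A × ℝ≥0} (h : Le B x y) :
    Le B (cSmul B c x) (cSmul B c y) := by
  rcases eq_or_ne c 0 with hc | hc
  · exact le_of_rel B (rel_of_zero B (by simp [cSmul, hc]) (by simp [cSmul, hc]))
  · obtain ⟨t, ht, hx1, hy1, he⟩ := h
    have hcr : (0:ℝ) < c := by exact_mod_cast zero_lt_iff.mpr hc
    refine ⟨t / c, by positivity, ?_, ?_, ?_⟩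
    · show t / (c:ℝ) * ((c * x.2 : ℝ≥0) : ℝ) ≤ 1
      push_cast
      rw [div_mul_eq_mul_div, mul_comm (c:ℝ) (x.2:ℝ), ← mul_assoc,
        mul_div_assoc, div_self (ne_of_gt hcr), mul_one]
      exact hx1
    · show t / (c:ℝ) * ((c * y.2 : ℝ≥0) : ℝ) ≤ 1
      push_cast
      rw [div_mul_eq_mul_div, mul_comm (c:ℝ) (y.2:ℝ), ← mul_assoc,
        mul_div_assoc, div_self (ne_of_gt hcr), mul_one]
      exact hy1
    · show sc B (t / (c:ℝ) * ((c * x.2 : ℝ≥0) : ℝ)) x.1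
        ≤ sc B (t / (c:ℝ) * ((c * y.2 : ℝ≥0) : ℝ)) y.1
      have e1 : t / (c:ℝ) * ((c * x.2 : ℝ≥0) : ℝ) = t * (x.2:ℝ) := by
        push_cast; field_simp
      have e2 : t / (c:ℝ) * ((c * y.2 : ℝ≥0) : ℝ) = t * (y.2:ℝ) := by
        push_cast; field_simp
      rw [e1, e2]; exact he

theorem cAdd_le_left
    (hmono : ∀ r : ℝ, r ∈ Set.Icc (0 : ℝ) 1 → ∀ a a' b : A, a ≤ a' →
      B.comb r a b ≤ B.comb r a' b)
    (hOC2 : ∀ a b : A, ∀ r : ℝ, 0 < r → r < 1 →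
      B.comb r a B.pt ≤ B.comb r b B.pt → a ≤ b)
    {x y : A × ℝ≥0} (z : A × ℝ≥0) (h : Le B x y) :
    Le B (cAdd B x z) (cAdd B y z) := by
  obtain ⟨t, ht, hx1, hy1, hle⟩ := h
  set R := ((x.2 : ℝ≥0) : ℝ) with hRdef
  set S := ((y.2 : ℝ≥0) : ℝ) with hSdef
  set W := ((z.2 : ℝ≥0) : ℝ) with hWdef
  have hR : 0 ≤ R := x.2.coe_nonneg
  have hS : 0 ≤ S := y.2.coe_nonneg
  have hW : 0 ≤ W := z.2.coe_nonneg
  set D := 2 * (1 + t * R + t * S + t * W) with hDdef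
  have hD : 0 < D := by positivity
  set u := t / D with hudef
  have hu : 0 < u := by positivity
  have htr0 : 0 ≤ t * R := by positivity
  have hts0 : 0 ≤ t * S := by positivity
  have htw0 : 0 ≤ t * W := by positivity
  have hut : u ≤ t := by
    rw [hudef, div_le_iff₀ hD]
    nlinarith [mul_nonneg (le_of_lt ht) (by linarith : (0:ℝ) ≤ D - 1)]
  have hur : u * R ≤ 1 / 2 := by
    rw [hudef, div_mul_eq_mul_div, div_le_iff₀ hD]
    linarith
  have hus : u * S ≤ 1 / 2 := by
    rw [hudef, div_mul_eq_mul_div, div_le_iff₀ hD]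
    linarith
  have huw : u * W ≤ 1 / 2 := by
    rw [hudef, div_mul_eq_mul_div, div_le_iff₀ hD]
    linarith
  have hur0 : 0 ≤ u * R := by positivity
  have hus0 : 0 ≤ u * S := by positivity
  have huw0 : 0 ≤ u * W := by positivity
  have hbx : u * (((x.2 + z.2 : ℝ≥0)) : ℝ) ≤ 1 := by
    push_cast
    rw [mul_add]
    linarith
  have hby : u * (((y.2 + z.2 : ℝ≥0)) : ℝ) ≤ 1 := by
    push_cast
    rw [mul_add]
    linarith
  refine ⟨u, hu, hbx, hby, ?_⟩
  show sc B (u * (((x.2 + z.2 : ℝ≥0)) : ℝ)) (cAdd B x z).1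
    ≤ sc B (u * (((y.2 + z.2 : ℝ≥0)) : ℝ)) (cAdd B y z).1
  rw [sc_add_rep B x z (le_of_lt hu) hbx, sc_add_rep B y z (le_of_lt hu) hby]
  exact mix_mono B hmono hOC2 hur0 (by linarith) hus0 (by linarith) huw0
    (by linarith) (by linarith) z.1
    (sc_shrink_le B hmono hR hS ht hx1 hy1 hu hut hle)

theorem le_congr
    (hmono : ∀ r : ℝ, r ∈ Set.Icc (0 : ℝ) 1 → ∀ a a' b : A, a ≤ a' →
      B.comb r a b ≤ B.comb r a' b)
    {x x' y y' : A × ℝ≥0} (hx : Rel B x x') (hy : Rel B y y') (h : Le B x y) :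
    Le B x' y' :=
  le_trans_raw B hmono (le_of_rel B (rel_symm B hx)) (le_trans_raw B hmono h (le_of_rel B hy))

theorem addCongr
    (hmono : ∀ r : ℝ, r ∈ Set.Icc (0 : ℝ) 1 → ∀ a a' b : A, a ≤ a' →
      B.comb r a b ≤ B.comb r a' b)
    (hOC2 : ∀ a b : A, ∀ r : ℝ, 0 < r → r < 1 →
      B.comb r a B.pt ≤ B.comb r b B.pt → a ≤ b)
    {x x' y y' : A × ℝ≥0} (hx : Rel B x x') (hy : Rel B y y') :
    Rel B (cAdd B x y) (cAdd B x' y') := by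
  have congr_left : ∀ {u u' : A × ℝ≥0} (w : A × ℝ≥0), Rel B u u' →
      Rel B (cAdd B u w) (cAdd B u' w) := by
    intro u u' w h
    exact le_antisymm_raw B hmono (cAdd_le_left B hmono hOC2 w (le_of_rel B h))
      (cAdd_le_left B hmono hOC2 w (le_of_rel B (rel_symm B h)))
  refine rel_trans B (congr_left y hx) ?_
  refine rel_trans B (cAdd_comm_rel B x' y) ?_
  refine rel_trans B (congr_left x' hy) ?_
  exact cAdd_comm_rel B y' x'

def relSetoid (B : PointedBarycentricAlgebra A) : Setoid (A × ℝ≥0) :=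
  ⟨Rel B, ⟨rel_refl B, fun h => rel_symm B h, fun h h' => rel_trans B h h'⟩⟩

noncomputable def coneOf (B : PointedBarycentricAlgebra A)
    (hmono : ∀ r : ℝ, r ∈ Set.Icc (0 : ℝ) 1 → ∀ a a' b : A, a ≤ a' →
      B.comb r a b ≤ B.comb r a' b)
    (hOC2 : ∀ a b : A, ∀ r : ℝ, 0 < r → r < 1 →
      B.comb r a B.pt ≤ B.comb r b B.pt → a ≤ b) : OrderedCone.{u} where
  carrier := Quotient (relSetoid B)
  add := Quotient.lift₂ (fun x y => Quotient.mk (relSetoid B) (cAdd B x y))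
    (fun _ _ _ _ hx hy => Quotient.sound (addCongr B hmono hOC2 hx hy))
  zero := Quotient.mk (relSetoid B) (B.pt, 0)
  smul c := Quotient.lift (fun x => Quotient.mk (relSetoid B) (cSmul B c x))
    (fun _ _ h => Quotient.sound (cSmul_congr B c h))
  le := Quotient.lift₂ (Le B)
    (fun _ _ _ _ hx hy => propext ⟨le_congr B hmono hx hy,
      le_congr B hmono (rel_symm B hx) (rel_symm B hy)⟩)
  le_refl := fun x => Quotient.inductionOn x (fun a => le_refl_raw B a)
  le_trans := fun x y z => Quotient.inductionOn₃ x y z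
    (fun _ _ _ hab hbc => le_trans_raw B hmono hab hbc)
  le_antisymm := fun x y => Quotient.inductionOn₂ x y
    (fun _ _ h1 h2 => Quotient.sound (le_antisymm_raw B hmono h1 h2))
  add_assoc := fun x y z => Quotient.inductionOn₃ x y z
    (fun a b c => congrArg _ (cAdd_assoc B a b c))
  add_comm := fun x y => Quotient.inductionOn₂ x y
    (fun a b => Quotient.sound (cAdd_comm_rel B a b))
  zero_add := fun x => Quotient.inductionOn x
    (fun a => congrArg _ (cAdd_zero_left B a))
  one_smul := fun x => Quotient.inductionOn x
    (fun a => congrArg _ (cSmul_one B a))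
  mul_smul := fun c d x => Quotient.inductionOn x
    (fun a => congrArg _ (cSmul_mul B c d a))
  smul_add := fun c x y => Quotient.inductionOn₂ x y (fun a b => by
    rcases eq_or_ne c 0 with hc | hc
    · subst hc
      exact Quotient.sound (rel_of_zero B (by simp [cSmul]) (by simp [cSmul, cAdd]))
    · exact congrArg _ (cSmul_add B c hc a b))
  add_smul := fun c d x => Quotient.inductionOn x
    (fun a => congrArg _ (cAdd_smul B c d a))
  zero_smul := fun x => Quotient.inductionOn x
    (fun a => Quotient.sound (rel_of_zero B (by simp [cSmul]) rfl))
  add_le_add := fun x y z => Quotient.inductionOn₃ x y z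
    (fun _ _ c h => cAdd_le_left B hmono hOC2 c h)
  smul_le_smul := fun c x y => Quotient.inductionOn₂ x y
    (fun _ _ h => cSmul_le B c h)

end BAux

/-- An ordered pointed barycentric algebra satisfying (OC2) embeds as a lower set into an
ordered cone (by a monotone, order-reflecting, linear map) if and only if it satisfies
property (OC3). -/
theorem embeddable_as_lower_set_iff_oc3 {A : Type u} [PartialOrder A]
    (B : PointedBarycentricAlgebra A)
    (hmono : ∀ r : ℝ, r ∈ Set.Icc (0 : ℝ) 1 → ∀ a a' b : A, a ≤ a' →
      B.comb r a b ≤ B.comb r a' b)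
    (hOC2 : ∀ a b : A, ∀ r : ℝ, 0 < r → r < 1 →
      B.comb r a B.pt ≤ B.comb r b B.pt → a ≤ b) :
    (∃ (C : OrderedCone.{u}) (e : A → C.carrier),
      (∀ a b : A, a ≤ b → C.le (e a) (e b)) ∧
      (∀ a b : A, C.le (e a) (e b) → a ≤ b) ∧
      e B.pt = C.zero ∧
      (∀ r : ℝ, r ∈ Set.Icc (0 : ℝ) 1 → ∀ a b : A,
        e (B.comb r a b) =
          C.add (C.smul (Real.toNNReal r) (e a)) (C.smul (Real.toNNReal (1 - r)) (e b))) ∧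
      (∀ (x : C.carrier) (a : A), C.le x (e a) → ∃ a' : A, e a' = x)) ↔
    (∀ a b : A, ∀ r : ℝ, 0 < r → r < 1 →
      a ≤ B.comb r b B.pt → ∃ a' : A, a = B.comb r a' B.pt) := by
  constructor
  · rintro ⟨C, e, hm, hrefl, hz, hlin, hlow⟩ a b r hr0 hr1 hab
    have smul_zero' : ∀ c, C.smul c C.zero = C.zero := by
      intro c
      have h0 := C.zero_smul C.zero
      calc C.smul c C.zero = C.smul c (C.smul 0 C.zero) := by rw [h0]
        _ = C.smul (c * 0) C.zero := (C.mul_smul c 0 C.zero).symm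
        _ = C.zero := by rw [mul_zero, h0]
    have add_zero' : ∀ x, C.add x C.zero = x := fun x => by
      rw [C.add_comm, C.zero_add]
    set r' := Real.toNNReal r with hr'def
    have hr'pos : 0 < r' := Real.toNNReal_pos.mpr hr0
    have hr'ne : r' ≠ 0 := ne_of_gt hr'pos
    have h2 : e (B.comb r b B.pt) = C.smul r' (e b) := by
      rw [hlin r ⟨le_of_lt hr0, le_of_lt hr1⟩ b B.pt, hz, smul_zero', add_zero']
    have h1 : C.le (e a) (C.smul r' (e b)) := h2 ▸ hm _ _ hab
    have h3 : C.le (C.smul r'⁻¹ (e a)) (e b) := by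
      have := C.smul_le_smul r'⁻¹ _ _ h1
      rwa [← C.mul_smul, inv_mul_cancel₀ hr'ne, C.one_smul] at this
    obtain ⟨a', ha'⟩ := hlow _ b h3
    refine ⟨a', ?_⟩
    have h4 : e (B.comb r a' B.pt) = e a := by
      rw [hlin r ⟨le_of_lt hr0, le_of_lt hr1⟩ a' B.pt, hz, smul_zero', add_zero', ha',
        ← C.mul_smul, mul_inv_cancel₀ hr'ne, C.one_smul]
    exact le_antisymm (hrefl _ _ (by rw [h4]; exact C.le_refl _))
      (hrefl _ _ (by rw [h4]; exact C.le_refl _))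
  · intro hOC3
    refine ⟨BAux.coneOf B hmono hOC2,
      fun a => Quotient.mk (BAux.relSetoid B) (a, 1), ?_, ?_, ?_, ?_, ?_⟩
    · intro a b h
      show BAux.Le B (a, 1) (b, 1)
      refine ⟨1, one_pos, by norm_num, by norm_num, ?_⟩
      simp only [NNReal.coe_one, mul_one, BAux.sc_one]
      exact h
    · intro a b h
      replace h : BAux.Le B (a, 1) (b, 1) := h
      obtain ⟨t, ht, h1, h2, hle⟩ := h
      simp only [NNReal.coe_one, mul_one] at h1 h2 hle
      exact BAux.sc_cancel_le B hOC2 ht h1 hle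
    · apply Quotient.sound
      refine ⟨1, one_pos, by norm_num, by norm_num, ?_⟩
      simp [BAux.sc_one, BAux.sc_zero]
    · intro r hr a b
      apply Quotient.sound
      set r' := Real.toNNReal r with hr'def
      set s' := Real.toNNReal (1 - r) with hs'def
      have hsum : r' + s' = 1 := by
        ext
        rw [hr'def, hs'def]
        push_cast [Real.coe_toNNReal r hr.1, Real.coe_toNNReal (1 - r) (by linarith [hr.2])]
        ring
      have heq : BAux.cAdd B (BAux.cSmul B r' (a, 1)) (BAux.cSmul B s' (b, 1))
          = (B.comb r a b, 1) := by
        refine Prod.ext ?_ ?_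
        · show B.comb _ a b = B.comb r a b
          congr 1
          show ((r' * 1 / (r' * 1 + s' * 1) : ℝ≥0) : ℝ) = r
          rw [mul_one, mul_one, hsum, div_one]
          exact Real.coe_toNNReal r hr.1
        · show r' * 1 + s' * 1 = 1
          rw [mul_one, mul_one, hsum]
      rw [heq]
    · intro x a
      refine Quotient.inductionOn x ?_
      intro p h
      replace h : BAux.Le B p (a, 1) := h
      obtain ⟨t, ht, h1, h2, hle⟩ := h
      simp only [NNReal.coe_one, mul_one] at h2 hle
      rcases eq_or_lt_of_le h2 with h2' | h2'
      · subst h2'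
        refine ⟨BAux.sc B (p.2 : ℝ) p.1, Quotient.sound ?_⟩
        refine ⟨1, one_pos, by norm_num, by simpa using h1, ?_⟩
        simp only [NNReal.coe_one, mul_one, BAux.sc_one, one_mul]
      · obtain ⟨a', ha'⟩ := hOC3 (BAux.sc B (t * (p.2 : ℝ)) p.1) a t ht h2' hle
        refine ⟨a', Quotient.sound ?_⟩
        refine ⟨t, ht, by simpa using h2, h1, ?_⟩
        simp only [NNReal.coe_one, mul_one]
        exact ha'.symm
end

section
/- Let K be an ordered pointed barycentric algebra in which, for each r ∈ (0,1), the map a ↦ r·a is Scott-continuous: if D ⊆ K is directed with least upper bound a in K, then r·a is the least upper bound of { r·x | x ∈ D }. Let C be an ordered cone and u : K → C a monotone, order-reflecting map with u(r·a) = r•u(a) for all r ∈ [0,1] and a ∈ K. Assume that for every y ∈ C there exists r ∈ (0,1) with r•y in the image of u. Then u is Scott-continuous: whenever D ⊆ K is directed with least upper bound a in K, u(a) is the least upper bound of the image u(D) in C. -/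
open scoped NNReal

/-- A homogeneous order embedding of a Kegelspitze-like ordered pointed barycentric algebra
into an ordered cone, such that every element of the cone has a scalar multiple in the image,
is Scott-continuous. -/
theorem embedding_scott_continuous {K : Type*} [PartialOrder K]
    (B : PointedBarycentricAlgebra K)
    (hmono : ∀ r : ℝ, r ∈ Set.Icc (0 : ℝ) 1 → ∀ a a' b : K, a ≤ a' →
      B.comb r a b ≤ B.comb r a' b)
    (hscott : ∀ r : ℝ, 0 < r → r < 1 → ∀ D : Set K, D.Nonempty → DirectedOn (· ≤ ·) D →
      ∀ a : K, IsLUB D a → IsLUB ((fun x => B.comb r x B.pt) '' D) (B.comb r a B.pt))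
    {C : Type*} [AddCommMonoid C] [Module ℝ≥0 C] [PartialOrder C]
    (haddC : ∀ x y z : C, x ≤ y → x + z ≤ y + z)
    (hsmulC : ∀ (r : ℝ≥0) (x y : C), x ≤ y → r • x ≤ r • y)
    (u : K → C) (hu_mono : Monotone u)
    (hu_refl : ∀ a b : K, u a ≤ u b → a ≤ b)
    (hu_hom : ∀ r : ℝ, r ∈ Set.Icc (0 : ℝ) 1 → ∀ a : K,
      u (B.comb r a B.pt) = Real.toNNReal r • u a)
    (hsurj : ∀ y : C, ∃ r : ℝ, 0 < r ∧ r < 1 ∧ ∃ a : K, Real.toNNReal r • y = u a) :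
    ∀ D : Set K, D.Nonempty → DirectedOn (· ≤ ·) D → ∀ a : K, IsLUB D a →
      IsLUB (u '' D) (u a) := by

  intro D hne hdir a hlub
  constructor
  · rintro _ ⟨x, hx, rfl⟩
    exact hu_mono (hlub.1 hx)
  · intro y hy
    obtain ⟨r, hr0, hr1, b, hb⟩ := hsurj y
    have hrI : r ∈ Set.Icc (0:ℝ) 1 := ⟨le_of_lt hr0, le_of_lt hr1⟩
    -- b is an upper bound of the scaled set
    have hub : b ∈ upperBounds ((fun x => B.comb r x B.pt) '' D) := by
      rintro _ ⟨x, hx, rfl⟩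
      apply hu_refl
      rw [hu_hom r hrI, ← hb]
      exact hsmulC _ _ _ (hy ⟨x, hx, rfl⟩)
    have h1 : B.comb r a B.pt ≤ b := (hscott r hr0 hr1 D hne hdir a hlub).2 hub
    have h2 : Real.toNNReal r • u a ≤ Real.toNNReal r • y := by
      rw [← hu_hom r hrI, hb]
      exact hu_mono h1
    have hrne : Real.toNNReal r ≠ 0 := by
      simp [Real.toNNReal_eq_zero]; linarith
    have := hsmulC (Real.toNNReal r)⁻¹ _ _ h2
    rwa [smul_smul, smul_smul, inv_mul_cancel₀ hrne, one_smul, one_smul] at this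
end

section
/- Let Q be a partial order in which every directed subset has a least upper bound (a dcpo), and assume Q is meet continuous: for every x ∈ Q and every directed D ⊆ Q with least upper bound s satisfying x ≤ s, the element x belongs to the Scott closure of (↓x) ∩ (↓D), where ↓S denotes the lower closure of S and the Scott closure of a set is the smallest Scott-closed superset. Let P ⊆ Q be a lower set, regarded as a partial order with the induced order. Then for every U ⊆ P, the set U is Scott-open in P (i.e. U is an upper set in P and U meets every directed subset of P whose least upper bound, computed in P, lies in U) if and only if U = V ∩ P for some Scott-open subset V of Q. -/
/-- A subset of a preorder is Scott-open if it is an upper set and it meets every directed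
subset whose least upper bound lies in it. -/
def ScottOpen {α : Type*} [Preorder α] (U : Set α) : Prop :=
  IsUpperSet U ∧ ∀ D : Set α, D.Nonempty → DirectedOn (· ≤ ·) D →
    ∀ a : α, IsLUB D a → a ∈ U → (D ∩ U).Nonempty

/-- A subset of a preorder is Scott-closed if it is a lower set containing the least upper
bound of each of its directed subsets that possesses one. -/
def ScottClosed {α : Type*} [Preorder α] (S : Set α) : Prop :=
  IsLowerSet S ∧ ∀ D : Set α, D ⊆ S → D.Nonempty → DirectedOn (· ≤ ·) D →
    ∀ a : α, IsLUB D a → a ∈ S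

/-- The Scott closure of a set: the intersection of all Scott-closed supersets. -/
def scottClosure {α : Type*} [Preorder α] (S : Set α) : Set α :=
  ⋂₀ {T : Set α | ScottClosed T ∧ S ⊆ T}

lemma subset_scottClosure {α : Type*} [Preorder α] (S : Set α) : S ⊆ scottClosure S :=
  fun _x hx _T hT => hT.2 hx

lemma scottClosure_min {α : Type*} [Preorder α] {S T : Set α} (hT : ScottClosed T)
    (h : S ⊆ T) : scottClosure S ⊆ T := fun _x hx => hx T ⟨hT, h⟩

lemma scottClosed_scottClosure {α : Type*} [Preorder α] (S : Set α) :
    ScottClosed (scottClosure S) := by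
  constructor
  · intro a b hab hb T hT
    exact hT.1.1 hab (hb T hT)
  · intro D hD hne hdir a ha T hT
    exact hT.1.2 D (fun d hd => hD hd T hT) hne hdir a ha

lemma scottClosure_mono {α : Type*} [Preorder α] {S T : Set α} (h : S ⊆ T) :
    scottClosure S ⊆ scottClosure T :=
  scottClosure_min (scottClosed_scottClosure T) (h.trans (subset_scottClosure T))

lemma scottClosed_compl_scottOpen {α : Type*} [Preorder α] {S : Set α}
    (h : ScottClosed S) : ScottOpen Sᶜ := by
  constructor
  · intro a b hab ha hb
    exact ha (h.1 hab hb)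
  · intro D hne hdir a ha haU
    by_contra hco
    rw [Set.not_nonempty_iff_eq_empty] at hco
    exact haU (h.2 D (fun d hd => by
      by_contra hdc
      exact Set.eq_empty_iff_forall_notMem.mp hco d ⟨hd, hdc⟩) hne hdir a ha)

lemma mem_scottClosure_lower {Q : Type*} [PartialOrder Q]
    (hmeet : ∀ x : Q, ∀ D : Set Q, D.Nonempty → DirectedOn (· ≤ ·) D →
      ∀ s : Q, IsLUB D s → x ≤ s →
        x ∈ scottClosure ({y : Q | y ≤ x} ∩ {y : Q | ∃ d ∈ D, y ≤ d}))
    (S : Set Q) :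
    ∀ q' q : Q, q' ≤ q → q ∈ scottClosure ({y : Q | y ≤ q} ∩ {y : Q | ∃ d ∈ S, y ≤ d}) →
      q' ∈ scottClosure ({y : Q | y ≤ q'} ∩ {y : Q | ∃ d ∈ S, y ≤ d}) := by
  intro q' q hq'q hq
  set Cl : Set Q := scottClosure ({y : Q | y ≤ q'} ∩ {y : Q | ∃ d ∈ S, y ≤ d}) with hCl
  set R : Set Q := {z : Q | ∀ w : Q, w ≤ q' → w ≤ z → w ∈ Cl} with hR
  have hRclosed : ScottClosed R := by
    constructor
    · intro a b hab hb w hw1 hw2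
      exact hb w hw1 (hw2.trans hab)
    · intro D hD hne hdir s hs w hw1 hw2
      have hw : w ∈ scottClosure ({y : Q | y ≤ w} ∩ {y : Q | ∃ d ∈ D, y ≤ d}) :=
        hmeet w D hne hdir s hs (hw2.trans (le_refl s))
      refine scottClosure_min (scottClosed_scottClosure _) ?_ hw
      rintro v ⟨hv1, d, hd, hv2⟩
      exact hD hd v (le_trans hv1 hw1) hv2
  have hsub : ({y : Q | y ≤ q} ∩ {y : Q | ∃ d ∈ S, y ≤ d}) ⊆ R := by
    rintro z ⟨hz1, d, hd, hz2⟩ w hw1 hw2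
    exact subset_scottClosure _ ⟨hw1, d, hd, hw2.trans hz2⟩
  exact scottClosure_min hRclosed hsub hq q' le_rfl hq'q

lemma mem_scottClosure_meet {Q : Type*} [PartialOrder Q]
    (hmeet : ∀ x : Q, ∀ D : Set Q, D.Nonempty → DirectedOn (· ≤ ·) D →
      ∀ s : Q, IsLUB D s → x ≤ s →
        x ∈ scottClosure ({y : Q | y ≤ x} ∩ {y : Q | ∃ d ∈ D, y ≤ d}))
    (S : Set Q) (x : Q) (hx : x ∈ scottClosure S) :
    x ∈ scottClosure ({y : Q | y ≤ x} ∩ {y : Q | ∃ d ∈ S, y ≤ d}) := by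
  set T : Set Q := {z : Q | z ∈ scottClosure ({y : Q | y ≤ z} ∩ {y : Q | ∃ d ∈ S, y ≤ d})}
    with hT
  have hTclosed : ScottClosed T := by
    constructor
    · intro a b hab hb
      exact mem_scottClosure_lower hmeet S b a hab hb
    · intro D hD hne hdir s hs
      have hsD : s ∈ scottClosure ({y : Q | y ≤ s} ∩ {y : Q | ∃ d ∈ D, y ≤ d}) :=
        hmeet s D hne hdir s hs le_rfl
      refine scottClosure_min (scottClosed_scottClosure _) ?_ hsD
      rintro z ⟨hz1, d, hd, hz2⟩
      have hz : z ∈ T := mem_scottClosure_lower hmeet S z d hz2 (hD hd)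
      refine scottClosure_mono ?_ hz
      exact Set.inter_subset_inter_left _ (fun w hw => le_trans hw hz1)
  have hST : S ⊆ T := fun z hz => subset_scottClosure _ ⟨le_rfl, z, hz, le_rfl⟩
  exact scottClosure_min hTclosed hST hx


/-- In a meet-continuous dcpo `Q`, a lower subset `P` (with the induced order) carries the
subspace Scott topology: a subset of `P` is Scott-open in `P` iff it is the trace on `P` of a
Scott-open subset of `Q`. -/
theorem lower_set_scott_subspace {Q : Type*} [PartialOrder Q]
    (hdcpo : ∀ D : Set Q, D.Nonempty → DirectedOn (· ≤ ·) D → ∃ a : Q, IsLUB D a)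
    (hmeet : ∀ x : Q, ∀ D : Set Q, D.Nonempty → DirectedOn (· ≤ ·) D →
      ∀ s : Q, IsLUB D s → x ≤ s →
        x ∈ scottClosure ({y : Q | y ≤ x} ∩ {y : Q | ∃ d ∈ D, y ≤ d}))
    (P : Set Q) (hP : IsLowerSet P) :
    ∀ U : Set P, ScottOpen U ↔ ∃ V : Set Q, ScottOpen V ∧ U = Subtype.val ⁻¹' V := by
  intro U
  constructor
  · -- hard direction
    intro hU
    set A : Set Q := Subtype.val '' (Uᶜ) with hA
    have hAP : A ⊆ P := by rintro q ⟨p, _, rfl⟩; exact p.2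
    have hAlower : IsLowerSet A := by
      rintro q q' hle ⟨p, hpU, rfl⟩
      have hq'P : q' ∈ P := hP hle p.2
      refine ⟨⟨q', hq'P⟩, ?_, rfl⟩
      intro hmem
      exact hpU (hU.1 (show (⟨q', hq'P⟩ : P) ≤ p from hle) hmem)
    refine ⟨(scottClosure A)ᶜ, scottClosed_compl_scottOpen (scottClosed_scottClosure A), ?_⟩
    ext p
    simp only [Set.mem_preimage, Set.mem_compl_iff]
    constructor
    · intro hpU hpcl
      set x : Q := (p : Q) with hx
      set B : Set Q := {y : Q | y ≤ x} ∩ {y : Q | ∃ d ∈ A, y ≤ d} with hB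
      have hBA : B ⊆ A := by
        rintro z ⟨_, d, hd, hzd⟩
        exact hAlower hzd hd
      have hBclosed : ScottClosed B := by
        constructor
        · rintro a b hab ⟨hb1, d, hd, hb2⟩
          exact ⟨hab.trans hb1, d, hd, hab.trans hb2⟩
        · intro D hD hne hdir s hs
          have hsx : s ≤ x := hs.2 (fun d hd => (hD hd).1)
          have hsP : s ∈ P := hP hsx p.2
          have hDA : D ⊆ A := fun d hd => hBA (hD hd)
          set D' : Set P := Subtype.val ⁻¹' D with hD'
          have hD'ne : D'.Nonempty := by
            obtain ⟨d, hd⟩ := hne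
            exact ⟨⟨d, hAP (hDA hd)⟩, hd⟩
          have hD'dir : DirectedOn (· ≤ ·) D' := by
            rintro a ha b hb
            obtain ⟨c, hc, hac, hbc⟩ := hdir a.val ha b.val hb
            exact ⟨⟨c, hAP (hDA hc)⟩, hc, hac, hbc⟩
          have hlub : IsLUB D' (⟨s, hsP⟩ : P) := by
            constructor
            · intro d hd
              exact Subtype.coe_le_coe.mp (hs.1 hd)
            · intro b hb
              refine Subtype.coe_le_coe.mp ?_
              refine hs.2 (fun d hd => ?_)
              exact hb (show (⟨d, hAP (hDA hd)⟩ : P) ∈ D' from hd)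
          have hsnotU : (⟨s, hsP⟩ : P) ∉ U := by
            intro hsU
            obtain ⟨d, hdD', hdU⟩ := hU.2 D' hD'ne hD'dir _ hlub hsU
            obtain ⟨p', hp'U, hp'⟩ := hDA hdD'
            exact hp'U (by rwa [show p' = d from Subtype.ext hp'] )
          exact ⟨hsx, s, ⟨⟨s, hsP⟩, hsnotU, rfl⟩, le_rfl⟩
      have hxB : x ∈ B := by
        have := mem_scottClosure_meet hmeet A x hpcl
        exact scottClosure_min hBclosed (fun z hz => hz) this
      obtain ⟨p', hp'U, hp'⟩ := hBA hxB
      exact hp'U (by rwa [show p' = p from Subtype.ext hp'])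
    · intro hpcl
      by_contra hpU
      exact hpcl (subset_scottClosure A ⟨p, hpU, rfl⟩)
  · -- easy direction
    rintro ⟨V, hV, rfl⟩
    constructor
    · intro a b hab ha
      exact hV.1 (Subtype.coe_le_coe.mpr hab) ha
    · intro D hne hdir a hlub ha
      set D' : Set Q := Subtype.val '' D with hD'
      have hD'ne : D'.Nonempty := hne.image _
      have hD'dir : DirectedOn (· ≤ ·) D' := by
        rintro x ⟨px, hpx, rfl⟩ y ⟨py, hpy, rfl⟩
        obtain ⟨c, hc, hxc, hyc⟩ := hdir px hpx py hpy
        exact ⟨c.val, ⟨c, hc, rfl⟩, hxc, hyc⟩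
      obtain ⟨s, hs⟩ := hdcpo D' hD'ne hD'dir
      have hsP : s ∈ P := hP (hs.2 (fun q ⟨pq, hpq, hq⟩ => hq ▸ Subtype.coe_le_coe.mpr (hlub.1 hpq))) a.2
      have hsa : s = a.val := by
        refine le_antisymm (hs.2 (fun q ⟨pq, hpq, hq⟩ => hq ▸ Subtype.coe_le_coe.mpr (hlub.1 hpq))) ?_
        have hub : a ≤ (⟨s, hsP⟩ : P) :=
          hlub.2 (fun d hd => Subtype.coe_le_coe.mp (hs.1 ⟨d, hd, rfl⟩))
        exact Subtype.coe_le_coe.mpr hub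
      obtain ⟨q, ⟨pq, hpq, rfl⟩, hqV⟩ := hV.2 D' hD'ne hD'dir a.val (hsa ▸ hs) ha
      exact ⟨pq, hpq, hqV⟩
end

section
/- Let K be a partial order and, for each real r ∈ [0,1], let op_r : K → K → K be a binary operation that is monotone in each argument and Scott-continuous in each argument separately: if D ⊆ K is directed with least upper bound a, then op_r a b is the least upper bound of { op_r x b | x ∈ D }, and symmetrically in the second argument. Call a subset X ⊆ K convex if op_r a b ∈ X for all a, b ∈ X and all r ∈ [0,1]. Then for every convex X ⊆ K, the Scott closure of X — the intersection of all Scott-closed supersets of X, which is itself Scott-closed — is convex. -/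
-- auxiliary: preimage of a Scott-closed set under a monotone, Scott-continuous map
lemma scottClosed_preimage {K : Type*} [PartialOrder K] (f : K → K)
    (hmono : ∀ a a' : K, a ≤ a' → f a ≤ f a')
    (hcont : ∀ D : Set K, D.Nonempty → DirectedOn (· ≤ ·) D → ∀ a : K, IsLUB D a →
      IsLUB (f '' D) (f a))
    {C : Set K} (hC : ScottClosed C) : ScottClosed (f ⁻¹' C) := by
  constructor
  · intro a a' h ha
    exact hC.1 (hmono a' a h) ha
  · intro D hD hne hdir a hlub
    have hne' : (f '' D).Nonempty := hne.image f
    have hdir' : DirectedOn (· ≤ ·) (f '' D) := by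
      rintro _ ⟨x, hx, rfl⟩ _ ⟨y, hy, rfl⟩
      obtain ⟨z, hz, hxz, hyz⟩ := hdir x hx y hy
      exact ⟨f z, ⟨z, hz, rfl⟩, hmono _ _ hxz, hmono _ _ hyz⟩
    have hsub : f '' D ⊆ C := by rintro _ ⟨x, hx, rfl⟩; exact hD hx
    exact hC.2 (f '' D) hsub hne' hdir' (f a) (hcont D hne hdir a hlub)

/-- For a family of binary operations on a partial order that are monotone and
Scott-continuous in each argument separately, the Scott closure of a convex set is
Scott-closed and convex. -/
theorem scott_closure_convex {K : Type*} [PartialOrder K] (op : ℝ → K → K → K)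
    (hmono₁ : ∀ r : ℝ, r ∈ Set.Icc (0 : ℝ) 1 → ∀ a a' b : K, a ≤ a' → op r a b ≤ op r a' b)
    (hmono₂ : ∀ r : ℝ, r ∈ Set.Icc (0 : ℝ) 1 → ∀ a b b' : K, b ≤ b' → op r a b ≤ op r a b')
    (hscott₁ : ∀ r : ℝ, r ∈ Set.Icc (0 : ℝ) 1 → ∀ b : K, ∀ D : Set K, D.Nonempty →
      DirectedOn (· ≤ ·) D → ∀ a : K, IsLUB D a →
        IsLUB ((fun x => op r x b) '' D) (op r a b))
    (hscott₂ : ∀ r : ℝ, r ∈ Set.Icc (0 : ℝ) 1 → ∀ a : K, ∀ D : Set K, D.Nonempty →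
      DirectedOn (· ≤ ·) D → ∀ b : K, IsLUB D b →
        IsLUB ((fun y => op r a y) '' D) (op r a b))
    (X : Set K)
    (hX : ∀ a ∈ X, ∀ b ∈ X, ∀ r : ℝ, r ∈ Set.Icc (0 : ℝ) 1 → op r a b ∈ X) :
    ScottClosed (scottClosure X) ∧
    ∀ a ∈ scottClosure X, ∀ b ∈ scottClosure X, ∀ r : ℝ, r ∈ Set.Icc (0 : ℝ) 1 →
      op r a b ∈ scottClosure X := by
  refine ⟨scottClosed_scottClosure X, ?_⟩
  have hcl := scottClosed_scottClosure X
  -- step 1: for b ∈ X, op r a b ∈ closure for all a ∈ closure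
  have step1 : ∀ r ∈ Set.Icc (0:ℝ) 1, ∀ b ∈ X, ∀ a ∈ scottClosure X,
      op r a b ∈ scottClosure X := by
    intro r hr b hb
    have : scottClosure X ⊆ (fun a => op r a b) ⁻¹' (scottClosure X) := by
      apply scottClosure_min
      · exact scottClosed_preimage _ (fun a a' h => hmono₁ r hr a a' b h)
          (fun D hne hdir a hlub => hscott₁ r hr b D hne hdir a hlub) hcl
      · intro a ha
        exact subset_scottClosure X (hX a ha b hb r hr)
    exact fun a ha => this ha
  intro a ha b hb r hr
  have : scottClosure X ⊆ (fun y => op r a y) ⁻¹' (scottClosure X) := by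
    apply scottClosure_min
    · exact scottClosed_preimage _ (fun y y' h => hmono₂ r hr a y y' h)
        (fun D hne hdir y hlub => hscott₂ r hr a D hne hdir y hlub) hcl
    · intro y hy
      exact step1 r hr y hy a ha
  exact this hb
end

section
/- In ℝ × ℝ with the coordinatewise order, let 𝕊 := { (a, b) | 0 ≤ a ∧ 0 ≤ b ∧ a + b ≤ 1 }. Fix a real r with 0 < r < 1 and let X' := { (t·(1−s), s) | s ∈ [0,1], t ∈ [r, 1] }. Then: (i) X' ⊆ 𝕊; (ii) { q ∈ 𝕊 | (r, 0) ≤ q } ⊆ X'; and (iii) there is no nonempty X ⊆ 𝕊 such that X' = { q ∈ 𝕊 | ∃ x ∈ X, (r·x₁, r·x₂) ≤ q }. -/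
/-- The subprobability simplex over a two-element set, ordered coordinatewise. -/
def subprobSimplex : Set (ℝ × ℝ) := {p | 0 ≤ p.1 ∧ 0 ≤ p.2 ∧ p.1 + p.2 ≤ 1}

/-- The saturated convex closure of `{(0,1), (r,0)}` in the simplex. -/
def upperWitness (r : ℝ) : Set (ℝ × ℝ) :=
  {p | ∃ s ∈ Set.Icc (0 : ℝ) 1, ∃ t ∈ Set.Icc r 1, p = (t * (1 - s), s)}

/-- The upper power Kegelspitze of the subprobability simplex on two points fails (OC3):
the set `upperWitness r` is contained in the simplex, contains the upper set of `(r,0)`,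
but is not the upper closure in the simplex of `r` times any nonempty subset of the
simplex. -/
theorem upper_power_kegelspitze_not_oc3 (r : ℝ) (hr0 : 0 < r) (hr1 : r < 1) :
    upperWitness r ⊆ subprobSimplex ∧
    {q ∈ subprobSimplex | (r, 0) ≤ q} ⊆ upperWitness r ∧
    ¬ ∃ X : Set (ℝ × ℝ), X ⊆ subprobSimplex ∧ X.Nonempty ∧
        upperWitness r = {q ∈ subprobSimplex | ∃ x ∈ X, (r * x.1, r * x.2) ≤ q} := by
  refine ⟨?_, ?_, ?_⟩
  · rintro p ⟨s, ⟨hs0, hs1⟩, t, ⟨htr, ht1⟩, rfl⟩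
    have ht0 : 0 ≤ t := le_trans hr0.le htr
    exact ⟨mul_nonneg ht0 (by linarith), hs0, by simp only; nlinarith⟩
  · rintro ⟨a, b⟩ ⟨⟨ha, hb, hab⟩, hle⟩
    have hra : r ≤ a := hle.1
    have hb1 : b < 1 := by nlinarith
    refine ⟨b, ⟨hb, by linarith⟩, a / (1 - b), ⟨?_, ?_⟩, ?_⟩
    · rw [le_div_iff₀ (by linarith)]; nlinarith
    · rw [div_le_one (by linarith)]; linarith
    · have : a / (1 - b) * (1 - b) = a := div_mul_cancel₀ a (by linarith)
      simp [this]
  · rintro ⟨X, hXS, ⟨x, hxX⟩, hEq⟩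
    have h01 : ((0:ℝ), (1:ℝ)) ∈ upperWitness r :=
      ⟨1, ⟨zero_le_one, le_refl 1⟩, r, ⟨le_refl r, hr1.le⟩, by norm_num⟩
    rw [hEq] at h01
    obtain ⟨-, y, hyX, hy1, hy2⟩ := h01
    obtain ⟨hya, hyb, hyab⟩ := hXS hyX
    simp only [Prod.fst, Prod.snd] at hy1 hy2
    have hy10 : y.1 = 0 := by nlinarith
    have hyb1 : y.2 ≤ 1 := by linarith
    have hq : ((0:ℝ), r * y.2) ∈ upperWitness r := by
      rw [hEq]
      refine ⟨⟨le_refl 0, by positivity, by simp only; nlinarith⟩, y, hyX, ?_, le_refl _⟩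
      rw [hy10]; simp
    obtain ⟨s, ⟨hs0, hs1⟩, t, ⟨htr, ht1⟩, heq⟩ := hq
    have h1 : (0:ℝ) = t * (1 - s) := congrArg Prod.fst heq
    have h2 : r * y.2 = s := congrArg Prod.snd heq
    have hs : s < 1 := by nlinarith
    nlinarith [mul_pos (lt_of_lt_of_le hr0 htr) (by linarith : (0:ℝ) < 1 - s)]
end
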